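/- arXiv:math/0702265 — 2 statements merged into one kernel-verified Lean document; each statement's English description precedes it below -/
import Mathlib

section
/- Let w be a non-split even closed walk on the graph G(f). Then t_w = M · z_w, where t_w is the polar syzygy obtained by taking T-derivatives of the binomial p_w and evaluating at the edges, z_w is the differential syzygy of w, and M is the product of the variables corresponding to the repeated vertices of the closed walk obtained from w by removing its loops (M = 1 if there are no such vertex repetitions). In particular: t_w = z_w if w is an even cycle, a path-degenerate looped bow tie, or a monedge bow tie with both cycles loops; t_w = x_i z_w if w is a non-looped path-degenerate bow tie with common vertex x_i. -/
namespace Polar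

variable {V : Type*}

/-- `vtx` is (the vertex sequence of) a closed walk of length `t` in the graph with loops
whose edge set is `E`; the `j`-th edge of the walk is `s(vtx j, vtx (j+1))`. -/
def IsClosedWalk (E : Set (Sym2 V)) {t : ℕ} (vtx : ZMod t → V) : Prop :=
  ∀ j : ZMod t, s(vtx j, vtx (j + 1)) ∈ E

/-- The set of edges of a closed walk (its support). -/
def walkEdges {t : ℕ} (vtx : ZMod t → V) : Set (Sym2 V) :=
  {e | ∃ j : ZMod t, e = s(vtx j, vtx (j + 1))}

/-- The multiplicity with which an edge is traversed by a closed walk. -/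
noncomputable def edgeMult {t : ℕ} (vtx : ZMod t → V) (e : Sym2 V) : ℕ :=
  {j : ZMod t | s(vtx j, vtx (j + 1)) = e}.ncard

/-- The multiset of edges of a closed walk, counted with multiplicity. -/
def edgeMS {t : ℕ} (vtx : ZMod t → V) : Multiset (Sym2 V) :=
  (Multiset.range t).map fun j => s(vtx (j : ZMod t), vtx ((j : ZMod t) + 1))

/-- An even closed walk of length `2r` splits if, after a cyclic rotation, it decomposes at a
repeated vertex into two smaller even closed walks, i.e. some vertex recurs at an even
(nonzero, proper) distance along the walk. -/
def Splits {r : ℕ} (vtx : ZMod (2 * r) → V) : Prop :=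
  ∃ (j : ZMod (2 * r)) (s : ℕ), 0 < s ∧ s < r ∧ vtx j = vtx (j + (2 * s : ℕ))

/-- A non-split even closed walk. -/
def NonSplit {r : ℕ} (vtx : ZMod (2 * r) → V) : Prop := ¬ Splits vtx

/-- A cycle in a graph with loops: a closed walk with no vertex repetition.
Loops are the cycles of length `1`; there is no cycle of length `2`. -/
structure Cyc (V : Type*) (E : Set (Sym2 V)) where
  len : ℕ
  pos : 0 < len
  not_two : len ≠ 2
  vtx : ZMod len → V
  inj : Function.Injective vtx
  mem : ∀ j, s(vtx j, vtx (j + 1)) ∈ E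

namespace Cyc
variable {E : Set (Sym2 V)}

def edges (c : Cyc V E) : Set (Sym2 V) := {e | ∃ j, e = s(c.vtx j, c.vtx (j + 1))}

def vertices (c : Cyc V E) : Set V := Set.range c.vtx

/-- A loop, regarded as a (degenerate odd) cycle. -/
def IsLoop (c : Cyc V E) : Prop := c.len = 1

end Cyc

/-- A cycle arrangement: a connected subgraph consisting of a family of constituent cycles
such that (C1) any two constituent cycles have mutually disjoint edges, (C2) any two
constituent cycles share at most one vertex, and (C3) any vertex belongs to at most two
constituent cycles. -/
structure CycArr (V : Type*) (E : Set (Sym2 V)) where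
  num : ℕ
  npos : 0 < num
  cyc : Fin num → Cyc V E
  edgeDisj : ∀ i j, i ≠ j → (cyc i).edges ∩ (cyc j).edges = ∅
  shareAtMostOne : ∀ i j, i ≠ j → ((cyc i).vertices ∩ (cyc j).vertices).Subsingleton
  atMostTwo : ∀ v i j l, v ∈ (cyc i).vertices → v ∈ (cyc j).vertices →
    v ∈ (cyc l).vertices → i = j ∨ i = l ∨ j = l
  conn : ∀ u v, u ∈ ⋃ i, (cyc i).vertices → v ∈ ⋃ i, (cyc i).vertices →
    Relation.ReflTransGen (fun a b => ∃ i, s(a, b) ∈ (cyc i).edges) u v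

namespace CycArr
variable {E : Set (Sym2 V)}

def edges (A : CycArr V E) : Set (Sym2 V) := ⋃ i, (A.cyc i).edges

def vertices (A : CycArr V E) : Set V := ⋃ i, (A.cyc i).vertices

/-- The arrangement is even when the total number of edges of its constituent cycles is even. -/
def EvenArr (A : CycArr V E) : Prop := Even (∑ i, (A.cyc i).len)

/-- A simple vertex: one belonging to exactly one constituent cycle. -/
def Simple (A : CycArr V E) (v : V) : Prop :=
  v ∈ A.vertices ∧ ∀ i j, v ∈ (A.cyc i).vertices → v ∈ (A.cyc j).vertices → i = j

end CycArr

/-- A (nonempty, vertex-injective) path in a graph with loops. -/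
structure PathIn (V : Type*) (E : Set (Sym2 V)) where
  len : ℕ
  pos : 0 < len
  vtx : Fin (len + 1) → V
  inj : Function.Injective vtx
  mem : ∀ j : Fin len, s(vtx j.castSucc, vtx j.succ) ∈ E

namespace PathIn
variable {E : Set (Sym2 V)}

def vertices (p : PathIn V E) : Set V := Set.range p.vtx

def edges (p : PathIn V E) : Set (Sym2 V) :=
  {e | ∃ j : Fin p.len, e = s(p.vtx j.castSucc, p.vtx j.succ)}

/-- An extremal (first or last) vertex of the path. -/
def Extremal (p : PathIn V E) (v : V) : Prop := v = p.vtx 0 ∨ v = p.vtx (Fin.last p.len)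

end PathIn

/-- A molecule: `r ≥ 2` structural cycle arrangements joined by `r - 1` structural paths,
subject to conditions (M1)–(M6). -/
structure Molecule (V : Type*) (E : Set (Sym2 V)) where
  r : ℕ
  hr : 2 ≤ r
  ca : Fin r → CycArr V E
  path : Fin (r - 1) → PathIn V E
  M1 : ∀ i j, i ≠ j → (ca i).edges ∩ (ca j).edges = ∅
  M2 : ∀ i j, i ≠ j → (path i).vertices ∩ (path j).vertices = ∅
  M3 : ∀ i j, ((ca i).vertices ∩ (path j).vertices).Subsingleton
  M3e : ∀ i j, (ca i).edges ∩ (path j).edges = ∅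
  M4a : ∀ i, ∃ j, ((ca i).vertices ∩ (path j).vertices).Nonempty
  M4b : ∀ j, ∃ i₁ i₂, i₁ ≠ i₂ ∧ ((ca i₁).vertices ∩ (path j).vertices).Nonempty ∧
    ((ca i₂).vertices ∩ (path j).vertices).Nonempty ∧
    ∀ i, ((ca i).vertices ∩ (path j).vertices).Nonempty → i = i₁ ∨ i = i₂
  M5 : ∀ v i j l, v ∈ (ca i).vertices → v ∈ (ca j).vertices → v ∈ (ca l).vertices →
    i = j ∨ i = l ∨ j = l
  M6a : ∀ v i j, i ≠ j → v ∈ (ca i).vertices → v ∈ (ca j).vertices →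
    (ca i).Simple v ∧ (ca j).Simple v
  M6b : ∀ v i j, v ∈ (ca i).vertices → v ∈ (path j).vertices →
    (ca i).Simple v ∧ (path j).Extremal v
  conn : ∀ u v, u ∈ (⋃ i, (ca i).vertices) ∪ ⋃ j, (path j).vertices →
    v ∈ (⋃ i, (ca i).vertices) ∪ ⋃ j, (path j).vertices →
    Relation.ReflTransGen
      (fun a b => (∃ i, s(a, b) ∈ (ca i).edges) ∨ ∃ j, s(a, b) ∈ (path j).edges) u v

namespace Molecule
variable {E : Set (Sym2 V)}

def cycEdges (M : Molecule V E) : Set (Sym2 V) := ⋃ i, (M.ca i).edges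

def pathEdges (M : Molecule V E) : Set (Sym2 V) := ⋃ j, (M.path j).edges

def edges (M : Molecule V E) : Set (Sym2 V) := M.cycEdges ∪ M.pathEdges

def vertices (M : Molecule V E) : Set V :=
  (⋃ i, (M.ca i).vertices) ∪ ⋃ j, (M.path j).vertices

/-- The molecule is even when the total number of edges of its constituent cycles is even. -/
def EvenMol (M : Molecule V E) : Prop := Even (∑ i, ∑ c, ((M.ca i).cyc c).len)

end Molecule

/-- A closed walk realizes (is supported on) a cycle arrangement if it traverses every edge
of the arrangement exactly once and no other edge. -/
def RealizesCA {E : Set (Sym2 V)} (A : CycArr V E) {t : ℕ} (vtx : ZMod t → V) : Prop :=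
  IsClosedWalk E vtx ∧ (∀ e ∈ A.edges, edgeMult vtx e = 1) ∧
    ∀ e, e ∉ A.edges → edgeMult vtx e = 0

/-- A closed walk realizes (is supported on) a molecule if it traverses every
constituent-cycle edge once, every structural-path edge twice, and no other edge. -/
def RealizesMol {E : Set (Sym2 V)} (M : Molecule V E) {t : ℕ} (vtx : ZMod t → V) : Prop :=
  IsClosedWalk E vtx ∧ (∀ e ∈ M.cycEdges, edgeMult vtx e = 1) ∧
    (∀ e ∈ M.pathEdges, edgeMult vtx e = 2) ∧
    ∀ e, e ∉ M.edges → edgeMult vtx e = 0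

/-- Decomposability of an even closed walk: there are squarefree edges `h 0, …, h (t-1)` of the
graph, supported on vertices of the walk, such that adding each of them twice to the edge
sequence one obtains an even closed walk splitting into two smaller even closed walks, neither
containing the original walk, each of whose edge sequences contains all the `h j`. -/
def Decomposable (E : Set (Sym2 V)) {r : ℕ} (vtx : ZMod (2 * r) → V) : Prop :=
  ∃ (t : ℕ) (h : Fin t → Sym2 V), 0 < t ∧
    (∀ j, h j ∈ E) ∧ (∀ j, ¬ (h j).IsDiag) ∧
    (∀ j, ∀ v ∈ h j, v ∈ Set.range vtx) ∧
    ∃ (a b : ℕ) (w₁ : ZMod (2 * a) → V) (w₂ : ZMod (2 * b) → V),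
      0 < a ∧ 0 < b ∧ a < r + t ∧ b < r + t ∧
      IsClosedWalk E w₁ ∧ IsClosedWalk E w₂ ∧
      (Set.range w₁ ∩ Set.range w₂).Nonempty ∧
      edgeMS w₁ + edgeMS w₂ = edgeMS vtx + 2 • (Finset.univ.val.map h) ∧
      (∀ j, h j ∈ edgeMS w₁) ∧ (∀ j, h j ∈ edgeMS w₂) ∧
      ¬ edgeMS vtx ≤ edgeMS w₁ ∧ ¬ edgeMS vtx ≤ edgeMS w₂

/-- A bow tie: two edge-disjoint odd cycles (possibly loops) joined by a path, which may
degenerate to a single vertex (`plen = 0`, the path-degenerate case). -/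
structure BowTie (V : Type*) (E : Set (Sym2 V)) where
  c1 : Cyc V E
  c2 : Cyc V E
  odd1 : Odd c1.len
  odd2 : Odd c2.len
  edisj : c1.edges ∩ c2.edges = ∅
  plen : ℕ
  pvtx : Fin (plen + 1) → V
  pinj : Function.Injective pvtx
  pmem : ∀ j : Fin plen, s(pvtx j.castSucc, pvtx j.succ) ∈ E
  hstart : pvtx 0 ∈ c1.vertices
  hstop : pvtx (Fin.last plen) ∈ c2.vertices
  meet1 : ∀ j, pvtx j ∈ c1.vertices → j = 0
  meet2 : ∀ j, pvtx j ∈ c2.vertices → j = Fin.last plen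
  cmeet : ∀ v, v ∈ c1.vertices → v ∈ c2.vertices → plen = 0 ∧ v = pvtx 0

namespace BowTie
variable {E : Set (Sym2 V)}

def pathEdges (B : BowTie V E) : Set (Sym2 V) :=
  {e | ∃ j : Fin B.plen, e = s(B.pvtx j.castSucc, B.pvtx j.succ)}

def edges (B : BowTie V E) : Set (Sym2 V) := B.c1.edges ∪ B.c2.edges ∪ B.pathEdges

def vertices (B : BowTie V E) : Set V := B.c1.vertices ∪ B.c2.vertices ∪ Set.range B.pvtx

/-- The connecting path degenerates to a single vertex. -/
def PathDegenerate (B : BowTie V E) : Prop := B.plen = 0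

/-- The connecting path is a single edge. -/
def Monedge (B : BowTie V E) : Prop := B.plen = 1

/-- At least one of the two odd cycles is a loop. -/
def Looped (B : BowTie V E) : Prop := B.c1.IsLoop ∨ B.c2.IsLoop

end BowTie

/-- The bow tie is an induced subgraph of the graph with loops `E`: every non-loop edge
of `E` joining two of its vertices belongs to it (when passing to an induced subgraph one is
allowed to delete loops). -/
def InducedBT {E : Set (Sym2 V)} (B : BowTie V E) : Prop :=
  ∀ e ∈ E, ¬ e.IsDiag → (∀ v ∈ e, v ∈ B.vertices) → e ∈ B.edges

end Polar

noncomputable section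

namespace PolarAlg

open MvPolynomial

variable (k : Type*) [Field k]

/-- The exponent vector of the degree-2 monomial attached to an edge (or loop) `e`. -/
def sym2Exp {n : ℕ} (e : Sym2 (Fin n)) : Fin n → ℕ :=
  Sym2.lift ⟨fun a b i => (if a = i then 1 else 0) + (if b = i then 1 else 0),
    fun a b => funext fun i => add_comm _ _⟩ e

/-- The monomial with exponent vector `g`. -/
def mon {n : ℕ} (g : Fin n → ℕ) : MvPolynomial (Fin n) k := ∏ i, X i ^ g i

/-- The degree-2 monomial `f i` attached to the edge `ε i` of the graph of `f`. -/
def fmon {n : ℕ} {ι : Type*} (ε : ι → Sym2 (Fin n)) (i : ι) : MvPolynomial (Fin n) k :=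
  mon k (sym2Exp (ε i))

/-- `(vtx, eidx)` is an (even, of length `2r`) closed walk in the graph `G(f)` whose edges are
indexed by `ι` via `ε` : the `j`-th edge of the walk is the edge `ε (eidx j)`, joining
`vtx j` and `vtx (j+1)`. -/
def IsWalkIn {n r : ℕ} {ι : Type*} (ε : ι → Sym2 (Fin n)) (vtx : ZMod (2 * r) → Fin n)
    (eidx : ZMod (2 * r) → ι) : Prop :=
  ∀ j, ε (eidx j) = s(vtx j, vtx (j + 1))

/-- The exponent vector of the lcm `g` of the (distinct) edge monomials of a walk. -/
def supExp {n r : ℕ} (vtx : ZMod (2 * r) → Fin n) : Fin n → ℕ := fun l =>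
  (Finset.range (2 * r)).sup fun j =>
    sym2Exp (s(vtx (j : ZMod (2 * r)), vtx ((j : ZMod (2 * r)) + 1))) l

/-- The differential syzygy `z_w` attached to an even closed walk `w = (vtx, eidx)`:
its `i`-th coordinate is the sum of the alternating terms `± g/g_j` over the positions `j`
at which the walk traverses the edge `f i`. -/
def zw {n r : ℕ} {ι : Type*} [DecidableEq ι] (ε : ι → Sym2 (Fin n))
    (vtx : ZMod (2 * r) → Fin n) (eidx : ZMod (2 * r) → ι) : ι → MvPolynomial (Fin n) k :=
  fun i => ∑ j ∈ Finset.range (2 * r),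
    if eidx (j : ZMod (2 * r)) = i then
      (-1 : MvPolynomial (Fin n) k) ^ j * mon k fun l => supExp vtx l - sym2Exp (ε i) l
    else 0

/-- The binomial `p_w = T_{w⁺} - T_{w⁻}` attached to an even closed walk. -/
def pw {r : ℕ} {ι : Type*} (eidx : ZMod (2 * r) → ι) : MvPolynomial ι k :=
  (∏ j ∈ (Finset.range (2 * r)).filter (fun j => Even j), X (eidx (j : ZMod (2 * r)))) -
    ∏ j ∈ (Finset.range (2 * r)).filter (fun j => ¬ Even j), X (eidx (j : ZMod (2 * r)))

/-- The differential syzygy module `Z` of `f`, as the set of syzygies of the transposed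
Jacobian module: vectors `a` with `∑ i, a i · df i = 0`, i.e. `∑ i, a i ∂f i/∂x l = 0`
for every `l`. -/
def Zset (n : ℕ) {ι : Type*} [Fintype ι] (ε : ι → Sym2 (Fin n)) :
    Set (ι → MvPolynomial (Fin n) k) :=
  {a | ∀ l : Fin n, ∑ i, a i * pderiv l (fmon k ε i) = 0}

/-- The generators of the polar syzygy module: the `T`-gradients of the polynomial
relations of `f`, evaluated at `f`. -/
def polarSet (n : ℕ) {ι : Type*} [Fintype ι] (ε : ι → Sym2 (Fin n)) :
    Set (ι → MvPolynomial (Fin n) k) :=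
  {v | ∃ F : MvPolynomial ι k, aeval (fmon k ε) F = 0 ∧
    v = fun i => aeval (fmon k ε) (pderiv i F)}

/-- `f` is polarizable: the polar syzygy module `P` equals the differential syzygy module
`Z` (the inclusion `P ⊆ Z` always holds, by the chain rule). -/
def Polarizable (n : ℕ) {ι : Type*} [Fintype ι] (ε : ι → Sym2 (Fin n)) : Prop :=
  Zset k n ε ⊆ ↑(Submodule.span (MvPolynomial (Fin n) k) (polarSet k n ε))

end PolarAlg

noncomputable section

namespace PolarAlg

open MvPolynomial

/-- `v` is a repeated vertex of the closed walk obtained from `(vtx)` by removing its loops: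
it occurs at two positions that are not merely the two endpoints of one loop. -/
def RepNonLoop {n r : ℕ} (vtx : ZMod (2 * r) → Fin n) (v : Fin n) : Prop :=
  ∃ j l : ZMod (2 * r), j ≠ l ∧ vtx j = v ∧ vtx l = v ∧
    ¬ (l = j + 1 ∧ vtx (j + 1) = vtx j) ∧ ¬ (j = l + 1 ∧ vtx (l + 1) = vtx l)

open Classical in
/-- The monomial `M`: product of the variables at the repeated vertices of the walk with its
loops removed. -/
def Mrep (k : Type*) [Field k] {n r : ℕ} (vtx : ZMod (2 * r) → Fin n) :
    MvPolynomial (Fin n) k :=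
  ∏ v ∈ Finset.univ.filter (fun v : Fin n => RepNonLoop vtx v), X v

/-- The polar syzygy `t_w`: the `T`-gradient of the binomial `p_w`, evaluated at the edges. -/
def tw (k : Type*) [Field k] {n r : ℕ} {ι : Type*} (ε : ι → Sym2 (Fin n))
    (eidx : ZMod (2 * r) → ι) : ι → MvPolynomial (Fin n) k :=
  fun i => aeval (fmon k ε) (pderiv i (pw k eidx))

end PolarAlg

section PolarAux

open Finset Polar PolarAlg MvPolynomial

namespace PolarAux

variable {n r : ℕ}

lemma zmod2_cases (x : ZMod 2) : x = 0 ∨ x = 1 := by revert x; decide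

lemma zmod_cast_val {N : ℕ} [NeZero N] (x : ZMod N) : ((x.val : ℕ) : ZMod N) = x :=
  ZMod.natCast_rightInverse x

lemma one_ne_zero_zmod (hr : 1 ≤ r) : (1 : ZMod (2*r)) ≠ 0 := by
  intro h
  have : ((1:ℕ) : ZMod (2*r)) = 0 := by exact_mod_cast h
  have h2 := (ZMod.natCast_eq_zero_iff 1 (2*r)).mp this
  have := Nat.dvd_one.mp h2
  omega

lemma self_ne_add_one (hr : 1 ≤ r) (p : ZMod (2*r)) : p ≠ p + 1 := by
  intro h
  have : (0 : ZMod (2*r)) = 1 := by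
    have := congrArg (fun x => x - p) h
    simpa using this
  exact one_ne_zero_zmod hr this.symm

lemma odd_diff (hr : 1 ≤ r) (vtx : ZMod (2*r) → Fin n) (hns : Polar.NonSplit vtx)
    {a b : ZMod (2*r)} (hab : vtx a = vtx b) (hne : a ≠ b) : (b - a).val % 2 = 1 := by
  haveI : NeZero (2*r) := ⟨by omega⟩
  by_contra h
  have hdlt : (b - a).val < 2*r := ZMod.val_lt _
  have hdne : (b - a).val ≠ 0 := by
    intro h0
    apply hne
    have h1 : b - a = 0 := by rw [← zmod_cast_val (b - a), h0]; simp
    have := sub_eq_zero.mp h1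
    exact this.symm
  obtain ⟨s, hs⟩ : ∃ s, (b - a).val = 2 * s := ⟨(b-a).val / 2, by omega⟩
  apply hns
  refine ⟨a, s, by omega, by omega, ?_⟩
  have h2 : a + ((2 * s : ℕ) : ZMod (2*r)) = b := by
    rw [← hs, zmod_cast_val]; ring
  rw [h2]; exact hab

lemma occ_collapse (hr : 1 ≤ r) (vtx : ZMod (2*r) → Fin n) (hns : Polar.NonSplit vtx)
    {a b c : ZMod (2*r)} (h1 : vtx a = vtx b) (h2 : vtx a = vtx c) :
    a = b ∨ a = c ∨ b = c := by
  haveI : NeZero (2*r) := ⟨by omega⟩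
  by_contra h
  push_neg at h
  obtain ⟨hab, hac, hbc⟩ := h
  have o1 := odd_diff hr vtx hns h1 hab
  have o2 := odd_diff hr vtx hns (h1.symm.trans h2) hbc
  have o3 := odd_diff hr vtx hns h2 hac
  have he : (c - a) = (b - a) + (c - b) := by ring
  have h4 : (c - a).val = ((b - a).val + (c - b).val) % (2 * r) := by
    rw [he, ZMod.val_add]
  have h5 := Nat.mod_mod_of_dvd ((b - a).val + (c - b).val) (⟨r, rfl⟩ : (2:ℕ) ∣ 2*r)
  omega

lemma rep_iff (vtx : ZMod (2*r) → Fin n) (v : Fin n) :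
    PolarAlg.RepNonLoop vtx v ↔
      ∃ a b : ZMod (2*r), vtx a = v ∧ vtx b = v ∧ a ≠ b ∧ b ≠ a + 1 ∧ a ≠ b + 1 := by
  constructor
  · rintro ⟨j, l, hjl, hj, hl, h1, h2⟩
    refine ⟨j, l, hj, hl, hjl, ?_, ?_⟩
    · intro hh; exact h1 ⟨hh, by rw [← hh, hl, hj]⟩
    · intro hh; exact h2 ⟨hh, by rw [← hh, hj, hl]⟩
  · rintro ⟨a, b, ha, hb, hne, h1, h2⟩
    exact ⟨a, b, hne, ha, hb, fun hh => h1 hh.1, fun hh => h2 hh.1⟩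

lemma noRep_of_loop (hr : 1 ≤ r) (vtx : ZMod (2*r) → Fin n) (hns : Polar.NonSplit vtx)
    {u : Fin n} (p : ZMod (2*r)) (hp : vtx p = u) (hp1 : vtx (p+1) = u) :
    ¬ PolarAlg.RepNonLoop vtx u := by
  rw [rep_iff]
  rintro ⟨a, b, ha, hb, hne, h1, h2⟩
  have hpp : p ≠ p + 1 := self_ne_add_one hr p
  have key : ∀ q : ZMod (2*r), vtx q = u → q = p ∨ q = p + 1 := by
    intro q hq
    rcases occ_collapse hr vtx hns (hq.trans hp.symm) (hq.trans hp1.symm) with h|h|h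
    · exact Or.inl h
    · exact Or.inr h
    · exact absurd h hpp
  rcases key a ha with h|h <;> rcases key b hb with h'|h'
  · exact hne (h.trans h'.symm)
  · exact h1 (by rw [h, h'])
  · exact h2 (by rw [h, h'])
  · exact hne (h.trans h'.symm)

lemma zmod2_ne : ∀ (x c : ZMod 2), x ≠ c → x = c + 1 := by decide

lemma zmod2_succ_ne : ∀ c : ZMod 2, c + 1 ≠ c := by decide

lemma sym2Exp_apply (a b v : Fin n) :
    PolarAlg.sym2Exp s(a, b) v = (if a = v then 1 else 0) + (if b = v then 1 else 0) := rfl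

lemma ecnt_le_sup [NeZero (2*r)] (vtx : ZMod (2*r) → Fin n) (j : ZMod (2*r)) (v : Fin n) :
    PolarAlg.sym2Exp s(vtx j, vtx (j+1)) v ≤ PolarAlg.supExp vtx v := by
  have hj : j.val ∈ range (2*r) := mem_range.mpr (ZMod.val_lt j)
  exact le_trans (le_of_eq (by simp only [zmod_cast_val])) (Finset.le_sup (α := ℕ)
    (f := fun j' : ℕ => PolarAlg.sym2Exp (s(vtx (j' : ZMod (2*r)), vtx ((j' : ZMod (2*r)) + 1))) v) hj)

lemma sup_le_of (vtx : ZMod (2*r) → Fin n) (v : Fin n) (c : ℕ)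
    (h : ∀ j : ZMod (2*r), PolarAlg.sym2Exp s(vtx j, vtx (j+1)) v ≤ c) :
    PolarAlg.supExp vtx v ≤ c := by
  exact Finset.sup_le fun j _ => h _

open Classical in
lemma cnt_eq (hr : 1 ≤ r) [NeZero (2*r)] (vtx : ZMod (2*r) → Fin n) (hns : Polar.NonSplit vtx)
    (v : Fin n) :
    (∑ j : ZMod (2*r), if vtx j = v then 1 else 0)
      = (if PolarAlg.RepNonLoop vtx v then 1 else 0) + PolarAlg.supExp vtx v := by
  classical
  have hsumcard : (∑ j : ZMod (2*r), if vtx j = v then 1 else 0)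
      = (univ.filter (fun j : ZMod (2*r) => vtx j = v)).card := by
    rw [Finset.card_filter]
  by_cases hocc : ∃ a, vtx a = v
  · obtain ⟨a, ha⟩ := hocc
    by_cases hocc2 : ∃ b, vtx b = v ∧ b ≠ a
    · obtain ⟨b, hb, hba⟩ := hocc2
      have key : ∀ q : ZMod (2*r), vtx q = v → q = a ∨ q = b := by
        intro q hq
        rcases occ_collapse hr vtx hns (hq.trans ha.symm) (hq.trans hb.symm) with h|h|h
        · exact Or.inl h
        · exact Or.inr h
        · exact absurd h.symm hba
      have hO : (univ.filter (fun j : ZMod (2*r) => vtx j = v)) = {a, b} := by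
        ext q
        simp only [mem_filter, mem_univ, true_and, mem_insert, mem_singleton]
        constructor
        · exact key q
        · rintro (rfl|rfl) <;> assumption
      have hsum : (∑ j : ZMod (2*r), if vtx j = v then 1 else 0) = 2 := by
        rw [hsumcard, hO, Finset.card_insert_of_notMem (by simpa using hba.symm),
          Finset.card_singleton]
      by_cases hadj : b = a + 1 ∨ a = b + 1
      · have hloop : ∃ p : ZMod (2*r), vtx p = v ∧ vtx (p+1) = v := by
          rcases hadj with h|h
          · exact ⟨a, ha, by rw [← h]; exact hb⟩
          · exact ⟨b, hb, by rw [← h]; exact ha⟩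
        obtain ⟨p, hp, hp1⟩ := hloop
        have hrep : ¬ PolarAlg.RepNonLoop vtx v := noRep_of_loop hr vtx hns p hp hp1
        have hsup : PolarAlg.supExp vtx v = 2 := by
          refine le_antisymm (sup_le_of vtx v 2 fun j => ?_) ?_
          · rw [sym2Exp_apply]; split <;> split <;> omega
          · have h2 := ecnt_le_sup vtx p v
            rw [sym2Exp_apply, if_pos hp, if_pos hp1] at h2
            exact h2
        rw [hsum, if_neg hrep, hsup]
      · push_neg at hadj
        have hrep : PolarAlg.RepNonLoop vtx v :=
          (rep_iff vtx v).mpr ⟨a, b, ha, hb, Ne.symm hba, hadj.1, hadj.2⟩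
        have hsup : PolarAlg.supExp vtx v = 1 := by
          refine le_antisymm (sup_le_of vtx v 1 fun j => ?_) ?_
          · rw [sym2Exp_apply]
            by_cases h1 : vtx j = v <;> by_cases h2 : vtx (j+1) = v
            · exfalso
              rcases key j h1 with rfl|rfl <;> rcases key (j+1) h2 with h'|h'
              · exact self_ne_add_one hr j h'.symm
              · exact hadj.1 h'.symm
              · exact hadj.2 h'.symm
              · exact self_ne_add_one hr j h'.symm
            all_goals simp [h1, h2]
          · have h2 := ecnt_le_sup vtx a v
            rw [sym2Exp_apply, if_pos ha] at h2
            omega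
        rw [hsum, if_pos hrep, hsup]
    · push_neg at hocc2
      have hO : (univ.filter (fun j : ZMod (2*r) => vtx j = v)) = {a} := by
        ext q
        simp only [mem_filter, mem_univ, true_and, mem_singleton]
        exact ⟨fun hq => hocc2 q hq, fun hq => by rw [hq]; exact ha⟩
      have hsum : (∑ j : ZMod (2*r), if vtx j = v then 1 else 0) = 1 := by
        rw [hsumcard, hO, Finset.card_singleton]
      have hrep : ¬ PolarAlg.RepNonLoop vtx v := by
        rw [rep_iff]
        rintro ⟨a', b', ha', hb', hne, -, -⟩
        exact hne ((hocc2 a' ha').trans (hocc2 b' hb').symm)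
      have hsup : PolarAlg.supExp vtx v = 1 := by
        refine le_antisymm (sup_le_of vtx v 1 fun j => ?_) ?_
        · rw [sym2Exp_apply]
          by_cases h1 : vtx j = v <;> by_cases h2 : vtx (j+1) = v
          · exact absurd ((hocc2 j h1).trans (hocc2 (j+1) h2).symm) (self_ne_add_one hr j)
          all_goals simp [h1, h2]
        · have h2 := ecnt_le_sup vtx a v
          rw [sym2Exp_apply, if_pos ha] at h2
          omega
      rw [hsum, if_neg hrep, hsup]
  · push_neg at hocc
    have hsum : (∑ j : ZMod (2*r), if vtx j = v then 1 else 0) = 0 := by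
      apply Finset.sum_eq_zero; intro j _; rw [if_neg (hocc j)]
    have hrep : ¬ PolarAlg.RepNonLoop vtx v := by
      rw [rep_iff]; rintro ⟨a', b', ha', -, -⟩; exact hocc a' ha'
    have hsup : PolarAlg.supExp vtx v = 0 := by
      refine Nat.le_zero.mp (sup_le_of vtx v 0 fun j => ?_)
      rw [sym2Exp_apply, if_neg (hocc j), if_neg (hocc (j+1))]
    rw [hsum, if_neg hrep, hsup]

lemma sum_range_zmod {M : Type*} [AddCommMonoid M] {N : ℕ} [NeZero N] (F : ZMod N → M) :
    ∑ j ∈ range N, F ((j : ℕ) : ZMod N) = ∑ j : ZMod N, F j := by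
  apply Finset.sum_nbij' (i := fun j => ((j : ℕ) : ZMod N)) (j := fun x => x.val)
  · intro a _; exact mem_univ _
  · intro a _; exact mem_range.mpr (ZMod.val_lt _)
  · intro a ha; exact ZMod.val_cast_of_lt (mem_range.mp ha)
  · intro a _; exact zmod_cast_val a
  · intro a _; rfl

lemma core_parity (hr : 1 ≤ r) [NeZero (2*r)] (vtx : ZMod (2*r) → Fin n) (v : Fin n) (c : ZMod 2) :
    ∑ j : ZMod (2*r), (if ZMod.castHom (⟨r, rfl⟩ : (2:ℕ) ∣ 2*r) (ZMod 2) j = c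
        then PolarAlg.sym2Exp s(vtx j, vtx (j+1)) v else 0)
      = ∑ j : ZMod (2*r), if vtx j = v then 1 else 0 := by
  set π := ZMod.castHom (⟨r, rfl⟩ : (2:ℕ) ∣ 2*r) (ZMod 2) with hπ
  have hsplit : ∀ j : ZMod (2*r), (if π j = c then PolarAlg.sym2Exp s(vtx j, vtx (j+1)) v else 0) =
      (if π j = c then (if vtx j = v then 1 else 0) else 0) +
      (if π j = c then (if vtx (j+1) = v then 1 else 0) else 0) := by
    intro j; rw [sym2Exp_apply]; split <;> simp
  simp only [hsplit]
  rw [Finset.sum_add_distrib]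
  have h2 : (∑ j : ZMod (2*r), if π j = c then (if vtx (j+1) = v then 1 else 0) else 0)
      = ∑ j : ZMod (2*r), (if π j = c + 1 then (if vtx j = v then 1 else 0) else 0) := by
    apply Fintype.sum_equiv (Equiv.addRight (1 : ZMod (2*r)))
    intro j
    simp only [Equiv.coe_addRight]
    have hπ1 : π (j + 1) = π j + 1 := by rw [map_add, map_one]
    simp only [hπ1]
    refine if_congr ?_ rfl rfl
    exact (add_left_inj 1).symm
  rw [h2, ← Finset.sum_add_distrib]
  apply Finset.sum_congr rfl
  intro j _
  by_cases h : π j = c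
  · have h' : ¬ (π j = c + 1) := by rw [h]; exact fun hh => zmod2_succ_ne c hh.symm
    rw [if_pos h, if_neg h', add_zero]
  · have h' : π j = c + 1 := zmod2_ne _ _ h
    rw [if_neg h, if_pos h', zero_add]

lemma even_iff_pi (N : ℕ) (h2 : (2:ℕ) ∣ N) (j : ℕ) :
    Even j ↔ ZMod.castHom h2 (ZMod 2) ((j : ℕ) : ZMod N) = 0 := by
  rw [map_natCast]
  have h : Even j ↔ 2 ∣ j := ⟨fun ⟨t, ht⟩ => ⟨t, by omega⟩, fun ⟨t, ht⟩ => ⟨t, by omega⟩⟩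
  rw [h]
  exact (ZMod.natCast_eq_zero_iff j 2).symm

open Classical in
lemma parity_sum_even (hr : 1 ≤ r) (vtx : ZMod (2*r) → Fin n) (hns : Polar.NonSplit vtx)
    (v : Fin n) :
    (∑ j ∈ (range (2*r)).filter (fun j => Even j),
        PolarAlg.sym2Exp s(vtx (j : ZMod (2*r)), vtx ((j : ZMod (2*r)) + 1)) v)
      = (if PolarAlg.RepNonLoop vtx v then 1 else 0) + PolarAlg.supExp vtx v := by
  haveI : NeZero (2*r) := ⟨by omega⟩
  classical
  have main := core_parity hr vtx v 0
  rw [cnt_eq hr vtx hns v] at main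
  rw [← main, ← sum_range_zmod (F := fun x : ZMod (2*r) =>
    if ZMod.castHom (⟨r, rfl⟩ : (2:ℕ) ∣ 2*r) (ZMod 2) x = 0
      then PolarAlg.sym2Exp s(vtx x, vtx (x + 1)) v else 0), Finset.sum_filter]
  apply Finset.sum_congr rfl
  intro j _
  exact if_congr (even_iff_pi (2*r) ⟨r, rfl⟩ j) rfl rfl

open Classical in
lemma parity_sum_odd (hr : 1 ≤ r) (vtx : ZMod (2*r) → Fin n) (hns : Polar.NonSplit vtx)
    (v : Fin n) :
    (∑ j ∈ (range (2*r)).filter (fun j => ¬ Even j),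
        PolarAlg.sym2Exp s(vtx (j : ZMod (2*r)), vtx ((j : ZMod (2*r)) + 1)) v)
      = (if PolarAlg.RepNonLoop vtx v then 1 else 0) + PolarAlg.supExp vtx v := by
  haveI : NeZero (2*r) := ⟨by omega⟩
  classical
  have main := core_parity hr vtx v (0 + 1)
  rw [cnt_eq hr vtx hns v] at main
  rw [← main, ← sum_range_zmod (F := fun x : ZMod (2*r) =>
    if ZMod.castHom (⟨r, rfl⟩ : (2:ℕ) ∣ 2*r) (ZMod 2) x = 0 + 1
      then PolarAlg.sym2Exp s(vtx x, vtx (x + 1)) v else 0), Finset.sum_filter]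
  apply Finset.sum_congr rfl
  intro j _
  refine if_congr ?_ rfl rfl
  constructor
  · intro h
    exact zmod2_ne _ 0 (fun h0 => h ((even_iff_pi (2*r) ⟨r, rfl⟩ j).mpr h0))
  · intro h he
    have h0 := (even_iff_pi (2*r) ⟨r, rfl⟩ j).mp he
    rw [h0] at h
    exact zmod2_succ_ne 0 h.symm

lemma mon_mul (k : Type*) [Field k] (g h : Fin n → ℕ) :
    PolarAlg.mon k g * PolarAlg.mon k h = PolarAlg.mon k (g + h) := by
  rw [PolarAlg.mon, PolarAlg.mon, PolarAlg.mon, ← Finset.prod_mul_distrib]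
  apply Finset.prod_congr rfl
  intro i _
  rw [Pi.add_apply, pow_add]

lemma mon_prod (k : Type*) [Field k] {α : Type*} (S : Finset α) (g : α → Fin n → ℕ) :
    ∏ a ∈ S, PolarAlg.mon k (g a) = PolarAlg.mon k (fun l => ∑ a ∈ S, g a l) := by
  simp only [PolarAlg.mon]
  rw [Finset.prod_comm]
  apply Finset.prod_congr rfl
  intro i _
  rw [Finset.prod_pow_eq_pow_sum]

open Classical in
lemma Mrep_eq (k : Type*) [Field k] (vtx : ZMod (2*r) → Fin n) :
    PolarAlg.Mrep k vtx
      = PolarAlg.mon k (fun l => if PolarAlg.RepNonLoop vtx l then 1 else 0) := by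
  rw [PolarAlg.Mrep, PolarAlg.mon, Finset.prod_filter]
  apply Finset.prod_congr rfl
  intro x _
  split <;> simp

lemma pderiv_prod_X (k : Type*) [Field k] {ι : Type*} [DecidableEq ι] {α : Type*}
    [DecidableEq α] (i : ι) (S : Finset α) (u : α → ι) :
    MvPolynomial.pderiv i (∏ j ∈ S, (X (u j) : MvPolynomial ι k)) =
      ∑ j ∈ S.filter (fun j => u j = i), ∏ j' ∈ S.erase j, X (u j') := by
  induction S using Finset.induction_on with
  | empty => simp
  | @insert a S ha ih =>
    rw [Finset.prod_insert ha, pderiv_mul, ih, Finset.filter_insert]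
    have hcong : ∀ j ∈ S.filter (fun j => u j = i),
        (X (u a) : MvPolynomial ι k) * ∏ j' ∈ S.erase j, X (u j')
          = ∏ j' ∈ (insert a S).erase j, X (u j') := by
      intro j hj
      have hja : j ≠ a := by rintro rfl; exact ha (Finset.mem_of_mem_filter _ hj)
      rw [Finset.erase_insert_of_ne (Ne.symm hja), Finset.prod_insert
        (fun hh => ha (Finset.mem_of_mem_erase hh))]
    by_cases hu : u a = i
    · rw [if_pos hu, Finset.sum_insert (fun hh => ha (Finset.mem_of_mem_filter _ hh))]
      have hx : MvPolynomial.pderiv i (X (u a) : MvPolynomial ι k) = 1 := by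
        rw [hu, pderiv_X_self]
      rw [hx, one_mul, Finset.erase_insert ha, Finset.mul_sum]
      rw [Finset.sum_congr rfl hcong]
    · rw [if_neg hu]
      have hx : MvPolynomial.pderiv i (X (u a) : MvPolynomial ι k) = 0 := by
        have hne : i ≠ u a := fun hh => hu hh.symm
        simp [pderiv_X, Pi.single_apply, hne]
      rw [hx, zero_mul, zero_add, Finset.mul_sum]
      rw [Finset.sum_congr rfl hcong]

open Classical in
lemma prod_erase_eq (k : Type*) [Field k] (hr : 1 ≤ r) {m : ℕ} (ε : Fin m → Sym2 (Fin n))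
    (vtx : ZMod (2*r) → Fin n) (eidx : ZMod (2*r) → Fin m)
    (hw : PolarAlg.IsWalkIn ε vtx eidx)
    (p : ℕ → Prop) [DecidablePred p]
    (hp : ∀ v, (∑ j ∈ (range (2*r)).filter p,
        PolarAlg.sym2Exp s(vtx (j : ZMod (2*r)), vtx ((j : ZMod (2*r)) + 1)) v)
      = (if PolarAlg.RepNonLoop vtx v then 1 else 0) + PolarAlg.supExp vtx v)
    (j : ℕ) (hj : j ∈ (range (2*r)).filter p) :
    ∏ j' ∈ ((range (2*r)).filter p).erase j, PolarAlg.fmon k ε (eidx ((j' : ℕ) : ZMod (2*r)))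
      = PolarAlg.Mrep k vtx * PolarAlg.mon k
          (fun l => PolarAlg.supExp vtx l - PolarAlg.sym2Exp (ε (eidx ((j : ℕ) : ZMod (2*r)))) l) := by
  haveI : NeZero (2*r) := ⟨by omega⟩
  have hfm : ∀ j' : ZMod (2*r), PolarAlg.fmon k ε (eidx j')
      = PolarAlg.mon k (PolarAlg.sym2Exp s(vtx j', vtx (j' + 1))) := by
    intro j'; rw [PolarAlg.fmon, hw j']
  rw [Finset.prod_congr rfl (fun j' _ => hfm ((j' : ℕ) : ZMod (2*r))), mon_prod, Mrep_eq, mon_mul]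
  congr 1
  funext v
  have hsum := hp v
  have hin : PolarAlg.sym2Exp s(vtx ((j:ℕ) : ZMod (2*r)), vtx (((j:ℕ) : ZMod (2*r)) + 1)) v
      + ∑ j' ∈ ((range (2*r)).filter p).erase j,
          PolarAlg.sym2Exp s(vtx ((j':ℕ) : ZMod (2*r)), vtx (((j':ℕ) : ZMod (2*r)) + 1)) v
      = ∑ j' ∈ (range (2*r)).filter p,
          PolarAlg.sym2Exp s(vtx ((j':ℕ) : ZMod (2*r)), vtx (((j':ℕ) : ZMod (2*r)) + 1)) v :=
    Finset.add_sum_erase _ (fun j' : ℕ =>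
      PolarAlg.sym2Exp s(vtx ((j':ℕ) : ZMod (2*r)), vtx (((j':ℕ) : ZMod (2*r)) + 1)) v) hj
  have hle : PolarAlg.sym2Exp s(vtx ((j:ℕ) : ZMod (2*r)), vtx (((j:ℕ) : ZMod (2*r)) + 1)) v
      ≤ PolarAlg.supExp vtx v := ecnt_le_sup vtx _ v
  rw [hw ((j : ℕ) : ZMod (2*r))]
  simp only [Pi.add_apply]
  omega

open Classical in
lemma part1 (k : Type*) [Field k] (hr : 1 ≤ r) {m : ℕ} (ε : Fin m → Sym2 (Fin n))
    (vtx : ZMod (2*r) → Fin n) (eidx : ZMod (2*r) → Fin m)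
    (hw : PolarAlg.IsWalkIn ε vtx eidx) (hns : Polar.NonSplit vtx) (i : Fin m) :
    PolarAlg.tw k ε eidx i = PolarAlg.Mrep k vtx * PolarAlg.zw k ε vtx eidx i := by
  classical
  haveI : NeZero (2*r) := ⟨by omega⟩
  set T : MvPolynomial (Fin n) k := PolarAlg.Mrep k vtx * PolarAlg.mon k
    (fun l => PolarAlg.supExp vtx l - PolarAlg.sym2Exp (ε i) l) with hT
  rw [PolarAlg.tw, PolarAlg.pw, map_sub, map_sub,
    pderiv_prod_X k i ((range (2*r)).filter (fun j => Even j)) (fun j => eidx ((j:ℕ) : ZMod (2*r))),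
    pderiv_prod_X k i ((range (2*r)).filter (fun j => ¬ Even j)) (fun j => eidx ((j:ℕ) : ZMod (2*r))),
    map_sum, map_sum]
  simp only [map_prod, aeval_X]
  have hEv : ∀ j ∈ ((range (2*r)).filter (fun j => Even j)).filter
      (fun j => eidx ((j:ℕ) : ZMod (2*r)) = i),
      (∏ j' ∈ ((range (2*r)).filter (fun j => Even j)).erase j,
        PolarAlg.fmon k ε (eidx ((j' : ℕ) : ZMod (2*r)))) = T := by
    intro j hj
    obtain ⟨hj1, hj2⟩ := Finset.mem_filter.mp hj
    rw [prod_erase_eq k hr ε vtx eidx hw _ (parity_sum_even hr vtx hns) j hj1, hj2]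
  have hOd : ∀ j ∈ ((range (2*r)).filter (fun j => ¬ Even j)).filter
      (fun j => eidx ((j:ℕ) : ZMod (2*r)) = i),
      (∏ j' ∈ ((range (2*r)).filter (fun j => ¬ Even j)).erase j,
        PolarAlg.fmon k ε (eidx ((j' : ℕ) : ZMod (2*r)))) = T := by
    intro j hj
    obtain ⟨hj1, hj2⟩ := Finset.mem_filter.mp hj
    rw [prod_erase_eq k hr ε vtx eidx hw _ (parity_sum_odd hr vtx hns) j hj1, hj2]
  rw [Finset.sum_congr rfl hEv, Finset.sum_congr rfl hOd, Finset.filter_filter,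
    Finset.filter_filter, Finset.sum_filter, Finset.sum_filter, ← Finset.sum_sub_distrib,
    PolarAlg.zw, Finset.mul_sum]
  apply Finset.sum_congr rfl
  intro j hj
  by_cases h1 : eidx ((j:ℕ) : ZMod (2*r)) = i <;> by_cases h2 : Even j
  · rw [if_pos h1, if_pos ⟨h2, h1⟩, if_neg (fun hh => hh.1 h2), h2.neg_one_pow, one_mul,
      sub_zero, hT]
  · rw [if_pos h1, if_neg (fun hh => h2 hh.1), if_pos ⟨h2, h1⟩,
      (Nat.not_even_iff_odd.mp h2).neg_one_pow, neg_one_mul, mul_neg, zero_sub, hT]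
  · rw [if_neg h1, if_neg (fun hh => h1 hh.2), if_neg (fun hh => h1 hh.2), mul_zero, sub_zero]
  · rw [if_neg h1, if_neg (fun hh => h1 hh.2), if_neg (fun hh => h1 hh.2), mul_zero, sub_zero]

open Classical in
lemma Mrep_eq_one (k : Type*) [Field k] (vtx : ZMod (2*r) → Fin n)
    (h : ∀ v, ¬ PolarAlg.RepNonLoop vtx v) : PolarAlg.Mrep k vtx = 1 := by
  rw [PolarAlg.Mrep, Finset.filter_false_of_mem (fun x _ => h x), Finset.prod_empty]

open Classical in
lemma Mrep_eq_X (k : Type*) [Field k] (vtx : ZMod (2*r) → Fin n) (u : Fin n)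
    (hu : PolarAlg.RepNonLoop vtx u) (h : ∀ v, PolarAlg.RepNonLoop vtx v → v = u) :
    PolarAlg.Mrep k vtx = X u := by
  rw [PolarAlg.Mrep]
  have hfil : Finset.univ.filter (fun v => PolarAlg.RepNonLoop vtx v) = {u} := by
    ext x
    simp only [mem_filter, mem_univ, true_and, mem_singleton]
    exact ⟨h x, fun hx => hx ▸ hu⟩
  rw [hfil, Finset.prod_singleton]

lemma cast_inj_of_lt (hr : 1 ≤ r) {x y : ℕ} (hx : x < 2*r) (hy : y < 2*r)
    (h : ((x:ℕ) : ZMod (2*r)) = ((y:ℕ) : ZMod (2*r))) : x = y := by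
  haveI : NeZero (2*r) := ⟨by omega⟩
  have := congrArg ZMod.val h
  rwa [ZMod.val_cast_of_lt hx, ZMod.val_cast_of_lt hy] at this

lemma walk_parity (vtx : ZMod (2*r) → Fin n) (φ : Fin n → ZMod 2) (a : ZMod (2*r)) (d : ℕ)
    (h : ∀ s : ℕ, s < d → φ (vtx (a + (s:ℕ) + 1)) = φ (vtx (a + (s:ℕ))) + 1) :
    φ (vtx (a + (d:ℕ))) = φ (vtx a) + (d : ZMod 2) := by
  induction d with
  | zero => simp
  | succ s ih =>
    have h1 : φ (vtx (a + (s:ℕ) + 1)) = φ (vtx (a + (s:ℕ))) + 1 := h s (by omega)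
    have h2 := ih (fun t ht => h t (by omega))
    have hc : a + ((s+1 : ℕ) : ZMod (2*r)) = a + (s:ℕ) + 1 := by push_cast; ring
    rw [hc, h1, h2]
    push_cast
    ring

lemma core_odd (hr : 1 ≤ r) (vtx : ZMod (2*r) → Fin n)
    {L : ℕ} [NeZero L] (w : ZMod L → Fin n) (hwinj : Function.Injective w) (i0 : ZMod L)
    (a : ZMod (2*r)) (d : ℕ)
    (hvtx : ∀ s : ℕ, s ≤ d → vtx (a + (s:ℕ)) ≠ w i0)
    (hstart : vtx a ∈ Set.range w)
    (hedge : ∀ p : ZMod (2*r), vtx p ≠ w i0 → vtx (p+1) ≠ w i0 → vtx p ∈ Set.range w →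
       ∃ t : ZMod L, s(vtx p, vtx (p+1)) = s(w t, w (t+1)))
    (hclose : vtx (a + (d:ℕ)) = vtx a) : d % 2 = 0 := by
  classical
  set φ : Fin n → ZMod 2 := fun x => (((Function.invFun w x - i0).val : ℕ) : ZMod 2) with hφ
  have hval : ∀ t : ZMod L, t ≠ i0 → t + 1 ≠ i0 → ((t + 1) - i0).val = (t - i0).val + 1 := by
    intro t h1 h2
    have hq : (t - i0) ≠ 0 := sub_ne_zero.mpr h1
    have hq1 : (t - i0) + 1 ≠ 0 := by
      intro hh
      apply h2
      have h3 : t + 1 - i0 = 0 := by rw [← hh]; ring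
      have h4 := sub_eq_zero.mp h3
      exact h4
    have hshift : (t + 1) - i0 = (t - i0) + 1 := by ring
    have hcast : (t - i0) + 1 = (((t - i0).val + 1 : ℕ) : ZMod L) := by
      rw [Nat.cast_add, Nat.cast_one, zmod_cast_val]
    rcases Nat.lt_or_ge ((t - i0).val + 1) L with hlt|hge
    · rw [hshift, hcast, ZMod.val_cast_of_lt hlt]
    · exfalso
      have hlt' : (t - i0).val < L := ZMod.val_lt _
      have hLeq : (t - i0).val + 1 = L := by omega
      rw [hcast, hLeq, ZMod.natCast_self] at hq1
      exact hq1 rfl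
  have φw : ∀ t : ZMod L, φ (w t) = (((t - i0).val : ℕ) : ZMod 2) := by
    intro t
    simp only [hφ]
    rw [Function.leftInverse_invFun hwinj]
  have hmem : ∀ s : ℕ, s ≤ d → vtx (a + (s:ℕ)) ∈ Set.range w := by
    intro s
    induction s with
    | zero => intro _; simpa using hstart
    | succ t ih =>
      intro hsd
      have h1 := ih (by omega)
      have hc : a + ((t+1 : ℕ) : ZMod (2*r)) = a + (t:ℕ) + 1 := by push_cast; ring
      obtain ⟨tt, htt⟩ := hedge (a + (t:ℕ)) (hvtx t (by omega))
        (by rw [← hc]; exact hvtx (t+1) hsd) h1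
      rw [hc]
      rcases Sym2.eq_iff.mp htt with ⟨-, h2⟩|⟨-, h2⟩
      · exact ⟨tt+1, h2.symm⟩
      · exact ⟨tt, h2.symm⟩
  have hstep : ∀ s : ℕ, s < d → φ (vtx (a + (s:ℕ) + 1)) = φ (vtx (a + (s:ℕ))) + 1 := by
    intro s hs
    have hplus : a + (s:ℕ) + 1 = a + ((s+1:ℕ) : ZMod (2*r)) := by push_cast; ring
    have hne1 : vtx (a + (s:ℕ)) ≠ w i0 := hvtx s (by omega)
    have hne2 : vtx (a + (s:ℕ) + 1) ≠ w i0 := by rw [hplus]; exact hvtx (s+1) (by omega)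
    obtain ⟨t, ht⟩ := hedge (a + (s:ℕ)) hne1 hne2 (hmem s (by omega))
    have h11 : (1 : ZMod 2) + 1 = 0 := rfl
    rcases Sym2.eq_iff.mp ht with ⟨h1, h2⟩|⟨h1, h2⟩
    · have ht0 : t ≠ i0 := fun hh => hne1 (by rw [h1, hh])
      have ht1 : t + 1 ≠ i0 := fun hh => hne2 (by rw [h2, hh])
      rw [h1, h2, φw, φw, hval t ht0 ht1]
      push_cast
      ring
    · have ht0 : t ≠ i0 := fun hh => hne2 (by rw [h2, hh])
      have ht1 : t + 1 ≠ i0 := fun hh => hne1 (by rw [h1, hh])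
      rw [h1, h2, φw, φw, hval t ht0 ht1]
      push_cast
      rw [add_assoc, h11, add_zero]
  have hfin := walk_parity vtx φ a d hstep
  rw [hclose] at hfin
  have hd0 : ((d:ℕ) : ZMod 2) = 0 := left_eq_add.mp hfin
  have := (ZMod.natCast_eq_zero_iff d 2).mp hd0
  omega

lemma avoid_subwalk (hr : 1 ≤ r) (vtx : ZMod (2*r) → Fin n) (hns : Polar.NonSplit vtx)
    {v u : Fin n} (hvu : v ≠ u)
    {a b p : ZMod (2*r)} (ha : vtx a = v) (hb : vtx b = v) (hab : a ≠ b)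
    (hp : vtx p = u) (hp1 : vtx (p+1) = u) :
    ∃ (c : ZMod (2*r)) (d : ℕ), d % 2 = 1 ∧ vtx c = v ∧ vtx (c + (d:ℕ)) = vtx c ∧
      ∀ s : ℕ, s ≤ d → vtx (c + (s:ℕ)) ≠ u := by
  haveI : NeZero (2*r) := ⟨by omega⟩
  have hocc : ∀ q : ZMod (2*r), vtx q = u → q = p ∨ q = p + 1 := by
    intro q hq
    rcases occ_collapse hr vtx hns (hq.trans hp.symm) (hq.trans hp1.symm) with h|h|h
    · exact Or.inl h
    · exact Or.inr h
    · exact absurd h (self_ne_add_one hr p)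
  set d0 := (b - a).val with hd0
  have hodd : d0 % 2 = 1 := odd_diff hr vtx hns (ha.trans hb.symm) hab
  have hd0lt : d0 < 2*r := ZMod.val_lt _
  have hba : b = a + ((d0 : ℕ) : ZMod (2*r)) := by rw [hd0, zmod_cast_val]; ring
  set t := (p - a).val with htdef
  have htlt : t < 2*r := ZMod.val_lt _
  have hpa : p = a + ((t : ℕ) : ZMod (2*r)) := by rw [htdef, zmod_cast_val]; ring
  have htne : t ≠ 0 := by
    intro h0
    have hpa' : p = a := by rw [hpa, h0]; simp
    rw [hpa', ha] at hp
    exact hvu hp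
  have htd0 : t ≠ d0 := by
    intro h0
    have hpb : p = b := by rw [hpa, h0, ← hba]
    rw [hpb, hb] at hp
    exact hvu hp
  rcases Nat.lt_or_ge t d0 with hcase|hcase
  · -- occurrence of u inside (a,b): take the subwalk from b back to a
    refine ⟨b, 2*r - d0, by omega, hb, ?_, ?_⟩
    · have hcl : b + ((2*r - d0 : ℕ) : ZMod (2*r)) = a := by
        rw [hba, add_assoc, ← Nat.cast_add]
        have h2 : d0 + (2*r - d0) = 2*r := by omega
        rw [h2, ZMod.natCast_self, add_zero]
      rw [hcl, ha, hb]
    · intro s hs hu0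
      have hd0ne : d0 ≠ 0 := by omega
      rcases hocc _ hu0 with hh|hh
      · rw [hba, add_assoc, ← Nat.cast_add, hpa] at hh
        have hcast : ((d0 + s : ℕ) : ZMod (2*r)) = ((t : ℕ) : ZMod (2*r)) :=
          add_left_cancel hh
        rcases Nat.lt_or_ge (d0 + s) (2*r) with hlt|hge
        · have := cast_inj_of_lt hr hlt htlt hcast
          omega
        · have heq : d0 + s = 2*r := by omega
          rw [heq, ZMod.natCast_self] at hcast
          have : (0:ℕ) = t := by
            apply cast_inj_of_lt hr (by omega) htlt
            rw [Nat.cast_zero]; exact hcast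
          omega
      · have hp1a : p + 1 = a + (((t+1) : ℕ) : ZMod (2*r)) := by
          rw [hpa]; push_cast; ring
        rw [hba, add_assoc, ← Nat.cast_add, hp1a] at hh
        have hcast : ((d0 + s : ℕ) : ZMod (2*r)) = (((t+1) : ℕ) : ZMod (2*r)) :=
          add_left_cancel hh
        rcases Nat.lt_or_ge (d0 + s) (2*r) with hlt|hge
        · rcases Nat.lt_or_ge (t+1) (2*r) with hlt2|hge2
          · have heq := cast_inj_of_lt hr hlt hlt2 hcast
            -- d0 + s = t + 1, t < d0 → s = 0 and t+1 = d0
            have hs0 : s = 0 := by omega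
            rw [hs0] at hu0
            simp at hu0
            rw [hb] at hu0
            exact hvu hu0
          · have heq2 : t + 1 = 2*r := by omega
            rw [heq2, ZMod.natCast_self] at hcast
            have : d0 + s = 0 := by
              apply cast_inj_of_lt hr hlt (by omega)
              rw [Nat.cast_zero]; exact hcast
            omega
        · have heq : d0 + s = 2*r := by omega
          rw [heq, ZMod.natCast_self] at hcast
          have h0t : (0:ℕ) = t + 1 := by
            rcases Nat.lt_or_ge (t+1) (2*r) with hlt2|hge2
            · apply cast_inj_of_lt hr (by omega) hlt2
              rw [Nat.cast_zero]; exact hcast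
            · omega
          omega
  · -- u lies outside the subwalk from a to b
    refine ⟨a, d0, hodd, ha, ?_, ?_⟩
    · rw [← hba, ha, hb]
    · intro s hs hu0
      rcases hocc _ hu0 with hh|hh
      · rw [hpa] at hh
        have hcast : ((s : ℕ) : ZMod (2*r)) = ((t : ℕ) : ZMod (2*r)) := add_left_cancel hh
        have := cast_inj_of_lt hr (by omega) htlt hcast
        omega
      · have hp1a : p + 1 = a + (((t+1) : ℕ) : ZMod (2*r)) := by
          rw [hpa]; push_cast; ring
        rw [hp1a] at hh
        have hcast : ((s : ℕ) : ZMod (2*r)) = (((t+1) : ℕ) : ZMod (2*r)) := add_left_cancel hh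
        rcases Nat.lt_or_ge (t+1) (2*r) with hlt2|hge2
        · have := cast_inj_of_lt hr (by omega) hlt2 hcast
          omega
        · have heq2 : t + 1 = 2*r := by omega
          rw [heq2, ZMod.natCast_self] at hcast
          have hs0 : s = 0 := by
            apply cast_inj_of_lt hr (by omega) (by omega)
            rw [hcast, Nat.cast_zero]
          rw [hs0] at hu0
          simp at hu0
          rw [ha] at hu0
          exact hvu hu0
  
lemma arc_prop (hr : 1 ≤ r) (vtx : ZMod (2*r) → Fin n) {u : Fin n} {W : Set (Fin n)}
    (hsides : ∀ p : ZMod (2*r), vtx p ≠ u → vtx (p+1) ≠ u → (vtx p ∈ W ↔ vtx (p+1) ∈ W))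
    (c0 : ZMod (2*r)) (δ : ℕ) (havoid : ∀ s : ℕ, 0 < s → s < δ → vtx (c0 + (s:ℕ)) ≠ u)
    (s0 : ℕ) (h00 : 0 < s0) (hs0 : s0 < δ) (hmem : vtx (c0 + (s0:ℕ)) ∈ W) :
    ∀ s : ℕ, 0 < s → s < δ → vtx (c0 + (s:ℕ)) ∈ W := by
  have up : ∀ t : ℕ, s0 + t < δ → vtx (c0 + ((s0 + t : ℕ) : ZMod (2*r))) ∈ W := by
    intro t
    induction t with
    | zero => intro _; simpa using hmem
    | succ tt ih =>
      intro hlt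
      have h1 := ih (by omega)
      have hcast : c0 + ((s0 + (tt+1) : ℕ) : ZMod (2*r)) = c0 + ((s0 + tt : ℕ) : ZMod (2*r)) + 1 := by
        push_cast; ring
      rw [hcast]
      have hne2 : vtx (c0 + ((s0 + tt : ℕ) : ZMod (2*r)) + 1) ≠ u := by
        rw [← hcast]; exact havoid _ (by omega) (by omega)
      exact (hsides _ (havoid _ (by omega) (by omega)) hne2).mp h1
  have down : ∀ t : ℕ, t < s0 → 0 < s0 - t → vtx (c0 + ((s0 - t : ℕ) : ZMod (2*r))) ∈ W := by
    intro t
    induction t with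
    | zero => intro _ _; simpa using hmem
    | succ tt ih =>
      intro hlt hpos
      have h1 := ih (by omega) (by omega)
      have hcast : c0 + ((s0 - tt : ℕ) : ZMod (2*r)) = c0 + ((s0 - (tt+1) : ℕ) : ZMod (2*r)) + 1 := by
        have heq : (s0 - tt : ℕ) = (s0 - (tt+1)) + 1 := by omega
        rw [heq]; push_cast; ring
      rw [hcast] at h1
      have hne1 : vtx (c0 + ((s0 - (tt+1) : ℕ) : ZMod (2*r))) ≠ u := havoid _ (by omega) (by omega)
      have hne2 : vtx (c0 + ((s0 - (tt+1) : ℕ) : ZMod (2*r)) + 1) ≠ u := by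
        rw [← hcast]; exact havoid _ (by omega) (by omega)
      exact (hsides _ hne1 hne2).mpr h1
  intro s hs0' hsδ
  rcases Nat.lt_or_ge s s0 with h|h
  · have hd := down (s0 - s) (by omega) (by omega)
    have heq : s0 - (s0 - s) = s := by omega
    rwa [heq] at hd
  · have hu2 := up (s - s0) (by omega)
    have heq : s0 + (s - s0) = s := by omega
    rwa [heq] at hu2

lemma zmod_small_ne (L : ℕ) (hL : 3 ≤ L) : (1 : ZMod L) ≠ 0 ∧ (2 : ZMod L) ≠ 0 := by
  haveI : NeZero L := ⟨by omega⟩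
  constructor
  · intro h
    have h1 : ((1:ℕ) : ZMod L) = 0 := by exact_mod_cast h
    have := Nat.le_of_dvd (by omega) ((ZMod.natCast_eq_zero_iff 1 L).mp h1)
    omega
  · intro h
    have h1 : ((2:ℕ) : ZMod L) = 0 := by exact_mod_cast h
    have := Nat.le_of_dvd (by omega) ((ZMod.natCast_eq_zero_iff 2 L).mp h1)
    omega

lemma noRep_even_cycle (hr : 1 ≤ r) (vtx : ZMod (2*r) → Fin n) (hns : Polar.NonSplit vtx)
    {L : ℕ} [NeZero L] (hL2 : (2:ℕ) ∣ L) (w : ZMod L → Fin n) (hwinj : Function.Injective w)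
    (hedge : ∀ p : ZMod (2*r), ∃ t : ZMod L, s(vtx p, vtx (p+1)) = s(w t, w (t+1)))
    (v : Fin n) : ¬ PolarAlg.RepNonLoop vtx v := by
  haveI : NeZero (2*r) := ⟨by omega⟩
  classical
  rw [rep_iff]
  rintro ⟨a, b, ha, hb, hab, -, -⟩
  set φ : Fin n → ZMod 2 := fun x => ZMod.castHom hL2 (ZMod 2) (Function.invFun w x) with hφ
  have φw : ∀ t : ZMod L, φ (w t) = ZMod.castHom hL2 (ZMod 2) t := by
    intro t; simp only [hφ]; rw [Function.leftInverse_invFun hwinj]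
  have h11 : (1 : ZMod 2) + 1 = 0 := rfl
  have hstep : ∀ s : ℕ, s < (b - a).val → φ (vtx (a + (s:ℕ) + 1)) = φ (vtx (a + (s:ℕ))) + 1 := by
    intro s _
    obtain ⟨t, ht⟩ := hedge (a + (s:ℕ))
    rcases Sym2.eq_iff.mp ht with ⟨h1, h2⟩|⟨h1, h2⟩
    · rw [h1, h2, φw, φw, map_add, map_one]
    · rw [h1, h2, φw, φw, map_add, map_one, add_assoc, h11, add_zero]
  have hfin := walk_parity vtx φ a (b-a).val hstep
  have hba : a + ((((b-a).val) : ℕ) : ZMod (2*r)) = b := by rw [zmod_cast_val]; ring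
  rw [hba] at hfin
  have hveq : vtx b = vtx a := hb.trans ha.symm
  rw [hveq] at hfin
  have hd0 : ((((b-a).val) : ℕ) : ZMod 2) = 0 := left_eq_add.mp hfin
  have hdvd := (ZMod.natCast_eq_zero_iff _ 2).mp hd0
  have hodd := odd_diff hr vtx hns (ha.trans hb.symm) hab
  omega

lemma noRep_looped (hr : 1 ≤ r) (vtx : ZMod (2*r) → Fin n) (hns : Polar.NonSplit vtx)
    {L : ℕ} [NeZero L] (w : ZMod L → Fin n) (hwinj : Function.Injective w)
    {u : Fin n} (hu : u ∈ Set.range w)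
    (hedge : ∀ p : ZMod (2*r), s(vtx p, vtx (p+1)) = s(u, u) ∨
      ∃ t : ZMod L, s(vtx p, vtx (p+1)) = s(w t, w (t+1)))
    {p0 : ZMod (2*r)} (hp0 : vtx p0 = u) (hp01 : vtx (p0+1) = u)
    (v : Fin n) : ¬ PolarAlg.RepNonLoop vtx v := by
  haveI : NeZero (2*r) := ⟨by omega⟩
  by_cases hvu : v = u
  · rw [hvu]; exact noRep_of_loop hr vtx hns p0 hp0 hp01
  intro hrep
  rw [rep_iff] at hrep
  obtain ⟨a, b, ha, hb, hab, -, -⟩ := hrep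
  obtain ⟨c, d, hodd, hc, hcd, havoid⟩ := avoid_subwalk hr vtx hns hvu ha hb hab hp0 hp01
  obtain ⟨i0, hi0⟩ := hu
  have hcne : vtx c ≠ u := by
    have h0 := havoid 0 (by omega)
    simpa using h0
  have hedge' : ∀ q : ZMod (2*r), vtx q ≠ w i0 → vtx (q+1) ≠ w i0 → vtx q ∈ Set.range w →
      ∃ t : ZMod L, s(vtx q, vtx (q+1)) = s(w t, w (t+1)) := by
    intro q hq _ _
    rcases hedge q with h|h
    · exfalso
      rcases Sym2.eq_iff.mp h with ⟨h1,-⟩|⟨h1,-⟩ <;> exact hq (by rw [h1, hi0])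
    · exact h
  have hstart : vtx c ∈ Set.range w := by
    rcases hedge c with h|h
    · exfalso
      rcases Sym2.eq_iff.mp h with ⟨h1,-⟩|⟨h1,-⟩ <;> exact hcne h1
    · obtain ⟨t, ht⟩ := h
      rcases Sym2.eq_iff.mp ht with ⟨h1,-⟩|⟨h1,-⟩
      · exact ⟨t, h1.symm⟩
      · exact ⟨t+1, h1.symm⟩
  have hvtx : ∀ s : ℕ, s ≤ d → vtx (c + (s:ℕ)) ≠ w i0 := by
    intro s hs
    rw [hi0]
    exact havoid s hs
  have heven := core_odd hr vtx w hwinj i0 c d hvtx hstart hedge' hcd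
  omega

lemma rep_center (hr : 1 ≤ r) (vtx : ZMod (2*r) → Fin n) (hns : Polar.NonSplit vtx)
    {LC LD : ℕ} (hLC : 3 ≤ LC) (hLD : 3 ≤ LD)
    (wC : ZMod LC → Fin n) (hCinj : Function.Injective wC)
    (wD : ZMod LD → Fin n) (hDinj : Function.Injective wD)
    {u : Fin n} (iC : ZMod LC) (iD : ZMod LD) (hiC : wC iC = u) (hiD : wD iD = u)
    (hedgeCD : ∀ p : ZMod (2*r), (∃ t, s(vtx p, vtx (p+1)) = s(wC t, wC (t+1))) ∨
      (∃ t, s(vtx p, vtx (p+1)) = s(wD t, wD (t+1))))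
    (hdisj : ∀ (t : ZMod LC) (t' : ZMod LD), s(wC t, wC (t+1)) ≠ s(wD t', wD (t'+1)))
    (hcovC : ∀ t : ZMod LC, ∃ q : ZMod (2*r), s(vtx q, vtx (q+1)) = s(wC t, wC (t+1)))
    (hcovD : ∀ t : ZMod LD, ∃ q : ZMod (2*r), s(vtx q, vtx (q+1)) = s(wD t, wD (t+1))) :
    PolarAlg.RepNonLoop vtx u := by
  haveI : NeZero (2*r) := ⟨by omega⟩
  have hC1 := (zmod_small_ne LC hLC).1
  have hC2 := (zmod_small_ne LC hLC).2
  have hD1 := (zmod_small_ne LD hLD).1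
  have hD2 := (zmod_small_ne LD hLD).2
  have hCne : ∀ t : ZMod LC, t ≠ t + 1 := by
    intro t h; exact hC1 (left_eq_add.mp h)
  have hDne : ∀ t : ZMod LD, t ≠ t + 1 := by
    intro t h; exact hD1 (left_eq_add.mp h)
  have hnodiag : ∀ q : ZMod (2*r), vtx q ≠ vtx (q+1) := by
    intro q heq
    rcases hedgeCD q with ⟨t, ht⟩|⟨t, ht⟩
    · rcases Sym2.eq_iff.mp ht with ⟨h1,h2⟩|⟨h1,h2⟩
      · exact hCne t (hCinj (by rw [← h1, ← h2, heq]))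
      · exact hCne t (hCinj (by rw [← h2, ← h1, heq]))
    · rcases Sym2.eq_iff.mp ht with ⟨h1,h2⟩|⟨h1,h2⟩
      · exact hDne t (hDinj (by rw [← h1, ← h2, heq]))
      · exact hDne t (hDinj (by rw [← h2, ← h1, heq]))
  -- the three distinct edges at u
  set x1 := wC (iC - 1) with hx1
  set x2 := wC (iC + 1) with hx2
  set x3 := wD (iD - 1) with hx3
  have hf1C : s(x1, u) = s(wC (iC - 1), wC ((iC - 1) + 1)) := by
    rw [sub_add_cancel, hiC]
  have hf2C : s(x2, u) = s(wC iC, wC (iC + 1)) := by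
    rw [hiC, Sym2.eq_swap]
  have hf3D : s(x3, u) = s(wD (iD - 1), wD ((iD - 1) + 1)) := by
    rw [sub_add_cancel, hiD]
  have hne12 : s(x1, u) ≠ s(x2, u) := by
    rw [hx1, hx2, ← hiC]
    intro h
    rcases Sym2.eq_iff.mp h with ⟨e1, -⟩|⟨e1, -⟩
    · have he := hCinj e1
      exact hC2 (by linear_combination -he)
    · have he := hCinj e1
      exact hC1 (by linear_combination -he)
  have hne13 : s(x1, u) ≠ s(x3, u) := by
    rw [hf1C, hf3D]; exact hdisj _ _
  have hne23 : s(x2, u) ≠ s(x3, u) := by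
    rw [hf2C, hf3D]; exact hdisj _ _
  -- find slot positions
  have slot : ∀ e : Sym2 (Fin n), u ∈ e → (∃ q : ZMod (2*r), s(vtx q, vtx (q+1)) = e) →
      ∃ pp : ZMod (2*r), vtx pp = u ∧
        (s(vtx (pp - 1), vtx pp) = e ∨ s(vtx pp, vtx (pp+1)) = e) := by
    intro e hue ⟨q, hq⟩
    have := hq ▸ hue
    rcases Sym2.mem_iff.mp this with h|h
    · exact ⟨q, h.symm, Or.inr hq⟩
    · exact ⟨q + 1, h.symm, Or.inl (by rw [add_sub_cancel_right]; exact hq)⟩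
  obtain ⟨p1, hp1u, hp1⟩ := slot s(x1, u) (Sym2.mem_mk_right _ _)
    (by obtain ⟨q, hq⟩ := hcovC (iC - 1); exact ⟨q, by rw [hf1C]; exact hq⟩)
  obtain ⟨p2, hp2u, hp2⟩ := slot s(x2, u) (Sym2.mem_mk_right _ _)
    (by obtain ⟨q, hq⟩ := hcovC iC; exact ⟨q, by rw [hf2C]; exact hq⟩)
  obtain ⟨p3, hp3u, hp3⟩ := slot s(x3, u) (Sym2.mem_mk_right _ _)
    (by obtain ⟨q, hq⟩ := hcovD (iD - 1); exact ⟨q, by rw [hf3D]; exact hq⟩)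
  -- there must be two distinct occurrence positions
  have htwo : ∃ pa pb : ZMod (2*r), vtx pa = u ∧ vtx pb = u ∧ pa ≠ pb := by
    by_cases h12 : p1 = p2
    · by_cases h13 : p1 = p3
      · exfalso
        rw [← h12] at hp2
        rw [← h13] at hp3
        rcases hp1 with h1|h1 <;> rcases hp2 with h2|h2 <;> rcases hp3 with h3|h3 <;>
          first
            | exact hne12 (h1.symm.trans h2)
            | exact hne13 (h1.symm.trans h3)
            | exact hne23 (h2.symm.trans h3)
      · exact ⟨p1, p3, hp1u, hp3u, h13⟩
    · exact ⟨p1, p2, hp1u, hp2u, h12⟩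
  obtain ⟨pa, pb, hpa, hpb, hpab⟩ := htwo
  rw [rep_iff]
  refine ⟨pa, pb, hpa, hpb, hpab, ?_, ?_⟩
  · intro h
    apply hnodiag pa
    rw [← h, hpa, hpb]
  · intro h
    apply hnodiag pb
    rw [← h, hpa, hpb]

lemma noRep_other (hr : 1 ≤ r) (vtx : ZMod (2*r) → Fin n) (hns : Polar.NonSplit vtx)
    {LC LD : ℕ} [NeZero LC] [NeZero LD]
    (wC : ZMod LC → Fin n) (hCinj : Function.Injective wC)
    (wD : ZMod LD → Fin n)
    {u : Fin n} (huC : u ∈ Set.range wC)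
    (hCD : ∀ x, x ∈ Set.range wC → x ∈ Set.range wD → x = u)
    (hedgeCD : ∀ p : ZMod (2*r), (∃ t, s(vtx p, vtx (p+1)) = s(wC t, wC (t+1))) ∨
      (∃ t, s(vtx p, vtx (p+1)) = s(wD t, wD (t+1))))
    (hnotallC : ∃ p : ZMod (2*r), vtx p ∉ Set.range wC)
    {a' b' : ZMod (2*r)} (ha' : vtx a' = u) (hb' : vtx b' = u) (hab' : a' ≠ b')
    {v : Fin n} (hvu : v ≠ u) (hvC : v ∈ Set.range wC) : ¬ PolarAlg.RepNonLoop vtx v := by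
  haveI : NeZero (2*r) := ⟨by omega⟩
  intro hrep
  rw [rep_iff] at hrep
  obtain ⟨a, b, ha, hb, hab, -, -⟩ := hrep
  have hocc : ∀ q, vtx q = u → q = a' ∨ q = b' := by
    intro q hq
    rcases occ_collapse hr vtx hns (hq.trans ha'.symm) (hq.trans hb'.symm) with h|h|h
    · exact Or.inl h
    · exact Or.inr h
    · exact absurd h hab'
  set d1 := (b' - a').val with hd1
  have hd1lt : d1 < 2*r := ZMod.val_lt _
  have hb'a : b' = a' + ((d1:ℕ) : ZMod (2*r)) := by rw [hd1, zmod_cast_val]; ring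
  have hd1ne : d1 ≠ 0 := by
    intro h0
    apply hab'
    rw [hb'a, h0, Nat.cast_zero, add_zero]
  have ha'b : a' = b' + ((2*r - d1 : ℕ) : ZMod (2*r)) := by
    rw [hb'a, add_assoc, ← Nat.cast_add]
    have h2 : d1 + (2*r - d1) = 2*r := by omega
    rw [h2, ZMod.natCast_self, add_zero]
  have havoid1 : ∀ s : ℕ, 0 < s → s < d1 → vtx (a' + ((s:ℕ) : ZMod (2*r))) ≠ u := by
    intro s hs1 hs2 hqu
    rcases hocc _ hqu with hh|hh
    · have h0 : ((s:ℕ) : ZMod (2*r)) = ((0:ℕ) : ZMod (2*r)) := by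
        rw [Nat.cast_zero]
        exact add_eq_left.mp hh
      have := cast_inj_of_lt hr (by omega) (by omega) h0
      omega
    · rw [hb'a] at hh
      have h0 := add_left_cancel hh
      have := cast_inj_of_lt hr (by omega) (by omega) h0
      omega
  have havoid2 : ∀ s : ℕ, 0 < s → s < 2*r - d1 → vtx (b' + ((s:ℕ) : ZMod (2*r))) ≠ u := by
    intro s hs1 hs2 hqu
    rcases hocc _ hqu with hh|hh
    · rw [ha'b] at hh
      have h0 := add_left_cancel hh
      have := cast_inj_of_lt hr (by omega) (by omega) h0
      omega
    · have h0 : ((s:ℕ) : ZMod (2*r)) = ((0:ℕ) : ZMod (2*r)) := by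
        rw [Nat.cast_zero]
        exact add_eq_left.mp hh
      have := cast_inj_of_lt hr (by omega) (by omega) h0
      omega
  have posdec : ∀ q : ZMod (2*r), vtx q ≠ u →
      (∃ s : ℕ, 0 < s ∧ s < d1 ∧ q = a' + ((s:ℕ) : ZMod (2*r))) ∨
      (∃ s : ℕ, 0 < s ∧ s < 2*r - d1 ∧ q = b' + ((s:ℕ) : ZMod (2*r))) := by
    intro q hqu
    have hslt : (q - a').val < 2*r := ZMod.val_lt _
    have hq : q = a' + (((q - a').val : ℕ) : ZMod (2*r)) := by rw [zmod_cast_val]; ring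
    have hs0 : (q - a').val ≠ 0 := by
      intro h0
      rw [hq, h0, Nat.cast_zero, add_zero] at hqu
      exact hqu ha'
    have hsd1 : (q - a').val ≠ d1 := by
      intro h0
      rw [hq, h0, ← hb'a] at hqu
      exact hqu hb'
    rcases Nat.lt_or_ge (q - a').val d1 with h|h
    · exact Or.inl ⟨(q - a').val, by omega, h, hq⟩
    · refine Or.inr ⟨(q - a').val - d1, by omega, by omega, ?_⟩
      rw [hb'a, add_assoc, ← Nat.cast_add]
      have h2 : d1 + ((q - a').val - d1) = (q - a').val := by omega
      rw [h2]
      exact hq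
  have hsides : ∀ p : ZMod (2*r), vtx p ≠ u → vtx (p+1) ≠ u →
      (vtx p ∈ Set.range wC ↔ vtx (p+1) ∈ Set.range wC) := by
    intro p hpu hp1u
    rcases hedgeCD p with ⟨t, ht⟩|⟨t, ht⟩
    · rcases Sym2.eq_iff.mp ht with ⟨h1,h2⟩|⟨h1,h2⟩
      · exact ⟨fun _ => ⟨t+1, h2.symm⟩, fun _ => ⟨t, h1.symm⟩⟩
      · exact ⟨fun _ => ⟨t, h2.symm⟩, fun _ => ⟨t+1, h1.symm⟩⟩
    · rcases Sym2.eq_iff.mp ht with ⟨h1,h2⟩|⟨h1,h2⟩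
      · exact ⟨fun hm => absurd (hCD _ hm ⟨t, h1.symm⟩) hpu,
          fun hm => absurd (hCD _ hm ⟨t+1, h2.symm⟩) hp1u⟩
      · exact ⟨fun hm => absurd (hCD _ hm ⟨t+1, h1.symm⟩) hpu,
          fun hm => absurd (hCD _ hm ⟨t, h2.symm⟩) hp1u⟩
  obtain ⟨iC, hiC⟩ := huC
  have hedgeC : ∀ p : ZMod (2*r), vtx p ≠ wC iC → vtx (p+1) ≠ wC iC → vtx p ∈ Set.range wC →
      ∃ t, s(vtx p, vtx (p+1)) = s(wC t, wC (t+1)) := by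
    intro p hpu _ hpC
    rcases hedgeCD p with h|⟨t, ht⟩
    · exact h
    · exfalso
      rcases Sym2.eq_iff.mp ht with ⟨h1,-⟩|⟨h1,-⟩
      · exact hpu (by rw [hCD _ hpC ⟨t, h1.symm⟩, hiC])
      · exact hpu (by rw [hCD _ hpC ⟨t+1, h1.symm⟩, hiC])
  have hau : vtx a ≠ u := by rw [ha]; exact hvu
  have hbu : vtx b ≠ u := by rw [hb]; exact hvu
  have same_arc : ∀ (c0 : ZMod (2*r)) (δ sa sb : ℕ), 0 < sa → sa < sb → sb < δ → δ ≤ 2*r →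
      (∀ s : ℕ, 0 < s → s < δ → vtx (c0 + ((s:ℕ) : ZMod (2*r))) ≠ u) →
      vtx (c0 + ((sa:ℕ) : ZMod (2*r))) = v → vtx (c0 + ((sb:ℕ) : ZMod (2*r))) = v → False := by
    intro c0 δ sa sb hsa hlt hsb hδ havoid hva hvb
    set c := c0 + ((sa:ℕ) : ZMod (2*r)) with hc
    have hvtx : ∀ s : ℕ, s ≤ sb - sa → vtx (c + ((s:ℕ) : ZMod (2*r))) ≠ wC iC := by
      intro s hs
      have hcast : c + ((s:ℕ) : ZMod (2*r)) = c0 + (((sa + s:ℕ) : ℕ) : ZMod (2*r)) := by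
        rw [hc, Nat.cast_add, add_assoc]
      rw [hcast, hiC]
      exact havoid (sa + s) (by omega) (by omega)
    have hcast2 : c + (((sb - sa : ℕ) : ℕ) : ZMod (2*r)) = c0 + ((sb:ℕ) : ZMod (2*r)) := by
      rw [hc, add_assoc, ← Nat.cast_add]
      have h2 : sa + (sb - sa) = sb := by omega
      rw [h2]
    have hclose : vtx (c + (((sb - sa : ℕ) : ℕ) : ZMod (2*r))) = vtx c := by
      rw [hcast2, hvb, ← hva]
    have hstartC : vtx c ∈ Set.range wC := by rw [hva]; exact hvC
    have heven := core_odd hr vtx wC hCinj iC c (sb - sa) hvtx hstartC hedgeC hclose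
    have hccne : c ≠ c + (((sb - sa:ℕ) : ℕ) : ZMod (2*r)) := by
      intro hh
      have h0 : (((sb - sa:ℕ) : ℕ) : ZMod (2*r)) = ((0:ℕ) : ZMod (2*r)) := by
        rw [Nat.cast_zero]
        exact add_eq_left.mp hh.symm
      have := cast_inj_of_lt hr (by omega) (by omega) h0
      omega
    have hodd := odd_diff hr vtx hns hclose.symm hccne
    have hxx : (c + (((sb - sa:ℕ) : ℕ) : ZMod (2*r))) - c = (((sb - sa:ℕ) : ℕ) : ZMod (2*r)) := by
      ring
    rw [hxx, ZMod.val_cast_of_lt (by omega)] at hodd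
    omega
  have cover12 : ∀ (sa sb : ℕ), 0 < sa → sa < d1 → 0 < sb → sb < 2*r - d1 →
      vtx (a' + ((sa:ℕ) : ZMod (2*r))) = v → vtx (b' + ((sb:ℕ) : ZMod (2*r))) = v → False := by
    intro sa sb hsa0 hsa1 hsb0 hsb1 hqa hqb
    obtain ⟨pbad, hpbad⟩ := hnotallC
    apply hpbad
    by_cases hqu : vtx pbad = u
    · rw [hqu]; exact ⟨iC, hiC⟩
    · rcases posdec pbad hqu with ⟨s, hs0, hs1, hqs⟩|⟨s, hs0, hs1, hqs⟩
      · rw [hqs]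
        exact arc_prop hr vtx hsides a' d1 havoid1 sa hsa0 hsa1
          (by rw [hqa]; exact hvC) s hs0 hs1
      · rw [hqs]
        exact arc_prop hr vtx hsides b' (2*r - d1) havoid2 sb hsb0 hsb1
          (by rw [hqb]; exact hvC) s hs0 hs1
  rcases posdec a hau with ⟨sa, hsa0, hsa1, hqa⟩|⟨sa, hsa0, hsa1, hqa⟩ <;>
    rcases posdec b hbu with ⟨sb, hsb0, hsb1, hqb⟩|⟨sb, hsb0, hsb1, hqb⟩
  · have hsane : sa ≠ sb := by
      intro h; apply hab; rw [hqa, hqb, h]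
    rw [hqa] at ha
    rw [hqb] at hb
    rcases Nat.lt_or_ge sa sb with h|h
    · exact same_arc a' d1 sa sb hsa0 h hsb1 (by omega) havoid1 ha hb
    · exact same_arc a' d1 sb sa hsb0 (by omega) hsa1 (by omega) havoid1 hb ha
  · rw [hqa] at ha
    rw [hqb] at hb
    exact cover12 sa sb hsa0 hsa1 hsb0 hsb1 ha hb
  · rw [hqa] at ha
    rw [hqb] at hb
    exact cover12 sb sa hsb0 hsb1 hsa0 hsa1 hb ha
  · have hsane : sa ≠ sb := by
      intro h; apply hab; rw [hqa, hqb, h]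
    rw [hqa] at ha
    rw [hqb] at hb
    rcases Nat.lt_or_ge sa sb with h|h
    · exact same_arc b' (2*r - d1) sa sb hsa0 h hsb1 (by omega) havoid2 ha hb
    · exact same_arc b' (2*r - d1) sb sa hsb0 (by omega) hsa1 (by omega) havoid2 hb ha

end PolarAux

end PolarAux


open Polar PolarAlg MvPolynomial in
/-- Lemma 4.10: for a non-split even closed walk `w` on `G(f)`, `t_w = M · z_w` where `M` is
the product of the repeated vertices of the closed walk obtained by removing the loops of `w`.
In particular `t_w = z_w` when `w` is an even cycle, a path-degenerate looped bow tie, or a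
monedge bow tie whose structural cycles are loops, and `t_w = x_i · z_w` when `w` is a
path-degenerate non-looped bow tie with common vertex `x_i`. -/
theorem tw_eq_M_mul_zw (k : Type*) [Field k] [CharZero k] {n m r : ℕ} (hr : 1 ≤ r)
    (ε : Fin m → Sym2 (Fin n)) (hinj : Function.Injective ε)
    (vtx : ZMod (2 * r) → Fin n) (eidx : ZMod (2 * r) → Fin m)
    (hw : IsWalkIn ε vtx eidx) (hns : Polar.NonSplit vtx) :
    (∀ i, tw k ε eidx i = Mrep k vtx * zw k ε vtx eidx i) ∧
    (((∃ c : Cyc (Fin n) (Set.range ε), Even c.len ∧ c.edges = walkEdges vtx) ∨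
        (∃ B : BowTie (Fin n) (Set.range ε), B.PathDegenerate ∧ B.Looped ∧
          B.edges = walkEdges vtx) ∨
        (∃ B : BowTie (Fin n) (Set.range ε), B.Monedge ∧ B.c1.IsLoop ∧ B.c2.IsLoop ∧
          B.edges = walkEdges vtx)) →
      ∀ i, tw k ε eidx i = zw k ε vtx eidx i) ∧
    (∀ B : BowTie (Fin n) (Set.range ε), B.PathDegenerate → ¬ B.Looped →
      B.edges = walkEdges vtx →
      ∀ i, tw k ε eidx i = X (B.pvtx 0) * zw k ε vtx eidx i) := by
  classical
  haveI : NeZero (2*r) := ⟨by omega⟩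
  have hpart1 : ∀ i, tw k ε eidx i = Mrep k vtx * zw k ε vtx eidx i :=
    fun i => PolarAux.part1 k hr ε vtx eidx hw hns i
  refine ⟨hpart1, ?_, ?_⟩
  · rintro (⟨c, hceven, hcE⟩ | ⟨B, hdeg, hloop, hBE⟩ | ⟨B, hmon, hl1, hl2, hBE⟩) i
    · -- even cycle
      have hnorep : ∀ v, ¬ RepNonLoop vtx v := by
        haveI : NeZero c.len := ⟨by have := c.pos; omega⟩
        have hdvd : (2:ℕ) ∣ c.len := by
          obtain ⟨t, ht⟩ := hceven
          exact ⟨t, by omega⟩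
        intro v
        refine PolarAux.noRep_even_cycle hr vtx hns hdvd c.vtx c.inj ?_ v
        intro p
        have hmem : s(vtx p, vtx (p+1)) ∈ Polar.walkEdges vtx := ⟨p, rfl⟩
        rw [← hcE] at hmem
        exact hmem
      rw [hpart1 i, PolarAux.Mrep_eq_one k vtx hnorep, one_mul]
    · -- path-degenerate looped bow tie
      have hpe : B.pathEdges = ∅ := by
        ext e
        simp only [Polar.BowTie.pathEdges, Set.mem_setOf_eq, Set.mem_empty_iff_false, iff_false]
        rintro ⟨j, -⟩
        exact Nat.not_lt_zero j.1 (hdeg ▸ j.2)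
      have hU : B.c1.edges ∪ B.c2.edges = Polar.walkEdges vtx := by
        rw [← hBE, Polar.BowTie.edges, hpe, Set.union_empty]
      have hu1 : B.pvtx 0 ∈ B.c1.vertices := B.hstart
      have hu2 : B.pvtx 0 ∈ B.c2.vertices := by
        have h := B.hstop
        have hpl : B.plen = 0 := hdeg
        have hl : Fin.last B.plen = 0 := Fin.ext (by simp [hpl])
        rwa [hl] at h
      have key : ∀ (cL cO : Polar.Cyc (Fin n) (Set.range ε)), cL.IsLoop →
          (cL.edges ∪ cO.edges = Polar.walkEdges vtx) →
          (B.pvtx 0 ∈ cL.vertices) → (B.pvtx 0 ∈ cO.vertices) →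
          (cL.edges ∩ cO.edges = ∅) →
          ∀ v, ¬ RepNonLoop vtx v := by
        intro cL cO hLoop hUn huL huO hLO v
        obtain ⟨jL, hjL⟩ := huL
        haveI hsub : Subsingleton (ZMod cL.len) := by
          rw [hLoop]; infer_instance
        have hLvtx : ∀ j : ZMod cL.len, cL.vtx j = B.pvtx 0 := by
          intro j
          rw [Subsingleton.elim j jL, hjL]
        have hLedge : ∀ e, e ∈ cL.edges → e = s(B.pvtx 0, B.pvtx 0) := by
          rintro e ⟨j, hej⟩
          rw [hej, hLvtx j, hLvtx (j+1)]
        have hloopmem : s(B.pvtx 0, B.pvtx 0) ∈ Polar.walkEdges vtx := by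
          rw [← hUn]
          exact Or.inl ⟨jL, by rw [hLvtx jL, hLvtx (jL+1)]⟩
        obtain ⟨p0, hp0e⟩ := hloopmem
        have hp0 : vtx p0 = B.pvtx 0 ∧ vtx (p0+1) = B.pvtx 0 := by
          rcases Sym2.eq_iff.mp hp0e with ⟨h1,h2⟩|⟨h1,h2⟩
          · exact ⟨h1.symm, h2.symm⟩
          · exact ⟨h2.symm, h1.symm⟩
        have hOne1 : cO.len ≠ 1 := by
          intro h1
          haveI hsubO : Subsingleton (ZMod cO.len) := by rw [h1]; infer_instance
          obtain ⟨jO, hjO⟩ := huO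
          have hOloop : s(B.pvtx 0, B.pvtx 0) ∈ cO.edges :=
            ⟨jO, by rw [Subsingleton.elim (jO+1) jO, hjO]⟩
          have hLloop : s(B.pvtx 0, B.pvtx 0) ∈ cL.edges :=
            ⟨jL, by rw [hLvtx jL, hLvtx (jL+1)]⟩
          have hmem2 : s(B.pvtx 0, B.pvtx 0) ∈ cL.edges ∩ cO.edges := ⟨hLloop, hOloop⟩
          rw [hLO] at hmem2
          exact hmem2
        have hO3 : 3 ≤ cO.len := by
          have h1 := cO.pos; have h2 := cO.not_two; omega
        haveI : NeZero cO.len := ⟨by omega⟩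
        have hedge : ∀ p : ZMod (2*r), s(vtx p, vtx (p+1)) = s(B.pvtx 0, B.pvtx 0) ∨
            ∃ t, s(vtx p, vtx (p+1)) = s(cO.vtx t, cO.vtx (t+1)) := by
          intro p
          have hm : s(vtx p, vtx (p+1)) ∈ cL.edges ∪ cO.edges := by
            rw [hUn]; exact ⟨p, rfl⟩
          rcases hm with hm|hm
          · exact Or.inl (hLedge _ hm)
          · obtain ⟨t, ht⟩ := hm
            exact Or.inr ⟨t, ht⟩
        exact PolarAux.noRep_looped hr vtx hns cO.vtx cO.inj huO hedge hp0.1 hp0.2 v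
      have hnorep : ∀ v, ¬ RepNonLoop vtx v := by
        rcases hloop with hl|hl
        · exact key B.c1 B.c2 hl hU hu1 hu2 B.edisj
        · exact key B.c2 B.c1 hl (by rw [Set.union_comm]; exact hU) hu2 hu1
            (by rw [Set.inter_comm]; exact B.edisj)
      rw [hpart1 i, PolarAux.Mrep_eq_one k vtx hnorep, one_mul]
    · -- monedge, both loops
      obtain ⟨j1, hj1⟩ := B.hstart
      obtain ⟨j2', hj2⟩ := (show B.pvtx (Fin.last B.plen) ∈ B.c2.vertices from B.hstop)
      haveI hs1 : Subsingleton (ZMod B.c1.len) := by rw [hl1]; infer_instance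
      haveI hs2 : Subsingleton (ZMod B.c2.len) := by rw [hl2]; infer_instance
      have hC1v : ∀ j : ZMod B.c1.len, B.c1.vtx j = B.pvtx 0 := fun j => by
        rw [Subsingleton.elim j j1]; exact hj1
      have hC2v : ∀ j : ZMod B.c2.len, B.c2.vtx j = B.pvtx (Fin.last B.plen) := fun j => by
        rw [Subsingleton.elim j j2']; exact hj2
      have hloop1 : ∃ p : ZMod (2*r), vtx p = B.pvtx 0 ∧ vtx (p+1) = B.pvtx 0 := by
        have hmem : s(B.pvtx 0, B.pvtx 0) ∈ Polar.walkEdges vtx := by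
          rw [← hBE]
          exact Or.inl (Or.inl ⟨j1, by rw [hC1v j1, hC1v (j1+1)]⟩)
        obtain ⟨p, hp⟩ := hmem
        rcases Sym2.eq_iff.mp hp with ⟨h1,h2⟩|⟨h1,h2⟩
        · exact ⟨p, h1.symm, h2.symm⟩
        · exact ⟨p, h2.symm, h1.symm⟩
      have hloop2 : ∃ p : ZMod (2*r),
          vtx p = B.pvtx (Fin.last B.plen) ∧ vtx (p+1) = B.pvtx (Fin.last B.plen) := by
        have hmem : s(B.pvtx (Fin.last B.plen), B.pvtx (Fin.last B.plen))
            ∈ Polar.walkEdges vtx := by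
          rw [← hBE]
          exact Or.inl (Or.inr ⟨j2', by rw [hC2v j2', hC2v (j2'+1)]⟩)
        obtain ⟨p, hp⟩ := hmem
        rcases Sym2.eq_iff.mp hp with ⟨h1,h2⟩|⟨h1,h2⟩
        · exact ⟨p, h1.symm, h2.symm⟩
        · exact ⟨p, h2.symm, h1.symm⟩
      have hnorep : ∀ v, ¬ RepNonLoop vtx v := by
        intro v hrep
        obtain ⟨a, b, ha, -, -, -, -⟩ := (PolarAux.rep_iff vtx v).mp hrep
        have hmem : s(vtx a, vtx (a+1)) ∈ B.edges := by
          rw [hBE]; exact ⟨a, rfl⟩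
        have hv12 : v = B.pvtx 0 ∨ v = B.pvtx (Fin.last B.plen) := by
          rcases hmem with (hm|hm)|hm
          · obtain ⟨j, hej⟩ := hm
            rcases Sym2.eq_iff.mp hej with ⟨h1,-⟩|⟨h1,-⟩
            · left; rw [← ha, h1, hC1v]
            · left; rw [← ha, h1, hC1v]
          · obtain ⟨j, hej⟩ := hm
            rcases Sym2.eq_iff.mp hej with ⟨h1,-⟩|⟨h1,-⟩
            · right; rw [← ha, h1, hC2v]
            · right; rw [← ha, h1, hC2v]
          · obtain ⟨j, hej⟩ := hm
            have hpl : B.plen = 1 := hmon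
            have hjv : j.1 = 0 := by
              have h2 := j.2
              omega
            have hj0 : j.castSucc = 0 := by
              apply Fin.ext
              simp [hjv]
            have hjlast : j.succ = Fin.last B.plen := by
              apply Fin.ext
              simp [hjv, hpl]
            rw [hj0, hjlast] at hej
            rcases Sym2.eq_iff.mp hej with ⟨h1,-⟩|⟨h1,-⟩
            · left; rw [← ha, h1]
            · right; rw [← ha, h1]
        rcases hv12 with rfl|rfl
        · obtain ⟨p, hp, hp1⟩ := hloop1
          exact PolarAux.noRep_of_loop hr vtx hns p hp hp1 hrep
        · obtain ⟨p, hp, hp1⟩ := hloop2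
          exact PolarAux.noRep_of_loop hr vtx hns p hp hp1 hrep
      rw [hpart1 i, PolarAux.Mrep_eq_one k vtx hnorep, one_mul]
  · -- path-degenerate non-looped bow tie
    intro B hdeg hnl hBE i
    have hpe : B.pathEdges = ∅ := by
      ext e
      simp only [Polar.BowTie.pathEdges, Set.mem_setOf_eq, Set.mem_empty_iff_false, iff_false]
      rintro ⟨j, -⟩
      exact Nat.not_lt_zero j.1 (hdeg ▸ j.2)
    have hU : B.c1.edges ∪ B.c2.edges = Polar.walkEdges vtx := by
      rw [← hBE, Polar.BowTie.edges, hpe, Set.union_empty]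
    obtain ⟨iC, hiC⟩ := B.hstart
    have hstop' : B.pvtx 0 ∈ B.c2.vertices := by
      have h := B.hstop
      have hpl : B.plen = 0 := hdeg
      have hl : Fin.last B.plen = 0 := Fin.ext (by simp [hpl])
      rwa [hl] at h
    obtain ⟨iD, hiD⟩ := hstop'
    have hL1 : 3 ≤ B.c1.len := by
      have h1 := B.c1.pos; have h2 := B.c1.not_two
      have h3 : B.c1.len ≠ 1 := fun h => hnl (Or.inl h)
      omega
    have hL2 : 3 ≤ B.c2.len := by
      have h1 := B.c2.pos; have h2 := B.c2.not_two
      have h3 : B.c2.len ≠ 1 := fun h => hnl (Or.inr h)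
      omega
    haveI : NeZero B.c1.len := ⟨by omega⟩
    haveI : NeZero B.c2.len := ⟨by omega⟩
    have hedgeCD : ∀ p : ZMod (2*r),
        (∃ t, s(vtx p, vtx (p+1)) = s(B.c1.vtx t, B.c1.vtx (t+1))) ∨
        (∃ t, s(vtx p, vtx (p+1)) = s(B.c2.vtx t, B.c2.vtx (t+1))) := by
      intro p
      have hm : s(vtx p, vtx (p+1)) ∈ B.c1.edges ∪ B.c2.edges := by
        rw [hU]; exact ⟨p, rfl⟩
      exact hm
    have hdisj : ∀ (t : ZMod B.c1.len) (t' : ZMod B.c2.len),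
        s(B.c1.vtx t, B.c1.vtx (t+1)) ≠ s(B.c2.vtx t', B.c2.vtx (t'+1)) := by
      intro t t' h
      have hmem2 : s(B.c1.vtx t, B.c1.vtx (t+1)) ∈ B.c1.edges ∩ B.c2.edges :=
        ⟨⟨t, rfl⟩, ⟨t', h⟩⟩
      rw [B.edisj] at hmem2
      exact hmem2
    have hcovC : ∀ t, ∃ q : ZMod (2*r),
        s(vtx q, vtx (q+1)) = s(B.c1.vtx t, B.c1.vtx (t+1)) := by
      intro t
      have hm : s(B.c1.vtx t, B.c1.vtx (t+1)) ∈ Polar.walkEdges vtx := by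
        rw [← hU]; exact Or.inl ⟨t, rfl⟩
      obtain ⟨q, hq⟩ := hm
      exact ⟨q, hq.symm⟩
    have hcovD : ∀ t, ∃ q : ZMod (2*r),
        s(vtx q, vtx (q+1)) = s(B.c2.vtx t, B.c2.vtx (t+1)) := by
      intro t
      have hm : s(B.c2.vtx t, B.c2.vtx (t+1)) ∈ Polar.walkEdges vtx := by
        rw [← hU]; exact Or.inr ⟨t, rfl⟩
      obtain ⟨q, hq⟩ := hm
      exact ⟨q, hq.symm⟩
    have hCD12 : ∀ x, x ∈ Set.range B.c1.vtx → x ∈ Set.range B.c2.vtx → x = B.pvtx 0 :=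
      fun x h1 h2 => (B.cmeet x h1 h2).2
    have hCD21 : ∀ x, x ∈ Set.range B.c2.vtx → x ∈ Set.range B.c1.vtx → x = B.pvtx 0 :=
      fun x h2 h1 => (B.cmeet x h1 h2).2
    have hrepU : RepNonLoop vtx (B.pvtx 0) :=
      PolarAux.rep_center hr vtx hns hL1 hL2 B.c1.vtx B.c1.inj B.c2.vtx B.c2.inj iC iD hiC hiD
        hedgeCD hdisj hcovC hcovD
    obtain ⟨a', b', ha', hb', hab', -, -⟩ := (PolarAux.rep_iff vtx (B.pvtx 0)).mp hrepU
    have hone1 : (1 : ZMod B.c1.len) ≠ 0 := (PolarAux.zmod_small_ne _ hL1).1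
    have hone2 : (1 : ZMod B.c2.len) ≠ 0 := (PolarAux.zmod_small_ne _ hL2).1
    have hnotallC : ∃ p : ZMod (2*r), vtx p ∉ Set.range B.c1.vtx := by
      have hxu : B.c2.vtx (iD + 1) ≠ B.pvtx 0 := by
        intro h
        rw [← hiD] at h
        have he := B.c2.inj h
        exact hone2 (by linear_combination he)
      obtain ⟨q, hq⟩ := hcovD (iD + 1)
      have hxnotC : B.c2.vtx (iD + 1) ∉ Set.range B.c1.vtx := by
        intro hmem
        exact hxu (hCD12 _ hmem ⟨iD + 1, rfl⟩)
      rcases Sym2.eq_iff.mp hq with ⟨h1,-⟩|⟨-,h2⟩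
      · exact ⟨q, by rw [h1]; exact hxnotC⟩
      · exact ⟨q+1, by rw [h2]; exact hxnotC⟩
    have hnotallD : ∃ p : ZMod (2*r), vtx p ∉ Set.range B.c2.vtx := by
      have hxu : B.c1.vtx (iC + 1) ≠ B.pvtx 0 := by
        intro h
        rw [← hiC] at h
        have he := B.c1.inj h
        exact hone1 (by linear_combination he)
      obtain ⟨q, hq⟩ := hcovC (iC + 1)
      have hxnotD : B.c1.vtx (iC + 1) ∉ Set.range B.c2.vtx := by
        intro hmem
        exact hxu (hCD21 _ hmem ⟨iC + 1, rfl⟩)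
      rcases Sym2.eq_iff.mp hq with ⟨h1,-⟩|⟨-,h2⟩
      · exact ⟨q, by rw [h1]; exact hxnotD⟩
      · exact ⟨q+1, by rw [h2]; exact hxnotD⟩
    have huniq : ∀ v, RepNonLoop vtx v → v = B.pvtx 0 := by
      intro v hv
      by_contra hvu
      obtain ⟨a, b, ha, -, -, -, -⟩ := (PolarAux.rep_iff vtx v).mp hv
      have hmem : s(vtx a, vtx (a+1)) ∈ B.c1.edges ∪ B.c2.edges := by
        rw [hU]; exact ⟨a, rfl⟩
      have hvC : v ∈ Set.range B.c1.vtx ∨ v ∈ Set.range B.c2.vtx := by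
        rcases hmem with ⟨t, ht⟩|⟨t, ht⟩
        · rcases Sym2.eq_iff.mp ht with ⟨h1,-⟩|⟨h1,-⟩
          · exact Or.inl ⟨t, h1.symm.trans ha⟩
          · exact Or.inl ⟨t+1, h1.symm.trans ha⟩
        · rcases Sym2.eq_iff.mp ht with ⟨h1,-⟩|⟨h1,-⟩
          · exact Or.inr ⟨t, h1.symm.trans ha⟩
          · exact Or.inr ⟨t+1, h1.symm.trans ha⟩
      rcases hvC with hvC|hvC
      · exact PolarAux.noRep_other hr vtx hns B.c1.vtx B.c1.inj B.c2.vtx ⟨iC, hiC⟩ hCD12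
          hedgeCD hnotallC ha' hb' hab' hvu hvC hv
      · exact PolarAux.noRep_other hr vtx hns B.c2.vtx B.c2.inj B.c1.vtx ⟨iD, hiD⟩ hCD21
          (fun p => (hedgeCD p).symm) hnotallD ha' hb' hab' hvu hvC hv
    rw [hpart1 i, PolarAux.Mrep_eq_X k vtx (B.pvtx 0) hrepU huniq]
end
end
end

section
/- If the ideal I = (f) generated by a set f of monomials of degree 2 is linearly presented, then f is polarizable. -/
noncomputable section

noncomputable section

namespace PolarAlg

open MvPolynomial

/-- The first syzygy module of the ideal `I = (f)`, as a set: vectors `a` with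
`∑ i, a i · f i = 0`. -/
def SyzSet (k : Type*) [Field k] (n : ℕ) {ι : Type*} [Fintype ι]
    (ε : ι → Sym2 (Fin n)) : Set (ι → MvPolynomial (Fin n) k) :=
  {a | ∑ i, a i * fmon k ε i = 0}

/-- `I = (f)` is linearly presented: its first syzygy module is generated by the syzygies
all of whose entries are linear forms. -/
def LinearlyPresented (k : Type*) [Field k] (n : ℕ) {ι : Type*} [Fintype ι]
    (ε : ι → Sym2 (Fin n)) : Prop :=
  SyzSet k n ε =
    ↑(Submodule.span (MvPolynomial (Fin n) k)
      {a ∈ SyzSet k n ε | ∀ i, a i = 0 ∨ (a i).IsHomogeneous 1})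

/-- Adjacency in the edge graph `L(f)` of `G(f)`: two distinct edges of `G(f)` are adjacent
iff the corresponding monomials have a common variable (`gcd ≠ 1`). -/
def LAdj {n : ℕ} {ι : Type*} (ε : ι → Sym2 (Fin n)) (i j : ι) : Prop :=
  i ≠ j ∧ ∃ v : Fin n, v ∈ ε i ∧ v ∈ ε j

/-- The edge graph `L(f)` has diameter at most 2. -/
def DiamLeTwo {n : ℕ} {ι : Type*} (ε : ι → Sym2 (Fin n)) : Prop :=
  ∀ i j : ι, i = j ∨ LAdj ε i j ∨ ∃ l, LAdj ε i l ∧ LAdj ε l j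

end PolarAlg

noncomputable section
namespace PP
open MvPolynomial

variable {n m : ℕ}

/-- function → finsupp -/
def toF (g : Fin n → ℕ) : Fin n →₀ ℕ := Finsupp.equivFunOnFinite.symm g

@[simp] lemma toF_apply (g : Fin n → ℕ) (v : Fin n) : toF g v = g v := rfl

/-- ℤ-vectors cast to k -/
def vz (k : Type*) [Field k] (z : Fin m → ℤ) : Fin m → k := fun i => (z i : k)

def sabs (z : Fin m → ℤ) : ℕ := ∑ i, (z i).natAbs

def posP (z : Fin m → ℤ) : Fin m → ℕ := fun i => (z i).toNat
def negP (z : Fin m → ℤ) : Fin m → ℕ := fun i => (-z i).toNat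

lemma posP_sub_negP (z : Fin m → ℤ) (i : Fin m) :
    (posP z i : ℤ) - negP z i = z i := by
  simp only [posP, negP]; omega

/-- total weight -/
def wt (x : Fin n →₀ ℕ) : ℕ := ∑ v, x v

lemma wt_mono {x y : Fin n →₀ ℕ} (h : x ≤ y) : wt x ≤ wt y :=
  Finset.sum_le_sum fun v _ => h v

lemma eq_of_le_of_wt_le {x y : Fin n →₀ ℕ} (h : x ≤ y) (h2 : wt y ≤ wt x) : x = y := by
  ext v
  by_contra hv
  have h1 : x v < y v := lt_of_le_of_ne (h v) hv
  have : wt x < wt y := by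
    apply Finset.sum_lt_sum (fun v _ => h v) ⟨v, Finset.mem_univ v, h1⟩
  omega

variable (ε : Fin m → Sym2 (Fin n))

/-- the exponent vector of edge i, as a Finsupp -/
def bF (i : Fin m) : Fin n →₀ ℕ := toF (PolarAlg.sym2Exp (ε i))

lemma sym2Exp_mk (a c v : Fin n) :
    PolarAlg.sym2Exp s(a, c) v = (if a = v then 1 else 0) + (if c = v then 1 else 0) := rfl

lemma bF_pair (i : Fin m) : ∃ a c : Fin n, ε i = s(a, c) ∧
    bF ε i = Finsupp.single a 1 + Finsupp.single c 1 := by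
  have hrep : ∀ e : Sym2 (Fin n), ∃ a c : Fin n, e = s(a, c) :=
    fun e => Sym2.ind (fun a c => ⟨a, c, rfl⟩) e
  obtain ⟨a, c, h⟩ := hrep (ε i)
  refine ⟨a, c, h, ?_⟩
  ext v
  simp only [bF, toF_apply, h, sym2Exp_mk]
  simp [Finsupp.single_apply]

lemma wt_bF (i : Fin m) : wt (bF ε i) = 2 := by
  obtain ⟨a, c, -, h⟩ := bF_pair ε i
  simp [wt, h, Finsupp.add_apply, Finsupp.single_apply, Finset.sum_add_distrib]

lemma sym2_eq_of_indicator (a c a' c' : Fin n)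
    (key : ∀ v : Fin n, ((if a = v then 1 else 0) + (if c = v then 1 else 0) : ℕ) =
      (if a' = v then 1 else 0) + (if c' = v then 1 else 0)) :
    s(a, c) = s(a', c') := by
  by_cases e1 : a = a'
  · subst e1
    have hv : ∀ v, (if c = v then (1:ℕ) else 0) = if c' = v then 1 else 0 := by
      intro v; have := key v; omega
    have := hv c
    rw [if_pos rfl] at this
    have e2 : c' = c := by by_contra hne; rw [if_neg hne] at this; omega
    rw [e2]
  · have e3 : c = a' := by
      by_contra e3
      have hka := key a'
      rw [if_neg e1, if_neg e3, if_pos rfl] at hka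
      omega
    subst e3
    have hv : ∀ v, (if a = v then (1:ℕ) else 0) = if c' = v then 1 else 0 := by
      intro v; have := key v; omega
    have := hv a
    rw [if_pos rfl] at this
    have e4 : c' = a := by by_contra hne; rw [if_neg hne] at this; omega
    rw [e4, Sym2.eq_swap]

lemma bF_inj (hinj : Function.Injective ε) : Function.Injective (bF ε) := by
  intro i j hij
  obtain ⟨a, c, hei, hi⟩ := bF_pair ε i
  obtain ⟨a', c', hej, hj⟩ := bF_pair ε j
  apply hinj
  rw [hei, hej]
  apply sym2_eq_of_indicator
  intro v
  have h1 : bF ε i v = bF ε j v := by rw [hij]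
  rw [hi, hj] at h1
  simpa [Finsupp.add_apply, Finsupp.single_apply] using h1

/-- the multidegree of a monomial in the f's -/
def Bn (α : Fin m → ℕ) : Fin n →₀ ℕ := ∑ i, α i • bF ε i

lemma Bn_apply (α : Fin m → ℕ) (v : Fin n) : Bn ε α v = ∑ i, α i * bF ε i v := by
  simp [Bn, Finsupp.finset_sum_apply, Finsupp.smul_apply, smul_eq_mul]

/-- adjacency in the relevant degree-d graph -/
def HAdjP (d : Fin n →₀ ℕ) (i j : Fin m) : Prop :=
  i ≠ j ∧ bF ε i ⊔ bF ε j ≤ d ∧ wt (bF ε i ⊔ bF ε j) ≤ 3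

/-- the combinatorial consequence of linear presentation -/
def ConnP : Prop :=
  ∀ (d : Fin n →₀ ℕ) (i j : Fin m), bF ε i ≤ d → bF ε j ≤ d →
    Relation.ReflTransGen (HAdjP ε d) i j

variable (k : Type*) [Field k]

/-- the k-span of the patterns of relations of multidegree ≤ d -/
def Vd (d : Fin n →₀ ℕ) : Submodule k (Fin m → k) :=
  Submodule.span k {x | ∃ α β : Fin m → ℕ, Bn ε α = Bn ε β ∧ Bn ε α ≤ d ∧
    x = fun i => (α i : k) - (β i : k)}

def Bz (z : Fin m → ℤ) : Fin n → ℤ := fun v => ∑ i, z i * (bF ε i v : ℤ)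

lemma Bn_posP_negP {z : Fin m → ℤ} (hz : ∀ v, Bz ε z v = 0) :
    Bn ε (posP z) = Bn ε (negP z) := by
  ext v
  have h := hz v
  simp only [Bz] at h
  have h2 : ((Bn ε (posP z) v : ℤ)) = ((Bn ε (negP z) v : ℤ)) := by
    simp only [Bn_apply]
    push_cast
    calc (∑ i, (posP z i : ℤ) * (bF ε i v : ℤ))
        = ∑ i, ((negP z i : ℤ) * bF ε i v + z i * bF ε i v) := by
          apply Finset.sum_congr rfl; intro i _
          rw [← posP_sub_negP z i]; ring
      _ = ∑ i, (negP z i : ℤ) * bF ε i v := by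
          rw [Finset.sum_add_distrib, h, add_zero]
  exact_mod_cast h2

lemma vz_mem_Vd_of_le {z : Fin m → ℤ} (d : Fin n →₀ ℕ) (hz : ∀ v, Bz ε z v = 0)
    (hle : Bn ε (posP z) ≤ d) : vz k z ∈ Vd ε k d := by
  apply Submodule.subset_span
  refine ⟨posP z, negP z, Bn_posP_negP ε hz, hle, ?_⟩
  ext i
  simp only [vz]
  have h2 : (((posP z i : ℤ) - (negP z i : ℤ) : ℤ) : k) = ((z i : ℤ) : k) := by
    rw [posP_sub_negP]
  push_cast at h2
  exact h2.symm

lemma Vd_neg {z : Fin m → k} (d : Fin n →₀ ℕ) (hz : z ∈ Vd ε k d) :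
    -z ∈ Vd ε k d := by
  simpa using Submodule.smul_mem _ (-1 : k) hz

lemma vz_neg (z : Fin m → ℤ) : vz k (-z) = -(vz k z) := by
  ext i; simp [vz]

lemma vz_add (y z : Fin m → ℤ) : vz k (y + z) = vz k y + vz k z := by
  ext i; simp [vz]

/-- sum of coordinates of a balanced vector is zero -/
lemma sum_eq_zero_of_bal {z : Fin m → ℤ} (hz : ∀ v, Bz ε z v = 0) :
    ∑ i, z i = 0 := by
  have h1 : ∑ v, Bz ε z v = 0 := by simp [hz]
  have h2 : ∑ v, Bz ε z v = 2 * ∑ i, z i := by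
    simp only [Bz]
    rw [Finset.sum_comm, Finset.mul_sum]
    congr 1; ext i
    rw [← Finset.mul_sum]
    have h3 : ∑ v, (bF ε i v : ℤ) = 2 := by
      have := wt_bF ε i
      simp only [wt] at this
      exact_mod_cast congrArg (Nat.cast : ℕ → ℤ) this
    rw [h3]; ring
  omega

lemma sabs_even {z : Fin m → ℤ} (hz : ∀ v, Bz ε z v = 0) : Even (sabs z) := by
  have hsum := sum_eq_zero_of_bal ε hz
  have : (sabs z : ℤ) % 2 = 0 := by
    have habs : ∀ i : Fin m, ((z i).natAbs : ℤ) % 2 = z i % 2 := by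
      intro i; omega
    have h3 : (sabs z : ℤ) = ∑ i, ((z i).natAbs : ℤ) := by
      simp [sabs]
    rw [h3, Finset.sum_int_mod, Finset.sum_congr rfl (fun i _ => habs i),
      ← Finset.sum_int_mod, hsum]
    rfl
  have h4 : sabs z % 2 = 0 := by omega
  exact Nat.even_iff.mpr h4

end PP
end
noncomputable section
namespace PP
open MvPolynomial Finset

variable {n m : ℕ} (ε : Fin m → Sym2 (Fin n))

/-- alternating telescope -/
lemma tele (A : ℕ → ℤ) (s : ℕ) : ∀ t, s ≤ t →
    ∑ u ∈ Finset.Ico s t, (-1:ℤ)^u * (A u + A (u+1)) =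
      (-1:ℤ)^s * A s - (-1:ℤ)^t * A t := by
  intro t
  induction t with
  | zero => intro h; interval_cases s; simp
  | succ t ih =>
    intro h
    rcases Nat.lt_or_ge s (t+1) with h1 | h1
    · have hst : s ≤ t := by omega
      rw [Finset.sum_Ico_succ_top hst, ih hst, pow_succ]
      ring
    · have : s = t + 1 := by omega
      subst this
      simp

lemma neg_one_pow_odd_diff {s t : ℕ} (h : s ≤ t) (hodd : ¬ Even (t - s)) :
    (-1:ℤ)^t = -(-1:ℤ)^s := by
  have h2 : t = s + (t - s) := by omega
  rw [h2, pow_add, (Nat.not_even_iff_odd.mp hodd).neg_one_pow]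
  ring

lemma neg_one_pow_even_diff {s t : ℕ} (h : s ≤ t) (heven : Even (t - s)) :
    (-1:ℤ)^t = (-1:ℤ)^s := by
  have : t = s + (t - s) := by omega
  rw [this, pow_add, heven.neg_one_pow, mul_one]

/-- elementary basis vector -/
def ezv (r : Fin m) : Fin m → ℤ := fun i => if i = r then 1 else 0

/-- signed walk-segment vector -/
def SegZ (E : ℕ → Fin m) (s t : ℕ) : Fin m → ℤ :=
  fun i => ∑ u ∈ Finset.Ico s t, (-1:ℤ)^u * (if E u = i then 1 else 0)

lemma Bz_add (y z : Fin m → ℤ) (v : Fin n) :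
    Bz ε (y + z) v = Bz ε y v + Bz ε z v := by
  simp only [Bz, Pi.add_apply, add_mul, Finset.sum_add_distrib]

lemma Bz_sub (y z : Fin m → ℤ) (v : Fin n) :
    Bz ε (y - z) v = Bz ε y v - Bz ε z v := by
  simp only [Bz, Pi.sub_apply, sub_mul, Finset.sum_sub_distrib]

lemma Bz_smul_ezv (c : ℤ) (r : Fin m) (v : Fin n) :
    Bz ε (c • ezv r) v = c * (bF ε r v : ℤ) := by
  simp only [Bz, Pi.smul_apply, ezv, smul_eq_mul]
  rw [Finset.sum_eq_single r]
  · simp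
  · intro i _ hir; simp [hir]
  · intro h; exact absurd (Finset.mem_univ r) h

lemma sabs_add_le (y z : Fin m → ℤ) : sabs (y + z) ≤ sabs y + sabs z := by
  rw [sabs, sabs, sabs, ← Finset.sum_add_distrib]
  apply Finset.sum_le_sum
  intro i _
  simp only [Pi.add_apply]
  omega

lemma sabs_smul_ezv (c : ℤ) (r : Fin m) : sabs (c • ezv r) ≤ c.natAbs := by
  rw [sabs]
  rw [Finset.sum_eq_single r]
  · simp [ezv]
  · intro i _ hir; simp [ezv, hir]
  · intro h; exact absurd (Finset.mem_univ r) h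

lemma natAbs_sum_le' {A : Type*} (s : Finset A) (f : A → ℤ) :
    (∑ a ∈ s, f a).natAbs ≤ ∑ a ∈ s, (f a).natAbs := by
  classical
  induction s using Finset.induction with
  | empty => simp
  | insert _ _ hx ih =>
    rw [Finset.sum_insert hx, Finset.sum_insert hx]
    calc _ ≤ _ := Int.natAbs_add_le _ _
      _ ≤ _ := by omega

lemma sabs_SegZ_le (E : ℕ → Fin m) (s t : ℕ) : sabs (SegZ E s t) ≤ t - s := by
  calc sabs (SegZ E s t) = ∑ i, (SegZ E s t i).natAbs := rfl
    _ ≤ ∑ i, ∑ u ∈ Finset.Ico s t, ((-1:ℤ)^u * (if E u = i then 1 else 0)).natAbs := by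
        apply Finset.sum_le_sum
        intro i _
        exact natAbs_sum_le' _ _
    _ = ∑ u ∈ Finset.Ico s t, ∑ i, ((-1:ℤ)^u * (if E u = i then 1 else 0)).natAbs :=
        Finset.sum_comm
    _ ≤ ∑ u ∈ Finset.Ico s t, 1 := by
        apply Finset.sum_le_sum
        intro u _
        rw [Finset.sum_eq_single (E u)]
        · simp [Int.natAbs_mul, Int.natAbs_pow]
        · intro i _ hir; simp [Ne.symm hir]
        · intro h; exact absurd (Finset.mem_univ (E u)) h
    _ = t - s := by simp

lemma SegZ_support {E : ℕ → Fin m} {s t : ℕ} {i : Fin m} (h : SegZ E s t i ≠ 0) :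
    ∃ u, s ≤ u ∧ u < t ∧ E u = i := by
  by_contra hc
  push_neg at hc
  apply h
  apply Finset.sum_eq_zero
  intro u hu
  rw [Finset.mem_Ico] at hu
  rw [if_neg (hc u hu.1 hu.2), mul_zero]

lemma SegZ_consec (E : ℕ → Fin m) {s t t' : ℕ} (h1 : s ≤ t) (h2 : t ≤ t') :
    SegZ E s t + SegZ E t t' = SegZ E s t' := by
  ext i
  simp only [Pi.add_apply, SegZ]
  rw [Finset.sum_Ico_consecutive _ h1 h2]

/-- Bz of a segment telescopes -/
lemma Bz_SegZ (E : ℕ → Fin m) (V : ℕ → Fin n)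
    (hedge : ∀ u, bF ε (E u) = Finsupp.single (V u) 1 + Finsupp.single (V (u+1)) 1)
    {s t : ℕ} (hst : s ≤ t) (v : Fin n) :
    Bz ε (SegZ E s t) v = (-1:ℤ)^s * (if V s = v then 1 else 0)
      - (-1:ℤ)^t * (if V t = v then 1 else 0) := by
  have key : Bz ε (SegZ E s t) v
      = ∑ u ∈ Finset.Ico s t, (-1:ℤ)^u * ((bF ε (E u) v : ℕ) : ℤ) := by
    simp only [Bz, SegZ, Finset.sum_mul]
    rw [Finset.sum_comm]
    apply Finset.sum_congr rfl
    intro u _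
    rw [Finset.sum_eq_single (E u)]
    · simp [mul_assoc]
    · intro i _ hir; simp [Ne.symm hir]
    · intro h; exact absurd (Finset.mem_univ (E u)) h
  rw [key]
  have hA : ∀ u, ((bF ε (E u) v : ℕ) : ℤ) =
      (if V u = v then (1:ℤ) else 0) + (if V (u+1) = v then (1:ℤ) else 0) := by
    intro u
    rw [hedge u]
    rw [Finsupp.add_apply, Finsupp.single_apply, Finsupp.single_apply]
    split_ifs <;> simp
  calc ∑ u ∈ Finset.Ico s t, (-1:ℤ)^u * ((bF ε (E u) v : ℕ) : ℤ)
      = ∑ u ∈ Finset.Ico s t, (-1:ℤ)^u *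
        ((if V u = v then (1:ℤ) else 0) + (if V (u+1) = v then (1:ℤ) else 0)) := by
        apply Finset.sum_congr rfl; intro u _; rw [hA]
    _ = _ := tele _ s t hst

/-- shift the window of a full period -/
lemma SegZ_period (E : ℕ → Fin m) (N : ℕ) (hper : ∀ u, E (u + 2*N) = E u) :
    ∀ c, SegZ E c (c + 2*N) = SegZ E 0 (2*N) := by
  rcases Nat.eq_zero_or_pos N with hN | hN
  · subst hN
    intro c; ext i; simp [SegZ]
  intro c
  induction c with
  | zero => norm_num
  | succ c ih =>
    rw [← ih]
    ext i
    simp only [SegZ]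
    have hfc : (-1:ℤ)^(c+2*N) * (if E (c+2*N) = i then 1 else 0)
        = (-1:ℤ)^c * (if E c = i then 1 else 0) := by
      rw [hper c]
      congr 1
      apply neg_one_pow_even_diff (by omega)
      rw [show c + 2*N - c = 2*N by omega]
      exact even_two_mul N
    have e1 : c + 1 + 2*N = (c + 2*N) + 1 := by omega
    rw [e1, Finset.sum_Ico_succ_top (by omega : c + 1 ≤ c + 2*N), hfc]
    rw [Finset.sum_eq_sum_Ico_succ_bot (by omega : c < c + 2*N)]
    ring
end PP
end
noncomputable section
namespace PP
open MvPolynomial Finset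

variable {n m : ℕ} (ε : Fin m → Sym2 (Fin n))

def cntE (E : ℕ → Fin m) (T : ℕ) (i : Fin m) : ℕ :=
  ((Finset.range T).filter (fun u => Even u ∧ E u = i)).card

def cntO (E : ℕ → Fin m) (T : ℕ) (i : Fin m) : ℕ :=
  ((Finset.range T).filter (fun u => ¬ Even u ∧ E u = i)).card

lemma cntE_congr {E E' : ℕ → Fin m} {T : ℕ} (h : ∀ u, u < T → E u = E' u) (i : Fin m) :
    cntE E T i = cntE E' T i := by
  unfold cntE
  congr 1
  apply Finset.filter_congr
  intro u hu
  rw [Finset.mem_range] at hu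
  rw [h u hu]

lemma cntO_congr {E E' : ℕ → Fin m} {T : ℕ} (h : ∀ u, u < T → E u = E' u) (i : Fin m) :
    cntO E T i = cntO E' T i := by
  unfold cntO
  congr 1
  apply Finset.filter_congr
  intro u hu
  rw [Finset.mem_range] at hu
  rw [h u hu]

lemma cntE_succ (E : ℕ → Fin m) (T : ℕ) (i : Fin m) :
    cntE E (T+1) i = cntE E T i + (if Even T ∧ E T = i then 1 else 0) := by
  unfold cntE
  rw [Finset.range_add_one, Finset.filter_insert]
  split_ifs with h
  · rw [Finset.card_insert_of_notMem (by simp)]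
  · simp

lemma cntO_succ (E : ℕ → Fin m) (T : ℕ) (i : Fin m) :
    cntO E (T+1) i = cntO E T i + (if ¬ Even T ∧ E T = i then 1 else 0) := by
  unfold cntO
  rw [Finset.range_add_one, Finset.filter_insert]
  split_ifs with h
  · rw [Finset.card_insert_of_notMem (by simp)]
  · simp

lemma cntE_as_sum (E : ℕ → Fin m) (T : ℕ) (i : Fin m) :
    cntE E T i = ∑ u ∈ Finset.range T, (if Even u ∧ E u = i then 1 else 0) := by
  rw [cntE, Finset.card_filter]

lemma cntO_as_sum (E : ℕ → Fin m) (T : ℕ) (i : Fin m) :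
    cntO E T i = ∑ u ∈ Finset.range T, (if ¬ Even u ∧ E u = i then 1 else 0) := by
  rw [cntO, Finset.card_filter]

lemma cnt_total (E : ℕ → Fin m) (T : ℕ) :
    ∑ i, (cntE E T i + cntO E T i) = T := by
  have : ∑ i, (cntE E T i + cntO E T i)
      = ∑ u ∈ Finset.range T, ∑ i : Fin m,
        ((if Even u ∧ E u = i then 1 else 0) + (if ¬ Even u ∧ E u = i then 1 else 0)) := by
    rw [Finset.sum_comm]
    apply Finset.sum_congr rfl
    intro i _
    rw [cntE_as_sum, cntO_as_sum, Finset.sum_add_distrib]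
  rw [this]
  have h2 : ∀ u, ∑ i : Fin m,
      ((if Even u ∧ E u = i then 1 else 0) + (if ¬ Even u ∧ E u = i then 1 else 0)) = 1 := by
    intro u
    rw [Finset.sum_eq_single (E u)]
    · by_cases h : Even u <;> simp [h]
    · intro i _ hir; simp [Ne.symm hir]
    · intro h; exact absurd (Finset.mem_univ (E u)) h
  rw [Finset.sum_congr rfl (fun u _ => h2 u)]
  simp

/-- weighted count identity -/
lemma cnt_weighted (E : ℕ → Fin m) (T : ℕ) (g : Fin m → ℤ) :
    (∑ i, (cntE E T i : ℤ) * g i) - (∑ i, (cntO E T i : ℤ) * g i)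
      = ∑ u ∈ Finset.range T, (-1:ℤ)^u * g (E u) := by
  have hE : ∀ i, ((cntE E T i : ℤ)) = ∑ u ∈ Finset.range T,
      (if Even u ∧ E u = i then (1:ℤ) else 0) := by
    intro i; rw [cntE_as_sum]; push_cast; apply Finset.sum_congr rfl; intro u _
    split_ifs <;> simp
  have hO : ∀ i, ((cntO E T i : ℤ)) = ∑ u ∈ Finset.range T,
      (if ¬ Even u ∧ E u = i then (1:ℤ) else 0) := by
    intro i; rw [cntO_as_sum]; push_cast; apply Finset.sum_congr rfl; intro u _
    split_ifs <;> simp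
  calc (∑ i, (cntE E T i : ℤ) * g i) - (∑ i, (cntO E T i : ℤ) * g i)
      = ∑ i, ∑ u ∈ Finset.range T,
        ((if Even u ∧ E u = i then (1:ℤ) else 0) * g i - (if ¬ Even u ∧ E u = i then (1:ℤ) else 0) * g i) := by
        rw [← Finset.sum_sub_distrib]
        apply Finset.sum_congr rfl
        intro i _
        rw [hE, hO, Finset.sum_mul, Finset.sum_mul, ← Finset.sum_sub_distrib]
    _ = ∑ u ∈ Finset.range T, ∑ i,
        ((if Even u ∧ E u = i then (1:ℤ) else 0) * g i - (if ¬ Even u ∧ E u = i then (1:ℤ) else 0) * g i) :=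
        Finset.sum_comm
    _ = ∑ u ∈ Finset.range T, (-1:ℤ)^u * g (E u) := by
        apply Finset.sum_congr rfl
        intro u _
        rw [Finset.sum_eq_single (E u)]
        · by_cases h : Even u
          · simp [h, Even.neg_one_pow h]
          · simp [h, Odd.neg_one_pow (Nat.not_even_iff_odd.mp h)]
        · intro i _ hir; simp [Ne.symm hir]
        · intro h; exact absurd (Finset.mem_univ (E u)) h

lemma segZ_eq_cnt (E : ℕ → Fin m) (T : ℕ) (i : Fin m) :
    SegZ E 0 T i = (cntE E T i : ℤ) - cntO E T i := by
  have := cnt_weighted E T (fun j => if j = i then (1:ℤ) else 0)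
  have h1 : ∀ cnt : Fin m → ℕ, ∑ j, (cnt j : ℤ) * (if j = i then (1:ℤ) else 0) = cnt i := by
    intro cnt
    rw [Finset.sum_eq_single i]
    · simp
    · intro j _ hji; simp [hji]
    · intro h; exact absurd (Finset.mem_univ i) h
  rw [h1, h1] at this
  rw [SegZ, ← Finset.range_eq_Ico]
  exact this.symm

/-- the trail-extension recursion: either extend, or we are stuck at the base vertex
with even length -/
lemma ext_rec (α β : Fin m → ℕ)
    (hbal : ∀ v, ∑ i, α i * bF ε i v = ∑ i, β i * bF ε i v) :
    ∀ (fuel : ℕ) (T : ℕ) (E : ℕ → Fin m) (V : ℕ → Fin n),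
    (∀ u, u < T → bF ε (E u) = Finsupp.single (V u) 1 + Finsupp.single (V (u+1)) 1) →
    (∀ i, cntE E T i ≤ α i) → (∀ i, cntO E T i ≤ β i) →
    (∃ i, α i ≠ 0 ∧ bF ε i (V 0) ≠ 0) →
    ((∑ i, (α i + β i)) + 1 ≤ T + fuel) →
    ∃ (T' : ℕ) (E' : ℕ → Fin m) (V' : ℕ → Fin n), 0 < T' ∧ Even T' ∧
      (∀ u, u < T' → bF ε (E' u) = Finsupp.single (V' u) 1 + Finsupp.single (V' (u+1)) 1) ∧
      V' T' = V' 0 ∧ (∀ i, cntE E' T' i ≤ α i) ∧ (∀ i, cntO E' T' i ≤ β i) := by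
  intro fuel
  induction fuel with
  | zero =>
    intro T E V hedge hcE hcO h0 hfuel
    exfalso
    have h1 : T ≤ ∑ i, (α i + β i) := by
      rw [← cnt_total E T]
      apply Finset.sum_le_sum
      intro i _
      have := hcE i; have := hcO i; omega
    omega
  | succ fuel ih =>
    intro T E V hedge hcE hcO h0 hfuel
    by_cases hstep : ∃ i, bF ε i (V T) ≠ 0 ∧
        (Even T → cntE E T i < α i) ∧ (¬ Even T → cntO E T i < β i)
    · -- extend the trail
      obtain ⟨i, hbvi, hEc, hOc⟩ := hstep
      obtain ⟨a, c, -, hpair⟩ := bF_pair ε i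
      set w' := if V T = a then c else a with hw'
      set E2 := Function.update E T i with hE2
      set V2 := Function.update V (T+1) w' with hV2
      have hE2u : ∀ u, u < T → E2 u = E u := by
        intro u hu; rw [hE2, Function.update_of_ne (by omega)]
      have hE2T : E2 T = i := by rw [hE2, Function.update_self]
      have hV2u : ∀ u, u ≤ T → V2 u = V u := by
        intro u hu; rw [hV2, Function.update_of_ne (by omega)]
      have hV2T1 : V2 (T+1) = w' := by rw [hV2, Function.update_self]
      have hVTac : V T = a ∨ V T = c := by
        by_contra hc
        push_neg at hc
        apply hbvi
        rw [hpair]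
        simp [Finsupp.single_apply, Ne.symm hc.1, Ne.symm hc.2]
      have hedge2 : ∀ u, u < T + 1 →
          bF ε (E2 u) = Finsupp.single (V2 u) 1 + Finsupp.single (V2 (u+1)) 1 := by
        intro u hu
        rcases Nat.lt_or_ge u T with h | h
        · rw [hE2u u h, hV2u u (by omega), hV2u (u+1) (by omega)]
          exact hedge u h
        · have huT : u = T := by omega
          subst huT
          rw [hE2T, hV2u u le_rfl, hV2T1, hpair, hw']
          rcases hVTac with h | h
          · rw [if_pos h, h]
          · by_cases hac : V u = a
            · rw [if_pos hac, hac]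
            · rw [if_neg hac, h, add_comm]
      have hcE2 : ∀ j, cntE E2 (T+1) j ≤ α j := by
        intro j
        rw [cntE_succ, cntE_congr hE2u]
        by_cases hc : Even T ∧ E2 T = j
        · rw [if_pos hc]
          have h1 := hEc hc.1
          have h2 : i = j := by rw [← hE2T, hc.2]
          cases h2
          omega
        · rw [if_neg hc]
          have := hcE j
          omega
      have hcO2 : ∀ j, cntO E2 (T+1) j ≤ β j := by
        intro j
        rw [cntO_succ, cntO_congr hE2u]
        by_cases hc : ¬ Even T ∧ E2 T = j
        · rw [if_pos hc]
          have h1 := hOc hc.1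
          have h2 : i = j := by rw [← hE2T, hc.2]
          cases h2
          omega
        · rw [if_neg hc]
          have := hcO j
          omega
      have h02 : ∃ i, α i ≠ 0 ∧ bF ε i (V2 0) ≠ 0 := by
        rwa [hV2u 0 (by omega)]
      exact ih (T+1) E2 V2 hedge2 hcE2 hcO2 h02 (by omega)
    · -- stuck
      have hstuck : ∀ i, bF ε i (V T) ≠ 0 →
          (Even T ∧ α i ≤ cntE E T i) ∨ (¬ Even T ∧ β i ≤ cntO E T i) := by
        intro i hi
        by_cases hT : Even T
        · left
          refine ⟨hT, ?_⟩
          by_contra hlt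
          push_neg at hlt
          exact hstep ⟨i, hi, fun _ => hlt, fun h => absurd hT h⟩
        · right
          refine ⟨hT, ?_⟩
          by_contra hlt
          push_neg at hlt
          exact hstep ⟨i, hi, fun h => absurd h hT, fun _ => hlt⟩
      rcases Nat.eq_zero_or_pos T with hT0 | hT0
      · exfalso
        obtain ⟨i0, hα, hb⟩ := h0
        have hb' : bF ε i0 (V T) ≠ 0 := by rw [hT0]; exact hb
        rcases hstuck i0 hb' with ⟨-, h⟩ | ⟨hodd, -⟩
        · rw [hT0] at h
          simp [cntE] at h
          omega
        · rw [hT0] at hodd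
          exact hodd (Even.zero)
      -- the counting argument
      set w := V T with hw
      have hDw : ∑ i, (α i : ℤ) * bF ε i w = ∑ i, (β i : ℤ) * bF ε i w := by
        have := hbal w
        push_cast
        exact_mod_cast congrArg (Nat.cast : ℕ → ℤ) this
      have hiden : (∑ i, (cntE E T i : ℤ) * bF ε i w) - (∑ i, (cntO E T i : ℤ) * bF ε i w)
          = (if V 0 = w then (1:ℤ) else 0) - (-1:ℤ)^T := by
        rw [cnt_weighted E T (fun i => (bF ε i w : ℤ))]
        have : ∀ u ∈ Finset.range T, (-1:ℤ)^u * ((bF ε (E u) w : ℕ) : ℤ)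
            = (-1:ℤ)^u * ((if V u = w then (1:ℤ) else 0) + (if V (u+1) = w then (1:ℤ) else 0)) := by
          intro u hu
          rw [Finset.mem_range] at hu
          congr 1
          rw [hedge u hu]
          rw [Finsupp.add_apply, Finsupp.single_apply, Finsupp.single_apply]
          split_ifs <;> simp
        rw [Finset.sum_congr rfl this, Finset.range_eq_Ico, tele _ 0 T (by omega)]
        rw [if_pos rfl]
        simp
      by_cases hT : Even T
      · -- done : stuck at even time, so V 0 = w
        have hEeq : ∑ i, (cntE E T i : ℤ) * bF ε i w = ∑ i, (α i : ℤ) * bF ε i w := by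
          apply Finset.sum_congr rfl
          intro i _
          by_cases hb : bF ε i w = 0
          · rw [hb]; simp
          · rcases hstuck i hb with ⟨-, hge⟩ | ⟨hodd, -⟩
            · have := hcE i
              have : cntE E T i = α i := by omega
              rw [this]
            · exact absurd hT hodd
        have hOle : ∑ i, (cntO E T i : ℤ) * bF ε i w ≤ ∑ i, (β i : ℤ) * bF ε i w := by
          apply Finset.sum_le_sum
          intro i _
          have := hcO i
          have hble : (cntO E T i : ℤ) ≤ β i := by exact_mod_cast this
          apply mul_le_mul_of_nonneg_right hble (by positivity)
        have hge : (0:ℤ) ≤ (if V 0 = w then (1:ℤ) else 0) - (-1:ℤ)^T := by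
          rw [← hiden, hEeq, hDw]
          omega
        rw [hT.neg_one_pow] at hge
        have hV0 : V 0 = w := by
          by_contra hc
          rw [if_neg hc] at hge
          omega
        exact ⟨T, E, V, hT0, hT, hedge, by rw [hV0], hcE, hcO⟩
      · -- odd stuck time : contradiction
        exfalso
        have hOeq : ∑ i, (cntO E T i : ℤ) * bF ε i w = ∑ i, (β i : ℤ) * bF ε i w := by
          apply Finset.sum_congr rfl
          intro i _
          by_cases hb : bF ε i w = 0
          · rw [hb]; simp
          · rcases hstuck i hb with ⟨heven, -⟩ | ⟨-, hge⟩
            · exact absurd heven hT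
            · have := hcO i
              have : cntO E T i = β i := by omega
              rw [this]
        have hEle : ∑ i, (cntE E T i : ℤ) * bF ε i w ≤ ∑ i, (α i : ℤ) * bF ε i w := by
          apply Finset.sum_le_sum
          intro i _
          have := hcE i
          have hble : (cntE E T i : ℤ) ≤ α i := by exact_mod_cast this
          apply mul_le_mul_of_nonneg_right hble (by positivity)
        have hle : (if V 0 = w then (1:ℤ) else 0) - (-1:ℤ)^T ≤ 0 := by
          rw [← hiden, hOeq, ← hDw]
          omega
        rw [(Nat.not_even_iff_odd.mp hT).neg_one_pow] at hle
        split_ifs at hle <;> omega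

/-- main extraction: from a balanced pair extract a closed alternating periodic walk -/
lemma extraction (α β : Fin m → ℕ)
    (hbal : ∀ v, ∑ i, α i * bF ε i v = ∑ i, β i * bF ε i v)
    {i₀ : Fin m} (hi₀ : α i₀ ≠ 0) :
    ∃ (N : ℕ) (E : ℕ → Fin m) (V : ℕ → Fin n), 0 < N ∧
      (∀ u, E (u + 2*N) = E u) ∧ (∀ u, V (u + 2*N) = V u) ∧
      (∀ u, bF ε (E u) = Finsupp.single (V u) 1 + Finsupp.single (V (u+1)) 1) ∧
      (∀ i, cntE E (2*N) i ≤ α i) ∧ (∀ i, cntO E (2*N) i ≤ β i) := by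
  obtain ⟨a, c, -, hpair⟩ := bF_pair ε i₀
  obtain ⟨T, E, V, hT0, hTeven, hedge, hclose, hcE, hcO⟩ :=
    ext_rec ε α β hbal ((∑ i, (α i + β i)) + 1) 0 (fun _ => i₀) (fun _ => a)
      (by intro u hu; omega)
      (by intro i; simp [cntE])
      (by intro i; simp [cntO])
      ⟨i₀, hi₀, by rw [hpair]; simp [Finsupp.single_apply]⟩
      (by omega)
  obtain ⟨N, hN⟩ := hTeven
  have hT2N : T = 2*N := by omega
  have hN0 : 0 < N := by omega
  have hT2 : 2 ≤ T := by omega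
  have hmod : ∀ u : ℕ, u % T < T := fun u => Nat.mod_lt u hT0
  have hmodid : ∀ u, u < T → u % T = u := fun u hu => Nat.mod_eq_of_lt hu
  refine ⟨N, fun u => E (u % T), fun u => V (u % T), hN0, ?_, ?_, ?_, ?_, ?_⟩
  · intro u
    show E ((u + 2*N) % T) = E (u % T)
    rw [← hT2N, Nat.add_mod_right]
  · intro u
    show V ((u + 2*N) % T) = V (u % T)
    rw [← hT2N, Nat.add_mod_right]
  · intro u
    show bF ε (E (u % T)) = Finsupp.single (V (u % T)) 1 + Finsupp.single (V ((u+1) % T)) 1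
    have hr := hmod u
    have h1 := hedge (u % T) hr
    have h2 : V ((u+1) % T) = V (u % T + 1) := by
      have e1 : (u+1) % T = (u % T + 1) % T := by
        conv_lhs => rw [Nat.add_mod]
        rw [Nat.mod_eq_of_lt (show 1 < T by omega)]
      rcases Nat.lt_or_ge (u % T + 1) T with h | h
      · rw [e1, Nat.mod_eq_of_lt h]
      · have e2 : u % T + 1 = T := by omega
        rw [e1, e2, Nat.mod_self, ← e2]
        rw [e2, hclose]
    rw [h1, h2]
  · intro i
    have hcongr : ∀ u, u < T → (fun u => E (u % T)) u = E u := by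
      intro u hu
      show E (u % T) = E u
      rw [hmodid u hu]
    rw [← hT2N, cntE_congr hcongr]
    exact hcE i
  · intro i
    have hcongr : ∀ u, u < T → (fun u => E (u % T)) u = E u := by
      intro u hu
      show E (u % T) = E u
      rw [hmodid u hu]
    rw [← hT2N, cntO_congr hcongr]
    exact hcO i

end PP
end
noncomputable section
namespace PP
open MvPolynomial Finset

variable {n m : ℕ} (ε : Fin m → Sym2 (Fin n))

lemma natAbs_neg_one_pow (x : ℕ) : ((-1:ℤ)^x).natAbs = 1 := by
  rcases Nat.even_or_odd x with h | h
  · rw [h.neg_one_pow]; rfl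
  · rw [h.neg_one_pow]; rfl

lemma bF_exists_pos (i : Fin m) : ∃ v, bF ε i v ≠ 0 := by
  obtain ⟨a, c, -, hpair⟩ := bF_pair ε i
  exact ⟨a, by rw [hpair]; simp [Finsupp.single_apply]⟩

lemma pair_supp {a c v : Fin n} (h : (Finsupp.single a 1 + Finsupp.single c 1 : Fin n →₀ ℕ) v ≠ 0) :
    v = a ∨ v = c := by
  by_contra hc
  push_neg at hc
  apply h
  simp [Finsupp.single_apply, Ne.symm hc.1, Ne.symm hc.2]

/-- Connectivity forces a crossing edge between two vertex-disjoint edges. -/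
lemma crossing (hinj : Function.Injective ε) (hconn : ConnP ε) {d : Fin n →₀ ℕ}
    {p q : Fin m} (hp : bF ε p ≤ d) (hq : bF ε q ≤ d)
    (hdisj : ∀ v, bF ε p v = 0 ∨ bF ε q v = 0) :
    ∃ (r : Fin m) (a c : Fin n), bF ε r ≤ d ∧ bF ε p a ≠ 0 ∧ bF ε q c ≠ 0 ∧
      bF ε r = Finsupp.single a 1 + Finsupp.single c 1 := by
  have hpq : p ≠ q := by
    intro h
    obtain ⟨v, hv⟩ := bF_exists_pos ε p
    rcases hdisj v with h1 | h1
    · exact hv h1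
    · rw [h] at hv; exact hv h1
  set d' := bF ε p ⊔ bF ε q with hd'
  have hpath := hconn d' p q le_sup_left le_sup_right
  rcases hpath.cases_head with heq | ⟨c1, hadj, -⟩
  · exact absurd heq hpq
  obtain ⟨hne, hle, hwt⟩ := hadj
  have hc1le : bF ε c1 ≤ d' := le_trans le_sup_right hle
  have hc1d : bF ε c1 ≤ d := le_trans hc1le (sup_le hp hq)
  obtain ⟨a', c', -, hpair⟩ := bF_pair ε c1
  have hmem : ∀ x, bF ε c1 x ≠ 0 → bF ε p x ≠ 0 ∨ bF ε q x ≠ 0 := by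
    intro x hx
    by_contra hcon
    push_neg at hcon
    have := hc1le x
    rw [Finsupp.sup_apply] at this
    simp only [hcon.1, hcon.2] at this
    omega
  have ha'pos : bF ε c1 a' ≠ 0 := by rw [hpair]; simp [Finsupp.single_apply]
  have hc'pos : bF ε c1 c' ≠ 0 := by rw [hpair]; simp [Finsupp.single_apply]
  -- rule out: both endpoints in p
  have hnotp : ¬ (bF ε p a' ≠ 0 ∧ bF ε p c' ≠ 0) := by
    rintro ⟨h1, h2⟩
    apply hne
    apply (bF_inj ε hinj)
    symm
    by_cases hac : a' = c'
    · -- loop: bF c1 = 2·δa'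
      subst hac
      have h2a : bF ε c1 a' = 2 := by rw [hpair]; simp [Finsupp.single_apply]
      have hsup := hc1le a'
      rw [Finsupp.sup_apply] at hsup
      have hq0 : bF ε q a' = 0 := by
        rcases hdisj a' with h | h
        · exact absurd h h1
        · exact h
      rw [h2a] at hsup
      have hp2 : 2 ≤ bF ε p a' := by
        rcases le_sup_iff.mp hsup with h | h
        · exact h
        · rw [hq0] at h; omega
      -- wt p = 2 forces bF p = 2 δa' = bF c1
      apply eq_of_le_of_wt_le
      · intro v
        by_cases hv : v = a'
        · rw [hpair]
          have hval : (Finsupp.single a' 1 + Finsupp.single a' 1 : Fin n →₀ ℕ) v = 2 := by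
            rw [hv]; simp [Finsupp.single_apply]
          rw [hval, hv]
          exact hp2
        · rw [hpair]
          have hval : (Finsupp.single a' 1 + Finsupp.single a' 1 : Fin n →₀ ℕ) v = 0 := by
            simp [Finsupp.single_apply, Ne.symm hv]
          rw [hval]
          omega
      · rw [wt_bF, wt_bF]
    · -- distinct endpoints both in supp p: bF c1 ≤ bF p, equal weights
      apply eq_of_le_of_wt_le
      · intro v
        rw [hpair]
        by_cases hv1 : v = a'
        · subst hv1
          have hval : (Finsupp.single v 1 + Finsupp.single c' 1 : Fin n →₀ ℕ) v = 1 := by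
            simp [Finsupp.single_apply, show ¬ c' = v from fun h => hac h.symm]
          rw [hval]
          omega
        · by_cases hv2 : v = c'
          · subst hv2
            have hval : (Finsupp.single a' 1 + Finsupp.single v 1 : Fin n →₀ ℕ) v = 1 := by
              simp [Finsupp.single_apply, show ¬ a' = v from fun h => hv1 h.symm]
            rw [hval]
            omega
          · have hval : (Finsupp.single a' 1 + Finsupp.single c' 1 : Fin n →₀ ℕ) v = 0 := by
              simp [Finsupp.single_apply, show ¬ a' = v from fun h => hv1 h.symm,
                show ¬ c' = v from fun h => hv2 h.symm]
            rw [hval]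
            omega
      · rw [wt_bF, wt_bF]
  -- rule out: both endpoints in q
  have hnotq : ¬ (bF ε q a' ≠ 0 ∧ bF ε q c' ≠ 0) := by
    rintro ⟨h1, h2⟩
    -- then supp c1 disjoint from supp p, so wt (p ⊔ c1) = 4 > 3
    have hdisj2 : ∀ v, bF ε p v = 0 ∨ bF ε c1 v = 0 := by
      intro v
      by_cases hv : bF ε c1 v = 0
      · right; exact hv
      · left
        have hv' : (Finsupp.single a' 1 + Finsupp.single c' 1 : Fin n →₀ ℕ) v ≠ 0 := by
          rw [← hpair]; exact hv
        rcases pair_supp hv' with h | h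
        · subst h; rcases hdisj v with h' | h' 
          · exact h'
          · exact absurd h' h1
        · subst h; rcases hdisj v with h' | h'
          · exact h'
          · exact absurd h' h2
    have hwt4 : wt (bF ε p ⊔ bF ε c1) = 4 := by
      have : ∀ v, (bF ε p ⊔ bF ε c1) v = bF ε p v + bF ε c1 v := by
        intro v
        rw [Finsupp.sup_apply]
        rcases hdisj2 v with h | h <;> rw [h] <;> omega
      unfold wt
      rw [Finset.sum_congr rfl (fun v _ => this v), Finset.sum_add_distrib]
      rw [show (∑ v, bF ε p v) = wt (bF ε p) from rfl, show (∑ v, bF ε c1 v) = wt (bF ε c1) from rfl]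
      rw [wt_bF, wt_bF]
    omega
  rcases hmem a' ha'pos with hA | hA <;> rcases hmem c' hc'pos with hC | hC
  · exact absurd ⟨hA, hC⟩ hnotp
  · exact ⟨c1, a', c', hc1d, hA, hC, hpair⟩
  · exact ⟨c1, c', a', hc1d, hC, hA, by rw [hpair, add_comm]⟩
  · exact absurd ⟨hA, hC⟩ hnotq

/-- weighted count identity, additive version -/
lemma cnt_weighted_add (E : ℕ → Fin m) (T : ℕ) (g : Fin m → ℕ) :
    (∑ i, (cntE E T i + cntO E T i) * g i) = ∑ u ∈ Finset.range T, g (E u) := by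
  calc (∑ i, (cntE E T i + cntO E T i) * g i)
      = ∑ i, ∑ u ∈ Finset.range T,
        ((if Even u ∧ E u = i then 1 else 0) + (if ¬ Even u ∧ E u = i then 1 else 0)) * g i := by
        apply Finset.sum_congr rfl
        intro i _
        rw [cntE_as_sum, cntO_as_sum, ← Finset.sum_mul, ← Finset.sum_add_distrib]
    _ = ∑ u ∈ Finset.range T, ∑ i,
        ((if Even u ∧ E u = i then 1 else 0) + (if ¬ Even u ∧ E u = i then 1 else 0)) * g i :=
        Finset.sum_comm
    _ = ∑ u ∈ Finset.range T, g (E u) := by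
        apply Finset.sum_congr rfl
        intro u _
        rw [Finset.sum_eq_single (E u)]
        · by_cases h : Even u <;> simp [h]
        · intro i _ hir; simp [Ne.symm hir]
        · intro h; exact absurd (Finset.mem_univ (E u)) h

/-- shifting a periodic sum -/
lemma shift_sum (f : ℕ → ℕ) (T : ℕ) (hT : 0 < T) (hper : f T = f 0) :
    ∑ u ∈ Finset.range T, f (u + 1) = ∑ u ∈ Finset.range T, f u := by
  have h1 : ∑ u ∈ Finset.range T, f (u + 1) = ∑ u ∈ Finset.Ico 1 (T + 1), f u := by
    rw [Finset.sum_Ico_eq_sum_range]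
    simp only [Nat.add_sub_cancel]
    apply Finset.sum_congr rfl
    intro u _
    rw [add_comm]
  rw [h1, Finset.sum_Ico_succ_top (by omega), hper]
  rw [Finset.range_eq_Ico, Finset.sum_eq_sum_Ico_succ_bot hT]
  ring
end PP
end
noncomputable section
namespace PP
open MvPolynomial Finset

variable {n m : ℕ} (ε : Fin m → Sym2 (Fin n))

lemma per_mod {A : Type*} (f : ℕ → A) (T : ℕ) (hT : 0 < T) (hper : ∀ u, f (u + T) = f u) :
    ∀ u, f u = f (u % T) := by
  intro u
  induction u using Nat.strong_induction_on with
  | _ u ih =>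
    rcases Nat.lt_or_ge u T with h | h
    · rw [Nat.mod_eq_of_lt h]
    · have e : u = (u - T) + T := by omega
      have h1 : f ((u - T) + T) = f (u - T) := hper _
      rw [← e] at h1
      have h2 : (u - T + T) % T = (u - T) % T := Nat.add_mod_right _ _
      rw [← e] at h2
      rw [h1, h2]
      exact ih _ (by omega)

lemma three_share_parity {a b c : ℕ} (hab : a ≠ b) (hac : a ≠ c) (hbc : b ≠ c) :
    ∃ x y, ((x = a ∨ x = b ∨ x = c) ∧ (y = a ∨ y = b ∨ y = c)) ∧ x < y ∧ Even (y - x) := by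
  by_cases h1 : a % 2 = b % 2
  · rcases Nat.lt_or_ge a b with h | h
    · exact ⟨a, b, ⟨Or.inl rfl, Or.inr (Or.inl rfl)⟩, h, Nat.even_iff.mpr (by omega)⟩
    · exact ⟨b, a, ⟨Or.inr (Or.inl rfl), Or.inl rfl⟩, by omega, Nat.even_iff.mpr (by omega)⟩
  by_cases h2 : a % 2 = c % 2
  · rcases Nat.lt_or_ge a c with h | h
    · exact ⟨a, c, ⟨Or.inl rfl, Or.inr (Or.inr rfl)⟩, h, Nat.even_iff.mpr (by omega)⟩
    · exact ⟨c, a, ⟨Or.inr (Or.inr rfl), Or.inl rfl⟩, by omega, Nat.even_iff.mpr (by omega)⟩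
  · have h3 : b % 2 = c % 2 := by omega
    rcases Nat.lt_or_ge b c with h | h
    · exact ⟨b, c, ⟨Or.inr (Or.inl rfl), Or.inr (Or.inr rfl)⟩, h, Nat.even_iff.mpr (by omega)⟩
    · exact ⟨c, b, ⟨Or.inr (Or.inr rfl), Or.inr (Or.inl rfl)⟩, by omega, Nat.even_iff.mpr (by omega)⟩

theorem lemB (hinj : Function.Injective ε) (hconn : ConnP ε)
    (k : Type*) [Field k] (d : Fin n →₀ ℕ) :
    ∀ (M : ℕ) (z : Fin m → ℤ), (∀ v, Bz ε z v = 0) → (∀ i, z i ≠ 0 → bF ε i ≤ d) →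
    sabs z ≤ M → vz k z ∈ Vd ε k d := by
  intro M
  induction M using Nat.strong_induction_on with
  | _ M ih =>
  intro z hbal hsupp hM
  by_cases hz0 : z = 0
  · subst hz0
    have h0 : vz (m := m) k 0 = 0 := by ext i; simp [vz]
    rw [h0]
    exact Submodule.zero_mem _
  have hα : ∃ i, posP z i ≠ 0 := by
    by_contra hc
    push_neg at hc
    apply hz0
    have hle : ∀ i, z i ≤ 0 := by
      intro i
      have := hc i
      simp only [posP] at this
      omega
    have hsum := sum_eq_zero_of_bal ε hbal
    ext i
    exact (Finset.sum_eq_zero_iff_of_nonpos (fun i _ => hle i)).mp hsum i (Finset.mem_univ i)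
  obtain ⟨i₀, hi₀⟩ := hα
  have hbalN : ∀ v, ∑ i, posP z i * bF ε i v = ∑ i, negP z i * bF ε i v := by
    intro v
    have hBn := Bn_posP_negP ε hbal
    have h2 : Bn ε (posP z) v = Bn ε (negP z) v := by rw [hBn]
    rw [Bn_apply, Bn_apply] at h2
    exact h2
  obtain ⟨N, E, V, hN0, hEper, hVper, hedge, hcE, hcO⟩ := extraction ε (posP z) (negP z) hbalN hi₀
  set zw := SegZ E 0 (2*N) with hzw
  have hzwcnt : ∀ i, zw i = (cntE E (2*N) i : ℤ) - cntO E (2*N) i := segZ_eq_cnt E (2*N)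
  have hzwle : ∀ i, -(negP z i : ℤ) ≤ zw i ∧ zw i ≤ posP z i := by
    intro i
    have h1 := hcE i
    have h2 := hcO i
    rw [hzwcnt i]
    omega
  have hEd : ∀ u, bF ε (E u) ≤ d := by
    intro u
    have hu' : E u = E (u % (2*N)) := per_mod E (2*N) (by omega) hEper u
    set r := u % (2*N) with hrdef
    have hr : r < 2*N := Nat.mod_lt _ (by omega)
    have hpos : 0 < cntE E (2*N) (E r) + cntO E (2*N) (E r) := by
      by_cases hEv : Even r
      · have hmem : r ∈ (Finset.range (2*N)).filter (fun u => Even u ∧ E u = E r) := by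
          rw [Finset.mem_filter, Finset.mem_range]
          exact ⟨hr, hEv, rfl⟩
        have hcard := Finset.card_pos.mpr ⟨r, hmem⟩
        unfold cntE
        omega
      · have hmem : r ∈ (Finset.range (2*N)).filter (fun u => ¬ Even u ∧ E u = E r) := by
          rw [Finset.mem_filter, Finset.mem_range]
          exact ⟨hr, hEv, rfl⟩
        have hcard := Finset.card_pos.mpr ⟨r, hmem⟩
        unfold cntO
        omega
    have hz : z (E r) ≠ 0 := by
      have h1 := hcE (E r)
      have h2 := hcO (E r)
      simp only [posP, negP] at h1 h2
      omega
    rw [hu']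
    exact hsupp _ hz
  have hwsupp : ∀ i, zw i ≠ 0 → bF ε i ≤ d := by
    intro i hi
    obtain ⟨u, -, -, hu⟩ := SegZ_support hi
    rw [← hu]
    exact hEd u
  have hV2N : V (2*N) = V 0 := by
    have h := hVper 0
    rw [Nat.zero_add] at h
    exact h
  have hwbal : ∀ v, Bz ε zw v = 0 := by
    intro v
    have hpow : (-1:ℤ)^(2*N) = (-1:ℤ)^0 :=
      neg_one_pow_even_diff (by omega) (by rw [Nat.sub_zero]; exact even_two_mul N)
    rw [hzw, Bz_SegZ ε E V hedge (by omega), hV2N, hpow]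
    ring
  have hcntdisj : ∀ i, cntE E (2*N) i = 0 ∨ cntO E (2*N) i = 0 := by
    intro i
    have h1 := hcE i
    have h2 := hcO i
    simp only [posP, negP] at h1 h2
    omega
  have hsabszw : sabs zw = 2*N := by
    have habs : ∀ i, (zw i).natAbs = cntE E (2*N) i + cntO E (2*N) i := by
      intro i
      rw [hzwcnt i]
      rcases hcntdisj i with h | h <;> rw [h] <;> omega
    rw [sabs, Finset.sum_congr rfl (fun i _ => habs i), cnt_total E (2*N)]
  by_cases hzwz : zw = z
  case neg =>
    -- proper subwalk: split off
    have hadd : sabs zw + sabs (z - zw) = sabs z := by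
      rw [sabs, sabs, sabs, ← Finset.sum_add_distrib]
      apply Finset.sum_congr rfl
      intro i _
      have := hzwle i
      simp only [posP, negP] at this
      simp only [Pi.sub_apply]
      omega
    have hne0 : sabs (z - zw) ≠ 0 := by
      intro h0
      apply hzwz
      have hall := (Finset.sum_eq_zero_iff).mp h0
      ext i
      have := hall i (Finset.mem_univ i)
      simp only [Pi.sub_apply] at this
      omega
    have hwlt : sabs zw < M := by omega
    have h1 := ih (sabs zw) hwlt zw hwbal hwsupp le_rfl
    have hrestbal : ∀ v, Bz ε (z - zw) v = 0 := by
      intro v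
      rw [Bz_sub, hbal v, hwbal v]
      ring
    have hrestsupp : ∀ i, (z - zw) i ≠ 0 → bF ε i ≤ d := by
      intro i hi
      by_cases hz : z i = 0
      · exfalso
        apply hi
        have := hzwle i
        simp only [posP, negP] at this
        simp only [Pi.sub_apply]
        omega
      · exact hsupp i hz
    have h2 := ih (sabs (z - zw)) (by omega) (z - zw) hrestbal hrestsupp le_rfl
    have hsplit : vz k z = vz k zw + vz k (z - zw) := by
      ext i
      simp only [vz, Pi.add_apply, Pi.sub_apply]
      push_cast
      ring
    rw [hsplit]
    exact Submodule.add_mem _ h1 h2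
  case pos =>
    -- z is exactly the walk vector
    have hexact : ∀ i, (cntE E (2*N) i : ℤ) = posP z i ∧ (cntO E (2*N) i : ℤ) = negP z i := by
      intro i
      have h1 := hcE i
      have h2 := hcO i
      have h3 : zw i = z i := by rw [hzwz]
      rw [hzwcnt i] at h3
      simp only [posP, negP] at h1 h2 ⊢
      omega
    have hsabsz : sabs z = 2*N := by rw [← hzwz, hsabszw]
    by_cases hBle : Bn ε (posP z) ≤ d
    · exact vz_mem_Vd_of_le ε k d hbal hBle
    have hv : ∃ v, d v < Bn ε (posP z) v := by
      by_contra hc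
      push_neg at hc
      exact hBle fun v => hc v
    obtain ⟨v, hdv⟩ := hv
    -- the z-as-segment identities
    have hzseg : ∀ c, SegZ E c (c + 2*N) = z := by
      intro c
      rw [SegZ_period E N hEper c, ← hzw, hzwz]
    -- the finishing move
    have hfin : ∀ η₁ η₂ : Fin m → ℤ, η₁ + η₂ = z →
        (∀ v', Bz ε η₁ v' = 0) →
        (∀ i, η₁ i ≠ 0 → bF ε i ≤ d) → (∀ i, η₂ i ≠ 0 → bF ε i ≤ d) →
        sabs η₁ ≤ 2*N - 1 → sabs η₂ ≤ 2*N - 1 → vz k z ∈ Vd ε k d := by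
      intro η₁ η₂ hsum hb1 hs1 hs2 hn1 hn2
      have hb2 : ∀ v', Bz ε η₂ v' = 0 := by
        intro v'
        have hadd' := Bz_add ε η₁ η₂ v'
        rw [hsum, hbal v', hb1 v'] at hadd'
        omega
      obtain ⟨w1, hw1⟩ := sabs_even ε hb1
      obtain ⟨w2, hw2⟩ := sabs_even ε hb2
      have hlt1 : sabs η₁ < M := by omega
      have hlt2 : sabs η₂ < M := by omega
      have m1 := ih (sabs η₁) hlt1 η₁ hb1 hs1 le_rfl
      have m2 := ih (sabs η₂) hlt2 η₂ hb2 hs2 le_rfl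
      have hzsum : vz k z = vz k η₁ + vz k η₂ := by
        rw [← hsum, vz_add]
      rw [hzsum]
      exact Submodule.add_mem _ m1 m2
    -- occurrence counting
    set occ := (Finset.range (2*N)).filter (fun u => V u = v) with hocc
    have hocc_card : occ.card = Bn ε (posP z) v := by
      have h1 : ∑ u ∈ Finset.range (2*N), bF ε (E u) v = 2 * Bn ε (posP z) v := by
        rw [← cnt_weighted_add E (2*N) (fun i => bF ε i v)]
        have hco : ∀ i : Fin m, (cntE E (2*N) i + cntO E (2*N) i) * bF ε i v
            = posP z i * bF ε i v + negP z i * bF ε i v := by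
          intro i
          have := hexact i
          have h4 : cntE E (2*N) i = posP z i ∧ cntO E (2*N) i = negP z i := by omega
          rw [h4.1, h4.2]
          ring
        rw [Finset.sum_congr rfl (fun i _ => hco i), Finset.sum_add_distrib]
        rw [← Bn_apply, ← Bn_apply, Bn_posP_negP ε hbal]
        ring
      have h2 : ∑ u ∈ Finset.range (2*N), bF ε (E u) v = 2 * occ.card := by
        have hval : ∀ u, bF ε (E u) v
            = (if V u = v then 1 else 0) + (if V (u+1) = v then 1 else 0) := by
          intro u
          rw [hedge u, Finsupp.add_apply, Finsupp.single_apply, Finsupp.single_apply]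
        rw [Finset.sum_congr rfl (fun u _ => hval u), Finset.sum_add_distrib]
        have hshift : ∑ u ∈ Finset.range (2*N), (if V (u+1) = v then 1 else 0)
            = ∑ u ∈ Finset.range (2*N), (if V u = v then 1 else 0) := by
          apply shift_sum (fun u => if V u = v then 1 else 0) (2*N) (by omega)
          rw [hV2N]
        rw [hshift, hocc, Finset.card_filter]
        omega
      omega
    have hocc_mem : ∀ u ∈ occ, u < 2*N ∧ V u = v := by
      intro u hu
      rw [hocc, Finset.mem_filter, Finset.mem_range] at hu
      exact hu
    have hdv1 : 1 ≤ d v := by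
      have h2 : 2 ≤ Bn ε (posP z) v ∨ 1 ≤ Bn ε (posP z) v := by omega
      have hex : ∃ u ∈ occ, True := by
        have : 0 < occ.card := by omega
        obtain ⟨u, hu⟩ := Finset.card_pos.mp this
        exact ⟨u, hu, trivial⟩
      obtain ⟨u, hu, -⟩ := hex
      obtain ⟨hult, hVu⟩ := hocc_mem u hu
      have hble := hEd u
      have : 1 ≤ bF ε (E u) v := by
        rw [hedge u, Finsupp.add_apply, Finsupp.single_apply, Finsupp.single_apply, hVu]
        simp
      have := hble v
      omega
    -- CASE A: two occurrences with even gap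
    by_cases hA : ∃ s ∈ occ, ∃ t ∈ occ, s < t ∧ Even (t - s)
    · obtain ⟨s, hs, t, ht, hst, hev⟩ := hA
      obtain ⟨hslt, hVs⟩ := hocc_mem s hs
      obtain ⟨htlt, hVt⟩ := hocc_mem t ht
      apply hfin (SegZ E s t) (SegZ E t (s + 2*N))
      · rw [SegZ_consec E (by omega) (by omega)]
        exact hzseg s
      · intro v'
        rw [Bz_SegZ ε E V hedge (by omega), hVs, hVt,
          neg_one_pow_even_diff (by omega) hev]
        ring
      · intro i hi
        obtain ⟨u, -, -, hu⟩ := SegZ_support hi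
        rw [← hu]; exact hEd u
      · intro i hi
        obtain ⟨u, -, -, hu⟩ := SegZ_support hi
        rw [← hu]; exact hEd u
      · have := sabs_SegZ_le E s t
        omega
      · have := sabs_SegZ_le E t (s + 2*N)
        omega
    -- CASE B : exactly two occurrences, odd gap
    · have hcard2 : occ.card = 2 := by
        have hge2 : 2 ≤ occ.card := by omega
        by_contra hne
        have h3 : 2 < occ.card := by omega
        obtain ⟨a, ha, b, hb, c, hc, hab, hac, hbc⟩ := Finset.two_lt_card_iff.mp h3
        obtain ⟨x, y, hxy, hlt, hev⟩ := three_share_parity hab hac hbc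
        apply hA
        refine ⟨x, ?_, y, ?_, hlt, hev⟩
        · rcases hxy.1 with h | h | h <;> subst h <;> assumption
        · rcases hxy.2 with h | h | h <;> subst h <;> assumption
      obtain ⟨j0, l0, hjl0, hocc2⟩ := Finset.card_eq_two.mp hcard2
      -- order them
      obtain ⟨j, l, hjll, hoccjl⟩ : ∃ j l : ℕ, j < l ∧ occ = {j, l} := by
        rcases Nat.lt_or_ge j0 l0 with h | h
        · exact ⟨j0, l0, h, hocc2⟩
        · refine ⟨l0, j0, by omega, by rw [hocc2, Finset.pair_comm]⟩
      have hjmem : j ∈ occ := by rw [hoccjl]; simp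
      have hlmem : l ∈ occ := by rw [hoccjl]; simp
      obtain ⟨hjlt, hVj⟩ := hocc_mem j hjmem
      obtain ⟨hllt, hVl⟩ := hocc_mem l hlmem
      have hoddg : ¬ Even (l - j) := by
        intro hev
        exact hA ⟨j, hjmem, l, hlmem, hjll, hev⟩
      have hDv2 : Bn ε (posP z) v = 2 := by omega
      have hdv' : d v = 1 := by omega
      -- g ≥ 3 and h ≥ 3
      have hVjsucc : ∀ u, u < 2*N → V u = v → V (u+1) = v → False := by
        intro u hult hVu hVu1
        have hb2 : bF ε (E u) v = 2 := by
          rw [hedge u, Finsupp.add_apply, Finsupp.single_apply, Finsupp.single_apply,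
            hVu, hVu1]
          simp
        have := hEd u v
        omega
      have hg3 : j + 3 ≤ l := by
        by_contra hc
        have : l = j + 1 ∨ l = j + 2 := by omega
        rcases this with h | h
        · apply hVjsucc j (by omega) hVj
          rw [← h]
          exact hVl
        · apply hoddg
          rw [h]
          exact Nat.even_iff.mpr (by omega)
      have hh3 : l + 3 ≤ j + 2*N := by
        by_contra hc
        have hor : j + 2*N = l + 1 ∨ j + 2*N = l + 2 := by omega
        rcases hor with h | h
        · apply hVjsucc l (by omega) hVl
          have h1 : V (l+1) = V j := by rw [← h, hVper j]
          rw [h1, hVj]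
        · apply hoddg
          have h2 : l - j = 2*N - 2 := by omega
          rw [h2]
          exact ⟨N-1, by omega⟩
      -- supports of segments
      have hsegsupp : ∀ (s t : ℕ) (i : Fin m), SegZ E s t i ≠ 0 → bF ε i ≤ d := by
        intro s t i hi
        obtain ⟨u, -, -, hu⟩ := SegZ_support hi
        rw [← hu]; exact hEd u
      by_cases hB1 : ∃ s t : ℕ, (s = j+1 ∨ s = j+2) ∧ (t = l+1 ∨ t = l+2) ∧ V s = V t
      · -- shared vertex between the two interiors
        obtain ⟨s, t, hsj, htl, hVst⟩ := hB1
        have hsr : j + 1 ≤ s ∧ s ≤ j + 2 := by rcases hsj with h | h <;> omega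
        have htr : l + 1 ≤ t ∧ t ≤ l + 2 := by rcases htl with h | h <;> omega
        by_cases hev : Even (t - s)
        · -- direct split
          apply hfin (SegZ E s t) (SegZ E t (s + 2*N))
          · rw [SegZ_consec E (by omega) (by omega)]
            exact hzseg s
          · intro v'
            rw [Bz_SegZ ε E V hedge (by omega : s ≤ t), hVst,
              neg_one_pow_even_diff (by omega) hev]
            ring
          · exact hsegsupp s t
          · exact hsegsupp t (s + 2*N)
          · have := sabs_SegZ_le E s t
            omega
          · have := sabs_SegZ_le E t (s + 2*N)
            omega
        · -- through-the-base split, no extra edge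
          apply hfin (SegZ E j s + SegZ E l t) (SegZ E s l + SegZ E t (j + 2*N))
          · have e1 : SegZ E j s + SegZ E s l = SegZ E j l :=
              SegZ_consec E (by omega) (by omega)
            have e2 : SegZ E l t + SegZ E t (j + 2*N) = SegZ E l (j + 2*N) :=
              SegZ_consec E (by omega) (by omega)
            have e3 : SegZ E j l + SegZ E l (j + 2*N) = SegZ E j (j + 2*N) :=
              SegZ_consec E (by omega) (by omega)
            have e4 := hzseg j
            ext i
            have c1 := congrFun e1 i
            have c2 := congrFun e2 i
            have c3 := congrFun e3 i
            have c4 := congrFun e4 i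
            simp only [Pi.add_apply] at *
            omega
          · intro v'
            rw [Bz_add ε _ _ v', Bz_SegZ ε E V hedge (by omega : j ≤ s),
              Bz_SegZ ε E V hedge (by omega : l ≤ t), hVj, hVl, hVst,
              neg_one_pow_odd_diff (by omega : j ≤ l) hoddg,
              neg_one_pow_odd_diff (by omega : s ≤ t) hev]
            ring
          · intro i hi
            simp only [Pi.add_apply] at hi
            by_cases h1 : SegZ E j s i = 0
            · exact hsegsupp l t i (by omega)
            · exact hsegsupp j s i h1
          · intro i hi
            simp only [Pi.add_apply] at hi
            by_cases h1 : SegZ E s l i = 0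
            · exact hsegsupp t (j + 2*N) i (by omega)
            · exact hsegsupp s l i h1
          · have b1 := sabs_SegZ_le E j s
            have b2 := sabs_SegZ_le E l t
            have b3 := sabs_add_le (SegZ E j s) (SegZ E l t)
            omega
          · have b1 := sabs_SegZ_le E s l
            have b2 := sabs_SegZ_le E t (j + 2*N)
            have b3 := sabs_add_le (SegZ E s l) (SegZ E t (j + 2*N))
            omega
      · -- interiors disjoint: get a crossing edge
        have hbp := hedge (j+1)
        have hbq := hedge (l+1)
        have hdisjpq : ∀ v', bF ε (E (j+1)) v' = 0 ∨ bF ε (E (l+1)) v' = 0 := by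
          intro v'
          by_contra hcon
          push_neg at hcon
          have h1 : v' = V (j+1) ∨ v' = V (j+2) := by
            apply pair_supp (a := V (j+1)) (c := V (j+2))
            rw [show V (j+2) = V ((j+1)+1) by norm_num, ← hbp]
            exact hcon.1
          have h2 : v' = V (l+1) ∨ v' = V (l+2) := by
            apply pair_supp (a := V (l+1)) (c := V (l+2))
            rw [show V (l+2) = V ((l+1)+1) by norm_num, ← hbq]
            exact hcon.2
          apply hB1
          rcases h1 with h1 | h1 <;> rcases h2 with h2 | h2
          · exact ⟨j+1, l+1, Or.inl rfl, Or.inl rfl, by rw [← h1, ← h2]⟩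
          · exact ⟨j+1, l+2, Or.inl rfl, Or.inr rfl, by rw [← h1, ← h2]⟩
          · exact ⟨j+2, l+1, Or.inr rfl, Or.inl rfl, by rw [← h1, ← h2]⟩
          · exact ⟨j+2, l+2, Or.inr rfl, Or.inr rfl, by rw [← h1, ← h2]⟩
        obtain ⟨r, a, c, hrd, hpa, hqc, hbr⟩ :=
          crossing ε hinj hconn (hEd (j+1)) (hEd (l+1)) hdisjpq
        have hamem : a = V (j+1) ∨ a = V (j+2) := by
          apply pair_supp (a := V (j+1)) (c := V (j+2))
          rw [show V (j+2) = V ((j+1)+1) by norm_num, ← hbp]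
          exact hpa
        have hcmem : c = V (l+1) ∨ c = V (l+2) := by
          apply pair_supp (a := V (l+1)) (c := V (l+2))
          rw [show V (l+2) = V ((l+1)+1) by norm_num, ← hbq]
          exact hqc
        have hbrv : ∀ v', ((bF ε r v' : ℕ) : ℤ)
            = (if a = v' then 1 else 0) + (if c = v' then 1 else 0) := by
          intro v'
          rw [hbr, Finsupp.add_apply, Finsupp.single_apply, Finsupp.single_apply]
          split_ifs <;> simp
        by_cases hoddc : ∃ s t : ℕ,
            ((s = j+1 ∨ s = j+2) ∧ V s = a) ∧ ((t = l+1 ∨ t = l+2) ∧ V t = c) ∧ ¬ Even (t - s)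
        · -- crossing with odd distance: segment split with the crossing edge
          obtain ⟨s, t, ⟨hsj, hVs⟩, ⟨htl, hVt⟩, hodd'⟩ := hoddc
          have hsr : j + 1 ≤ s ∧ s ≤ j + 2 := by rcases hsj with h | h <;> omega
          have htr : l + 1 ≤ t ∧ t ≤ l + 2 := by rcases htl with h | h <;> omega
          apply hfin (SegZ E s t + ((-1:ℤ)^(s+1)) • ezv r)
            (SegZ E t (s + 2*N) + ((-1:ℤ)^s) • ezv r)
          · have e1 : SegZ E s t + SegZ E t (s + 2*N) = SegZ E s (s + 2*N) :=
              SegZ_consec E (by omega) (by omega)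
            have e4 := hzseg s
            ext i
            have c1 := congrFun e1 i
            have c4 := congrFun e4 i
            simp only [Pi.add_apply, Pi.smul_apply, smul_eq_mul] at *
            rw [pow_succ]
            linear_combination c1 + c4
          · intro v'
            rw [Bz_add ε _ _ v', Bz_SegZ ε E V hedge (by omega : s ≤ t),
              Bz_smul_ezv ε _ r v', hVs, hVt, hbrv v',
              neg_one_pow_odd_diff (by omega : s ≤ t) hodd', pow_succ]
            ring
          · intro i hi
            by_cases hir : i = r
            · subst hir; exact hrd
            · apply hsegsupp s t i
              simp only [Pi.add_apply, Pi.smul_apply, ezv, smul_eq_mul, hir] at hi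
              simpa using hi
          · intro i hi
            by_cases hir : i = r
            · subst hir; exact hrd
            · apply hsegsupp t (s + 2*N) i
              simp only [Pi.add_apply, Pi.smul_apply, ezv, smul_eq_mul, hir] at hi
              simpa using hi
          · have b1 := sabs_SegZ_le E s t
            have b2 := sabs_add_le (SegZ E s t) (((-1:ℤ)^(s+1)) • ezv r)
            have b3 := sabs_smul_ezv ((-1:ℤ)^(s+1)) r
            rw [natAbs_neg_one_pow] at b3
            omega
          · have b1 := sabs_SegZ_le E t (s + 2*N)
            have b2 := sabs_add_le (SegZ E t (s + 2*N)) (((-1:ℤ)^s) • ezv r)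
            have b3 := sabs_smul_ezv ((-1:ℤ)^s) r
            rw [natAbs_neg_one_pow] at b3
            omega
        · -- crossing with even distance: through-the-base split using the crossing edge
          set s := if V (j+1) = a then j+1 else j+2 with hs
          set t := if V (l+1) = c then l+1 else l+2 with ht
          have hVs : V s = a := by
            rw [hs]
            split_ifs with h
            · exact h
            · rcases hamem with h1 | h1
              · exact absurd h1.symm h
              · exact h1.symm
          have hVt : V t = c := by
            rw [ht]
            split_ifs with h
            · exact h
            · rcases hcmem with h1 | h1
              · exact absurd h1.symm h
              · exact h1.symm
          have hsr : j + 1 ≤ s ∧ s ≤ j + 2 := by rw [hs]; split_ifs <;> omega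
          have htr : l + 1 ≤ t ∧ t ≤ l + 2 := by rw [ht]; split_ifs <;> omega
          have hsj' : s = j+1 ∨ s = j+2 := by rw [hs]; split_ifs <;> simp
          have htl' : t = l+1 ∨ t = l+2 := by rw [ht]; split_ifs <;> simp
          have hev : Even (t - s) := by
            by_contra hno
            exact hoddc ⟨s, t, ⟨hsj', hVs⟩, ⟨htl', hVt⟩, hno⟩
          apply hfin (SegZ E j s + SegZ E l t + ((-1:ℤ)^s) • ezv r)
            (SegZ E s l + SegZ E t (j + 2*N) + ((-1:ℤ)^(s+1)) • ezv r)
          · have e1 : SegZ E j s + SegZ E s l = SegZ E j l :=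
              SegZ_consec E (by omega) (by omega)
            have e2 : SegZ E l t + SegZ E t (j + 2*N) = SegZ E l (j + 2*N) :=
              SegZ_consec E (by omega) (by omega)
            have e3 : SegZ E j l + SegZ E l (j + 2*N) = SegZ E j (j + 2*N) :=
              SegZ_consec E (by omega) (by omega)
            have e4 := hzseg j
            ext i
            have c1 := congrFun e1 i
            have c2 := congrFun e2 i
            have c3 := congrFun e3 i
            have c4 := congrFun e4 i
            simp only [Pi.add_apply, Pi.smul_apply, smul_eq_mul] at *
            rw [pow_succ]
            linear_combination c1 + c2 + c3 + c4
          · intro v'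
            rw [Bz_add ε _ _ v', Bz_add ε _ _ v', Bz_SegZ ε E V hedge (by omega : j ≤ s),
              Bz_SegZ ε E V hedge (by omega : l ≤ t), Bz_smul_ezv ε _ r v',
              hVj, hVl, hVs, hVt, hbrv v',
              neg_one_pow_odd_diff (by omega : j ≤ l) hoddg,
              neg_one_pow_even_diff (by omega : s ≤ t) hev]
            ring
          · intro i hi
            by_cases hir : i = r
            · subst hir; exact hrd
            · simp only [Pi.add_apply, Pi.smul_apply, ezv, smul_eq_mul, hir] at hi
              by_cases h1 : SegZ E j s i = 0
              · apply hsegsupp l t i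
                intro h2
                apply hi
                rw [h1, h2]
                simp
              · exact hsegsupp j s i h1
          · intro i hi
            by_cases hir : i = r
            · subst hir; exact hrd
            · simp only [Pi.add_apply, Pi.smul_apply, ezv, smul_eq_mul, hir] at hi
              by_cases h1 : SegZ E s l i = 0
              · apply hsegsupp t (j + 2*N) i
                intro h2
                apply hi
                rw [h1, h2]
                simp
              · exact hsegsupp s l i h1
          · have b1 := sabs_SegZ_le E j s
            have b2 := sabs_SegZ_le E l t
            have b3 := sabs_add_le (SegZ E j s) (SegZ E l t)
            have b4 := sabs_add_le (SegZ E j s + SegZ E l t) (((-1:ℤ)^s) • ezv r)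
            have b5 := sabs_smul_ezv ((-1:ℤ)^s) r
            rw [natAbs_neg_one_pow] at b5
            omega
          · have b1 := sabs_SegZ_le E s l
            have b2 := sabs_SegZ_le E t (j + 2*N)
            have b3 := sabs_add_le (SegZ E s l) (SegZ E t (j + 2*N))
            have b4 := sabs_add_le (SegZ E s l + SegZ E t (j + 2*N)) (((-1:ℤ)^(s+1)) • ezv r)
            have b5 := sabs_smul_ezv ((-1:ℤ)^(s+1)) r
            rw [natAbs_neg_one_pow] at b5
            omega
end PP
end
noncomputable section
namespace PP
open MvPolynomial Finset

variable {n m : ℕ} (ε : Fin m → Sym2 (Fin n))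

/-- descent: a nonzero k-kernel vector supported in s yields a nonzero ℤ-kernel vector
supported in s -/
lemma int_kernel_descent (k : Type*) [Field k] [CharZero k]
    (γ : Fin m → k) (hγ : γ ≠ 0) (hker : ∀ v, ∑ i, γ i * (bF ε i v : k) = 0) :
    ∃ η : Fin m → ℤ, η ≠ 0 ∧ (∀ i, η i ≠ 0 → γ i ≠ 0) ∧ (∀ v, Bz ε η v = 0) := by
  classical
  set s : Finset (Fin m) := Finset.univ.filter (fun i => γ i ≠ 0) with hs
  have hsne : s.Nonempty := by
    by_contra hc
    apply hγ
    funext i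
    show γ i = 0
    by_contra hzi
    exact hc ⟨i, by rw [hs]; simp [hzi]⟩
  set Mq : Matrix (Fin n) {i // i ∈ s} ℚ := fun v i => (bF ε i.1 v : ℚ) with hMq
  have hkerq : ∃ y : {i // i ∈ s} → ℚ, y ≠ 0 ∧ ∀ v, ∑ i, Mq v i * y i = 0 := by
    by_contra hc
    push_neg at hc
    have hinj : LinearMap.ker (Matrix.toLin' Mq) = ⊥ := by
      rw [LinearMap.ker_eq_bot']
      intro y hy
      by_contra hyne
      obtain ⟨v, hv⟩ : ∃ v, Matrix.mulVec Mq y v ≠ 0 := by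
        apply hc y hyne
      apply hv
      have := congrFun hy v
      rwa [Matrix.toLin'_apply] at this
    obtain ⟨g, hg⟩ := LinearMap.exists_leftInverse_of_injective _ hinj
    set G := LinearMap.toMatrix' g with hG
    have hGM : G * Mq = 1 := by
      have h1 := congrArg LinearMap.toMatrix' hg
      rwa [LinearMap.toMatrix'_comp, LinearMap.toMatrix'_toLin', LinearMap.toMatrix'_id] at h1
    set φ := (Rat.castHom k) with hφ
    have hGMk : (G.map φ) * (Mq.map φ) = 1 := by
      rw [← Matrix.map_mul, hGM]
      exact Matrix.map_one _ φ.map_zero φ.map_one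
    set γs : {i // i ∈ s} → k := fun i => γ i.1 with hγs
    have hγsker : Matrix.mulVec (Mq.map φ) γs = 0 := by
      funext v
      show ∑ i, (Mq.map φ) v i * γs i = 0
      have h1 : ∑ i : {i // i ∈ s}, (Mq.map φ) v i * γs i
          = ∑ i ∈ s, γ i * (bF ε i v : k) := by
        rw [← Finset.sum_coe_sort s (fun i => γ i * (bF ε i v : k))]
        apply Finset.sum_congr rfl
        intro i _
        simp only [Matrix.map_apply, hMq, hγs]
        change φ ((bF ε i.1 v : ℚ)) * γ i = γ i * (bF ε i.1 v : k)
        rw [map_natCast]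
        ring
      rw [h1]
      rw [Finset.sum_subset (Finset.subset_univ s)]
      · exact hker v
      · intro i _ hi
        have : γ i = 0 := by
          by_contra hne
          exact hi (by rw [hs]; simp [hne])
        rw [this, zero_mul]
    have hγs0 : γs = 0 := by
      calc γs = Matrix.mulVec 1 γs := by rw [Matrix.one_mulVec]
        _ = Matrix.mulVec ((G.map φ) * (Mq.map φ)) γs := by rw [hGMk]
        _ = Matrix.mulVec (G.map φ) (Matrix.mulVec (Mq.map φ) γs) := by
            rw [← Matrix.mulVec_mulVec]
        _ = 0 := by rw [hγsker, Matrix.mulVec_zero]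
    obtain ⟨i, hi⟩ := hsne
    have : γ i ≠ 0 := by
      have := Finset.mem_filter.mp (by rwa [← hs])
      exact this.2
    exact this (congrFun hγs0 ⟨i, hi⟩)
  obtain ⟨y, hyne, hyker⟩ := hkerq
  -- clear denominators
  set D : ℕ := ∏ i : {i // i ∈ s}, (y i).den with hD
  have hDpos : 0 < D :=
    Finset.prod_pos (fun i _ => Nat.pos_of_ne_zero (y i).den_nz)
  have hdvd : ∀ i : {i // i ∈ s}, (y i).den ∣ D := by
    intro i
    exact Finset.dvd_prod_of_mem _ (Finset.mem_univ i)
  set η0 : {i // i ∈ s} → ℤ := fun i => (y i).num * (D / (y i).den : ℕ) with hη0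
  have hη0cast : ∀ i, ((η0 i : ℤ) : ℚ) = (D : ℚ) * y i := by
    intro i
    have hdnz : (y i).den ≠ 0 := (y i).den_nz
    have hden : ((y i).den : ℚ) ≠ 0 := Nat.cast_ne_zero.mpr hdnz
    have hsplit : (D : ℚ) = ((y i).den : ℚ) * ((D / (y i).den : ℕ) : ℚ) := by
      rw [← Nat.cast_mul]
      congr 1
      exact (Nat.mul_div_cancel' (hdvd i)).symm
    have hnum : ((y i).num : ℚ) = y i * ((y i).den : ℚ) := by
      have h := Rat.num_div_den (y i)
      rw [div_eq_iff hden] at h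
      exact h
    have hcast2 : (((D / (y i).den : ℕ) : ℤ) : ℚ) = ((D / (y i).den : ℕ) : ℚ) :=
      Int.cast_natCast _
    calc ((η0 i : ℤ) : ℚ) = ((y i).num : ℚ) * ((D / (y i).den : ℕ) : ℚ) := by
          rw [hη0, Int.cast_mul, hcast2]
      _ = y i * (((y i).den : ℚ) * ((D / (y i).den : ℕ) : ℚ)) := by rw [hnum]; ring
      _ = (D : ℚ) * y i := by rw [← hsplit]; ring
  set η : Fin m → ℤ := fun i => if h : i ∈ s then η0 ⟨i, h⟩ else 0 with hη
  refine ⟨η, ?_, ?_, ?_⟩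
  · -- nonzero
    intro hzero
    apply hyne
    funext i
    have h1 : η i.1 = 0 := congrFun hzero i.1
    rw [hη] at h1
    simp only [dif_pos i.2] at h1
    have h2 : ((η0 i : ℤ) : ℚ) = 0 := by
      have : η0 ⟨i.1, i.2⟩ = η0 i := by congr
      rw [← this, h1]
      simp
    rw [hη0cast] at h2
    have hD0 : (D : ℚ) ≠ 0 := by positivity
    have := mul_eq_zero.mp h2
    rcases this with h | h
    · exact absurd h hD0
    · exact h
  · -- support
    intro i hi
    rw [hη] at hi
    by_cases h : i ∈ s
    · have h2 : i ∈ Finset.univ.filter (fun j => γ j ≠ 0) := by rw [← hs]; exact h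
      exact (Finset.mem_filter.mp h2).2
    · simp [h] at hi
  · -- kernel
    intro v
    have hq : ((Bz ε η v : ℤ) : ℚ) = 0 := by
      have h1 : ((Bz ε η v : ℤ) : ℚ) = ∑ i, (η i : ℚ) * (bF ε i v : ℚ) := by
        rw [Bz]
        push_cast
        rfl
      rw [h1]
      have h2 : ∑ i, (η i : ℚ) * (bF ε i v : ℚ)
          = ∑ i ∈ s, (η i : ℚ) * (bF ε i v : ℚ) := by
        symm
        apply Finset.sum_subset (Finset.subset_univ s)
        intro i _ hi
        rw [hη]
        simp [hi]
      rw [h2, ← Finset.sum_coe_sort s (fun i => (η i : ℚ) * (bF ε i v : ℚ))]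
      have h3 : ∀ i : {i // i ∈ s}, (η i.1 : ℚ) * (bF ε i.1 v : ℚ)
          = (D : ℚ) * (Mq v i * y i) := by
        intro i
        rw [hη]
        simp only [dif_pos i.2]
        have : (⟨i.1, i.2⟩ : {i // i ∈ s}) = i := by congr
        rw [this, hη0cast]
        rw [hMq]
        ring
      rw [Finset.sum_congr rfl (fun i _ => h3 i), ← Finset.mul_sum, hyker v, mul_zero]
    exact_mod_cast hq

open scoped Classical in
/-- the core combinatorial theorem -/
theorem core (hinj : Function.Injective ε) (hconn : ConnP ε)
    (k : Type*) [Field k] [CharZero k] (d : Fin n →₀ ℕ) :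
    ∀ (t : ℕ) (γ : Fin m → k), (Finset.univ.filter (fun i => γ i ≠ 0)).card ≤ t →
    (∀ v, ∑ i, γ i * (bF ε i v : k) = 0) → (∀ i, γ i ≠ 0 → bF ε i ≤ d) →
    γ ∈ Vd ε k d := by
  classical
  intro t
  induction t with
  | zero =>
    intro γ hcard hker hsupp
    have hγ0 : γ = 0 := by
      funext i
      show γ i = 0
      by_contra hne
      have : i ∈ Finset.univ.filter (fun i => γ i ≠ 0) := by simp [hne]
      have := Finset.card_pos.mpr ⟨i, this⟩
      omega
    rw [hγ0]
    exact Submodule.zero_mem _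
  | succ t ih =>
    intro γ hcard hker hsupp
    by_cases hγ0 : γ = 0
    · rw [hγ0]; exact Submodule.zero_mem _
    obtain ⟨η, hηne, hηsupp, hηker⟩ := int_kernel_descent ε k γ hγ0 hker
    have hηmem : vz k η ∈ Vd ε k d := by
      apply lemB ε hinj hconn k d (sabs η) η hηker _ le_rfl
      intro i hi
      exact hsupp i (hηsupp i hi)
    obtain ⟨i1, hi1⟩ : ∃ i, η i ≠ 0 := by
      by_contra hc
      apply hηne
      funext i
      by_contra h2
      exact hc ⟨i, h2⟩
    have hηk : (η i1 : k) ≠ 0 := by exact_mod_cast hi1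
    set c : k := γ i1 / (η i1 : k) with hc
    set γ' : Fin m → k := γ - c • vz k η with hγ'
    have hγ'i1 : γ' i1 = 0 := by
      rw [hγ']
      simp only [Pi.sub_apply, Pi.smul_apply, smul_eq_mul, vz, hc]
      field_simp
      ring
    have hγ'supp : ∀ i, γ' i ≠ 0 → γ i ≠ 0 := by
      intro i hi
      by_contra hzi
      apply hi
      rw [hγ']
      simp only [Pi.sub_apply, Pi.smul_apply, smul_eq_mul, vz]
      have hηi : η i = 0 := by
        by_contra hne
        exact (hηsupp i hne) hzi
      rw [hzi, hηi]
      simp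
    have hγ'card : (Finset.univ.filter (fun i => γ' i ≠ 0)).card ≤ t := by
      have hsub : Finset.univ.filter (fun i => γ' i ≠ 0) ⊆
          (Finset.univ.filter (fun i => γ i ≠ 0)).erase i1 := by
        intro i hi
        rw [Finset.mem_filter] at hi
        rw [Finset.mem_erase, Finset.mem_filter]
        refine ⟨?_, Finset.mem_univ i, hγ'supp i hi.2⟩
        intro hii
        subst hii
        exact hi.2 hγ'i1
      have h1 := Finset.card_le_card hsub
      have h2 : i1 ∈ Finset.univ.filter (fun i => γ i ≠ 0) := by
        simp only [Finset.mem_filter]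
        exact ⟨Finset.mem_univ i1, hηsupp i1 hi1⟩
      have h3 := Finset.card_erase_of_mem h2
      omega
    have hγ'ker : ∀ v, ∑ i, γ' i * (bF ε i v : k) = 0 := by
      intro v
      have hηkerk : ∑ i, (η i : k) * (bF ε i v : k) = 0 := by
        have := hηker v
        rw [Bz] at this
        have hcast : ((∑ i, η i * (bF ε i v : ℤ) : ℤ) : k) = 0 := by rw [this]; simp
        push_cast at hcast
        convert hcast using 2
      calc ∑ i, γ' i * (bF ε i v : k)
          = (∑ i, γ i * (bF ε i v : k)) - c * ∑ i, (η i : k) * (bF ε i v : k) := by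
            rw [hγ', Finset.mul_sum, ← Finset.sum_sub_distrib]
            apply Finset.sum_congr rfl
            intro i _
            simp only [Pi.sub_apply, Pi.smul_apply, smul_eq_mul, vz]
            ring
        _ = 0 := by rw [hker v, hηkerk]; ring
    have hγ'suppd : ∀ i, γ' i ≠ 0 → bF ε i ≤ d := fun i hi => hsupp i (hγ'supp i hi)
    have hmem' := ih γ' hγ'card hγ'ker hγ'suppd
    have : γ = γ' + c • vz k η := by
      rw [hγ']
      ring
    rw [this]
    exact Submodule.add_mem _ hmem' (Submodule.smul_mem _ c hηmem)

end PP
end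
noncomputable section
namespace PP
open MvPolynomial

variable {n m : ℕ} (ε : Fin m → Sym2 (Fin n)) (k : Type*) [Field k]

lemma prod_monomial_one {ι : Type*} [DecidableEq ι] (s : Finset ι) (f : ι → (Fin n →₀ ℕ)) :
    ∏ i ∈ s, (monomial (f i) (1:k)) = monomial (∑ i ∈ s, f i) 1 := by
  induction s using Finset.induction with
  | empty => simp
  | insert _ _ hx ih =>
    rw [Finset.prod_insert hx, Finset.sum_insert hx, ih, monomial_mul, mul_one]

lemma mon_eq (g : Fin n → ℕ) : PolarAlg.mon k g = monomial (toF g) (1:k) := by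
  rw [PolarAlg.mon, monomial_eq, C_1, one_mul, Finsupp.prod_fintype]
  · rfl
  · intro v; exact pow_zero _

lemma fmon_eq (i : Fin m) : PolarAlg.fmon k ε i = monomial (bF ε i) (1:k) := by
  rw [PolarAlg.fmon, mon_eq]
  rfl

/-- aeval of a T-monomial at the edge monomials -/
lemma aeval_fmon_monomial (e : Fin m →₀ ℕ) (c : k) :
    aeval (PolarAlg.fmon k ε) (monomial e c)
      = C c * monomial (Bn ε (fun i => e i)) (1:k) := by
  rw [aeval_monomial]
  have h1 : e.prod (fun i t => PolarAlg.fmon k ε i ^ t)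
      = monomial (Bn ε (fun i => e i)) (1:k) := by
    rw [Finsupp.prod_fintype]
    · have h2 : ∀ i, PolarAlg.fmon k ε i ^ e i = monomial (e i • bF ε i) (1:k) := by
        intro i
        rw [fmon_eq, monomial_pow, one_pow]
      rw [Finset.prod_congr rfl (fun i _ => h2 i), prod_monomial_one]
      rfl
    · intro i; exact pow_zero _
  rw [h1]
  rfl

lemma bF_le_Bn {α : Fin m → ℕ} {i : Fin m} (h : 1 ≤ α i) (v : Fin n) :
    bF ε i v ≤ Bn ε α v := by
  rw [Bn_apply]
  calc bF ε i v ≤ α i * bF ε i v := Nat.le_mul_of_pos_left _ h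
    _ ≤ _ := Finset.single_le_sum (f := fun j => α j * bF ε j v)
        (fun j _ => Nat.zero_le _) (Finset.mem_univ i)

lemma Bn_sub_single' {α δ' : Fin m → ℕ} {i : Fin m} (h : 1 ≤ α i)
    (hδi : δ' i = α i - 1) (hδj : ∀ j, j ≠ i → δ' j = α j) :
    Bn ε δ' = Bn ε α - bF ε i := by
  ext v
  rw [Finsupp.tsub_apply, Bn_apply, Bn_apply]
  have e1 := (Finset.add_sum_erase Finset.univ (fun j => δ' j * bF ε j v)
    (Finset.mem_univ i)).symm
  have e2 := (Finset.add_sum_erase Finset.univ (fun j => α j * bF ε j v)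
    (Finset.mem_univ i)).symm
  have e3 : ∑ j ∈ Finset.univ.erase i, δ' j * bF ε j v
      = ∑ j ∈ Finset.univ.erase i, α j * bF ε j v :=
    Finset.sum_congr rfl (fun j hj => by rw [hδj j (Finset.mem_erase.mp hj).1])
  rw [e1, e2, e3, hδi, Nat.sub_mul, one_mul]
  have h4 : bF ε i v ≤ α i * bF ε i v := Nat.le_mul_of_pos_left _ h
  omega

/-- the polar generator attached to a relation of multidegree ≤ d -/
lemma gen_polar (d : Fin n →₀ ℕ) (α β : Fin m → ℕ) (hBn : Bn ε α = Bn ε β)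
    (hle : Bn ε α ≤ d) :
    (fun i => monomial (d - bF ε i) ((α i : k) - (β i : k))) ∈
      Submodule.span (MvPolynomial (Fin n) k) (PolarAlg.polarSet k n ε) := by
  classical
  set αF : Fin m →₀ ℕ := Finsupp.equivFunOnFinite.symm α with hαF
  set βF : Fin m →₀ ℕ := Finsupp.equivFunOnFinite.symm β with hβF
  have hαapp : ∀ i, αF i = α i := fun i => rfl
  have hβapp : ∀ i, βF i = β i := fun i => rfl
  set F : MvPolynomial (Fin m) k := monomial αF 1 - monomial βF 1 with hF
  have hBα : Bn ε (fun i => αF i) = Bn ε α := rfl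
  have hBβ : Bn ε (fun i => βF i) = Bn ε β := rfl
  have hF0 : aeval (PolarAlg.fmon k ε) F = 0 := by
    rw [hF, map_sub, aeval_fmon_monomial, aeval_fmon_monomial, hBα, hBβ, hBn]
    ring
  have hpolar : (fun i => aeval (PolarAlg.fmon k ε) (pderiv i F)) ∈ PolarAlg.polarSet k n ε :=
    ⟨F, hF0, rfl⟩
  have hsmul := Submodule.smul_mem
    (Submodule.span (MvPolynomial (Fin n) k) (PolarAlg.polarSet k n ε))
    (monomial (d - Bn ε α) (1:k))
    (Submodule.subset_span hpolar)
  convert hsmul using 1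
  funext i
  simp only [Pi.smul_apply, smul_eq_mul]
  -- compute the i-th coordinate
  have hpd : pderiv i F = monomial (αF - Finsupp.single i 1) ((α i : k))
      - monomial (βF - Finsupp.single i 1) ((β i : k)) := by
    rw [hF, map_sub, pderiv_monomial, pderiv_monomial, one_mul, one_mul, hαapp, hβapp]
  have hterm : ∀ (γ : Fin m → ℕ) (γF : Fin m →₀ ℕ), γF = Finsupp.equivFunOnFinite.symm γ →
      Bn ε γ = Bn ε α →
      monomial (d - Bn ε α) (1:k) * aeval (PolarAlg.fmon k ε)
        (monomial (γF - Finsupp.single i 1) ((γ i : k)))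
      = monomial (d - bF ε i) ((γ i : k)) := by
    intro γ γF hγF hBγ
    rw [aeval_fmon_monomial]
    rcases Nat.eq_zero_or_pos (γ i) with h0 | h0
    · rw [h0]
      simp
    · have hsub : (Bn ε fun j => (γF - Finsupp.single i 1 : Fin m →₀ ℕ) j)
          = Bn ε γ - bF ε i := by
        apply Bn_sub_single' ε h0
        · rw [hγF, Finsupp.tsub_apply, Finsupp.single_apply, if_pos rfl]
          rfl
        · intro j hj
          rw [hγF, Finsupp.tsub_apply, Finsupp.single_apply, if_neg (Ne.symm hj)]
          rfl
      rw [hsub, hBγ]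
      have hexp : (d - Bn ε α) + (Bn ε α - bF ε i) = d - bF ε i := by
        ext v
        have h1 := hle v
        have h2 : bF ε i v ≤ Bn ε α v := by
          rw [← hBγ]
          exact bF_le_Bn ε h0 v
        simp only [Finsupp.add_apply, Finsupp.tsub_apply]
        omega
      calc monomial (d - Bn ε α) (1:k) * (C ((γ i:k)) * monomial (Bn ε α - bF ε i) 1)
          = C ((γ i : k)) * (monomial ((d - Bn ε α) + (Bn ε α - bF ε i)) ((1:k)*1)) := by
            rw [← monomial_mul]; ring
        _ = monomial (d - bF ε i) ((γ i : k)) := by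
            rw [hexp, mul_one, C_mul_monomial, mul_one]
  rw [hpd, map_sub (aeval (R := k) (PolarAlg.fmon k ε)), mul_sub, hterm α αF hαF rfl,
    hterm β βF hβF hBn.symm]
  exact map_sub (monomial (d - bF ε i)) _ _

/-- the candidate element of multidegree d attached to a coefficient pattern -/
def mdElt (d : Fin n →₀ ℕ) (γ : Fin m → k) : Fin m → MvPolynomial (Fin n) k :=
  fun i => monomial (d - bF ε i) (γ i)

lemma mdElt_mem (d : Fin n →₀ ℕ) (γ : Fin m → k) (h : γ ∈ Vd ε k d) :
    mdElt ε k d γ ∈ Submodule.span (MvPolynomial (Fin n) k) (PolarAlg.polarSet k n ε) := by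
  induction h using Submodule.span_induction with
  | mem x hx =>
    obtain ⟨α, β, hBn, hle, hxe⟩ := hx
    have : mdElt ε k d x = fun i => monomial (d - bF ε i) ((α i : k) - (β i : k)) := by
      funext i
      rw [mdElt, hxe]
    rw [this]
    exact gen_polar ε k d α β hBn hle
  | zero =>
    have : mdElt ε k d 0 = 0 := by
      funext i
      simp [mdElt]
    rw [this]
    exact Submodule.zero_mem _
  | add x y hx hy ihx ihy =>
    have : mdElt ε k d (x + y) = mdElt ε k d x + mdElt ε k d y := by
      funext i
      simp [mdElt, Pi.add_apply]
    rw [this]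
    exact Submodule.add_mem _ ihx ihy
  | smul c x hx ihx =>
    have heq : mdElt ε k d (c • x) = (C c : MvPolynomial (Fin n) k) • mdElt ε k d x := by
      funext i
      simp only [mdElt, Pi.smul_apply, smul_eq_mul, C_mul_monomial]
    rw [heq]
    exact Submodule.smul_mem _ (C c) ihx

end PP
end
noncomputable section
namespace PP
open MvPolynomial

variable {n m : ℕ} (ε : Fin m → Sym2 (Fin n)) (k : Type*) [Field k]

lemma wt_eq_degree (y : Fin n →₀ ℕ) : y.degree = wt y :=
  Finset.sum_subset (Finset.subset_univ _)
    (fun v _ hv => Finsupp.notMem_support_iff.mp hv)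

lemma wt_one_single {y : Fin n →₀ ℕ} (h : wt y = 1) : ∃ v, y = Finsupp.single v 1 := by
  obtain ⟨v, hv⟩ : ∃ v, y v ≠ 0 := by
    by_contra hc
    push_neg at hc
    rw [wt, Finset.sum_eq_zero (fun v _ => hc v)] at h
    omega
  have e := Finset.add_sum_erase Finset.univ (fun w => y w) (Finset.mem_univ v)
  rw [wt] at h
  have e2 : y v + ∑ w ∈ Finset.univ.erase v, y w = 1 := by rw [e]; exact h
  have hS : ∑ w ∈ Finset.univ.erase v, y w = 0 := by omega
  have hzero : ∀ w ∈ Finset.univ.erase v, y w = 0 :=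
    fun w hw => Finset.sum_eq_zero_iff.mp hS w hw
  refine ⟨v, ?_⟩
  ext w
  rw [Finsupp.single_apply]
  by_cases hw : v = w
  · subst hw
    rw [if_pos rfl]
    omega
  · rw [if_neg hw]
    exact hzero w (Finset.mem_erase.mpr ⟨Ne.symm hw, Finset.mem_univ w⟩)

open scoped Classical in
lemma conn_of_lin (hlin : PolarAlg.LinearlyPresented k n ε) : ConnP ε := by
  intro d i j hid hjd
  by_cases hij : i = j
  · subst hij
    exact Relation.ReflTransGen.refl
  set a : Fin m → MvPolynomial (Fin n) k :=
    fun p => if p = i then monomial (d - bF ε i) (1:k)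
      else if p = j then -(monomial (d - bF ε j) (1:k)) else 0 with ha
  have hai : a i = monomial (d - bF ε i) (1:k) := by rw [ha]; simp
  have haj : a j = -(monomial (d - bF ε j) (1:k)) := by
    rw [ha]; simp [Ne.symm hij]
  have ha0 : ∀ p, p ≠ i → p ≠ j → a p = 0 := by
    intro p h1 h2
    rw [ha]
    simp [h1, h2]
  have hsyz : a ∈ PolarAlg.SyzSet k n ε := by
    show ∑ p, a p * PolarAlg.fmon k ε p = 0
    have hsplit : ∑ p, a p * PolarAlg.fmon k ε p
        = a i * PolarAlg.fmon k ε i + a j * PolarAlg.fmon k ε j := by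
      rw [← Finset.sum_pair hij (f := fun p => a p * PolarAlg.fmon k ε p)]
      symm
      apply Finset.sum_subset (Finset.subset_univ ({i, j} : Finset (Fin m)))
      intro p _ hp
      simp only [Finset.mem_insert, Finset.mem_singleton] at hp
      push_neg at hp
      rw [ha0 p hp.1 hp.2, zero_mul]
    rw [hsplit, hai, haj, fmon_eq, fmon_eq, monomial_mul, mul_one,
      neg_mul, monomial_mul, mul_one]
    rw [tsub_add_cancel_of_le hid, tsub_add_cancel_of_le hjd]
    ring
  set A : Finset (Fin m) := Finset.univ.filter
    (fun p => Relation.ReflTransGen (HAdjP ε d) i p) with hA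
  have hiA : i ∈ A := by
    rw [hA, Finset.mem_filter]
    exact ⟨Finset.mem_univ i, Relation.ReflTransGen.refl⟩
  have hAle : ∀ p ∈ A, bF ε p ≤ d := by
    intro p hp
    rw [hA, Finset.mem_filter] at hp
    induction hp.2 with
    | refl => exact hid
    | tail hsteps hstep ih => exact le_trans le_sup_right hstep.2.1
  have hclosed : ∀ p q, p ∈ A → HAdjP ε d p q → q ∈ A := by
    intro p q hp hpq
    rw [hA, Finset.mem_filter] at hp ⊢
    exact ⟨Finset.mem_univ q, hp.2.tail hpq⟩
  set Φ : (Fin m → MvPolynomial (Fin n) k) → k :=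
    fun cvec => ∑ p ∈ A, coeff (d - bF ε p) (cvec p) with hΦ
  have hgen : ∀ b, b ∈ PolarAlg.SyzSet k n ε → (∀ q, b q = 0 ∨ (b q).IsHomogeneous 1) →
      ∀ P : MvPolynomial (Fin n) k, Φ (P • b) = 0 := by
    intro b hbsyz hbhom P
    have hmono : ∀ (μ : Fin n →₀ ℕ) (c : k), Φ ((monomial μ c) • b) = 0 := by
      intro μ c
      rw [hΦ]
      beta_reduce
      by_cases hμd : μ ≤ d
      · set e := d - μ with he
        have hed : e ≤ d := tsub_le_self
        have hterm : ∀ p ∈ A, coeff (d - bF ε p) ((monomial μ c) • b p)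
            = c * (if bF ε p ≤ e then coeff (e - bF ε p) (b p) else 0) := by
          intro p hp
          have hpd := hAle p hp
          show coeff (d - bF ε p) ((monomial μ c) * b p) = _
          rw [mul_comm, coeff_mul_monomial']
          by_cases hc : bF ε p ≤ e
          · have hμle : μ ≤ d - bF ε p := by
              intro v
              have h1 : bF ε p v ≤ (d - μ) v := by
                have := hc v
                rwa [he] at this
              have h2 := hμd v
              have h3 := hpd v
              rw [Finsupp.tsub_apply] at h1
              show μ v ≤ (d - bF ε p) v
              rw [Finsupp.tsub_apply]
              omega
            rw [if_pos hμle, if_pos hc]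
            have hee : d - bF ε p - μ = e - bF ε p := by
              ext v
              rw [he]
              simp only [Finsupp.tsub_apply]
              omega
            rw [hee]
            ring
          · have hμnle : ¬ μ ≤ d - bF ε p := by
              intro hcon
              apply hc
              intro v
              have h1 : μ v ≤ (d - bF ε p) v := hcon v
              have h2 := hpd v
              have h2' := hμd v
              rw [Finsupp.tsub_apply] at h1
              show bF ε p v ≤ e v
              rw [he, Finsupp.tsub_apply]
              omega
            rw [if_neg hμnle, if_neg hc, mul_zero]
        simp only [Pi.smul_apply]
        rw [Finset.sum_congr rfl hterm, ← Finset.mul_sum]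
        have hsyzcoeff : ∑ p, (if bF ε p ≤ e then coeff (e - bF ε p) (b p) else 0) = 0 := by
          have h0 : coeff e (∑ p, b p * PolarAlg.fmon k ε p) = 0 := by
            rw [show (∑ p, b p * PolarAlg.fmon k ε p) = 0 from hbsyz, coeff_zero]
          rw [coeff_sum] at h0
          have hterm2 : ∀ p ∈ Finset.univ, coeff e (b p * PolarAlg.fmon k ε p)
              = (if bF ε p ≤ e then coeff (e - bF ε p) (b p) else 0) := by
            intro p _
            rw [fmon_eq, coeff_mul_monomial']
            split_ifs
            · rw [mul_one]
            · rfl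
          rw [Finset.sum_congr rfl hterm2] at h0
          exact h0
        by_cases hex : ∃ p₀, p₀ ∈ A ∧ bF ε p₀ ≤ e ∧ coeff (e - bF ε p₀) (b p₀) ≠ 0
        · obtain ⟨p₀, hp₀A, hp₀e, hp₀c⟩ := hex
          have hwt3 : wt e = 3 := by
            have hb0 : (b p₀).IsHomogeneous 1 := by
              rcases hbhom p₀ with h | h
              · exfalso; apply hp₀c; rw [h, coeff_zero]
              · exact h
            have hdeg : (e - bF ε p₀).degree = 1 := by
              by_contra hd
              exact hp₀c (hb0.coeff_eq_zero hd)
            have hwt1 : wt (e - bF ε p₀) = 1 := by rw [← wt_eq_degree]; exact hdeg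
            have : wt e = wt (bF ε p₀) + wt (e - bF ε p₀) := by
              rw [wt, wt, wt, ← Finset.sum_add_distrib]
              apply Finset.sum_congr rfl
              intro v _
              have := hp₀e v
              simp only [Finsupp.tsub_apply]
              omega
            rw [this, wt_bF, hwt1]
          have hAll : ∑ p ∈ A, (if bF ε p ≤ e then coeff (e - bF ε p) (b p) else 0)
              = ∑ p, (if bF ε p ≤ e then coeff (e - bF ε p) (b p) else 0) := by
            apply Finset.sum_subset (Finset.subset_univ A)
            intro p _ hpA
            by_cases hc1 : bF ε p ≤ e
            · rw [if_pos hc1]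
              by_contra hc2
              apply hpA
              have hpne : p₀ ≠ p := by
                intro hpe
                rw [hpe] at hp₀A
                exact hpA hp₀A
              apply hclosed p₀ p hp₀A
              refine ⟨hpne, le_trans (sup_le hp₀e hc1) hed, ?_⟩
              calc wt (bF ε p₀ ⊔ bF ε p) ≤ wt e := wt_mono (sup_le hp₀e hc1)
                _ = 3 := hwt3
            · rw [if_neg hc1]
          rw [hAll, hsyzcoeff, mul_zero]
        · push_neg at hex
          have hz : ∑ p ∈ A, (if bF ε p ≤ e then coeff (e - bF ε p) (b p) else 0) = 0 := by
            apply Finset.sum_eq_zero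
            intro p hp
            by_cases hc1 : bF ε p ≤ e
            · rw [if_pos hc1]
              exact hex p hp hc1
            · rw [if_neg hc1]
          rw [hz, mul_zero]
      · apply Finset.sum_eq_zero
        intro p hp
        show coeff (d - bF ε p) ((monomial μ c) * b p) = 0
        rw [mul_comm, coeff_mul_monomial']
        rw [if_neg]
        intro hcon
        exact hμd (le_trans hcon tsub_le_self)
    -- general P by linearity
    have hΦsum : ∀ {ι : Type} (s : Finset ι) (f : ι → (Fin m → MvPolynomial (Fin n) k)),
        Φ (∑ x ∈ s, f x) = ∑ x ∈ s, Φ (f x) := by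
      intro ι s f
      rw [hΦ]
      beta_reduce
      have h1 : ∀ p, coeff (d - bF ε p) ((∑ x ∈ s, f x) p)
          = ∑ x ∈ s, coeff (d - bF ε p) (f x p) := by
        intro p
        rw [Finset.sum_apply, coeff_sum]
      rw [Finset.sum_congr rfl (fun p _ => h1 p)]
      exact Finset.sum_comm
    conv_lhs => rw [as_sum P]
    rw [Finset.sum_smul, hΦsum]
    apply Finset.sum_eq_zero
    intro μ _
    exact hmono μ (coeff μ P)
  have hQ : ∀ c, c ∈ Submodule.span (MvPolynomial (Fin n) k)
      {a ∈ PolarAlg.SyzSet k n ε | ∀ q, a q = 0 ∨ (a q).IsHomogeneous 1} →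
      ∀ P : MvPolynomial (Fin n) k, Φ (P • c) = 0 := by
    intro c hc
    induction hc using Submodule.span_induction with
    | mem x hx => exact hgen x hx.1 hx.2
    | zero =>
      intro P
      rw [smul_zero]
      rw [hΦ]
      beta_reduce
      apply Finset.sum_eq_zero
      intro p _
      simp
    | add x y hx hy ihx ihy =>
      intro P
      rw [smul_add]
      have h1 : Φ (P • x + P • y) = Φ (P • x) + Φ (P • y) := by
        rw [hΦ]
        beta_reduce
        rw [← Finset.sum_add_distrib]
        apply Finset.sum_congr rfl
        intro p _
        simp only [Pi.add_apply, coeff_add]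
      rw [h1, ihx P, ihy P, add_zero]
    | smul q x hx ihx =>
      intro P
      rw [smul_smul]
      exact ihx (P * q)
  have haspan : a ∈ Submodule.span (MvPolynomial (Fin n) k)
      {a ∈ PolarAlg.SyzSet k n ε | ∀ q, a q = 0 ∨ (a q).IsHomogeneous 1} := by
    have h2 : a ∈ (↑(Submodule.span (MvPolynomial (Fin n) k)
        {a ∈ PolarAlg.SyzSet k n ε | ∀ q, a q = 0 ∨ (a q).IsHomogeneous 1}) :
        Set (Fin m → MvPolynomial (Fin n) k)) := by
      rw [← hlin]
      exact hsyz
    exact h2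
  have hΦa := hQ a haspan 1
  rw [one_smul] at hΦa
  by_cases hjA : j ∈ A
  · rw [hA, Finset.mem_filter] at hjA
    exact hjA.2
  · exfalso
    have hcomp : Φ a = 1 := by
      rw [hΦ]
      beta_reduce
      rw [← Finset.add_sum_erase A _ hiA]
      have h1 : coeff (d - bF ε i) (a i) = 1 := by
        rw [hai, coeff_monomial, if_pos rfl]
      rw [h1]
      have h3 : ∑ p ∈ A.erase i, coeff (d - bF ε p) (a p) = 0 := by
        apply Finset.sum_eq_zero
        intro p hp
        have hpi : p ≠ i := (Finset.mem_erase.mp hp).1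
        have hpj : p ≠ j := by
          intro h
          apply hjA
          rw [← h]
          exact (Finset.mem_erase.mp hp).2
        rw [ha0 p hpi hpj, coeff_zero]
      rw [h3, add_zero]
    rw [hcomp] at hΦa
    exact one_ne_zero hΦa

end PP
end
noncomputable section
namespace PP
open MvPolynomial

variable {n m : ℕ} (ε : Fin m → Sym2 (Fin n)) (k : Type*) [Field k] [CharZero k]

open scoped Classical in
theorem main (hinj : Function.Injective ε) (hlin : PolarAlg.LinearlyPresented k n ε) :
    PolarAlg.Polarizable k n ε := by
  intro a ha
  have hconn : ConnP ε := conn_of_lin ε k hlin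
  set 𝒟 : Finset (Fin n →₀ ℕ) :=
    Finset.univ.biUnion (fun i : Fin m => (a i).support.image (· + bF ε i)) with h𝒟
  set γd : (Fin n →₀ ℕ) → Fin m → k :=
    fun e i => if bF ε i ≤ e then coeff (e - bF ε i) (a i) else 0 with hγd
  have hγdval : ∀ e i, γd e i = if bF ε i ≤ e then coeff (e - bF ε i) (a i) else 0 :=
    fun e i => rfl
  have hsupp : ∀ (e : Fin n →₀ ℕ) (i : Fin m), γd e i ≠ 0 → bF ε i ≤ e := by
    intro e i h
    by_contra hc
    apply h
    rw [hγdval, if_neg hc]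
  have hker : ∀ (e : Fin n →₀ ℕ) (v : Fin n), ∑ i, γd e i * (bF ε i v : k) = 0 := by
    intro e v
    by_cases hev : 1 ≤ e v
    · have h0 := ha v
      have h1 : coeff (e - Finsupp.single v 1)
          (∑ i, a i * pderiv v (PolarAlg.fmon k ε i)) = 0 := by
        rw [h0, coeff_zero]
      rw [coeff_sum] at h1
      have h2 : ∀ i ∈ Finset.univ, coeff (e - Finsupp.single v 1)
          (a i * pderiv v (PolarAlg.fmon k ε i)) = γd e i * (bF ε i v : k) := by
        intro i _
        rw [fmon_eq, pderiv_monomial, one_mul, coeff_mul_monomial']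
        by_cases hbv : 1 ≤ bF ε i v
        · by_cases hbe : bF ε i ≤ e
          · have hcond : bF ε i - Finsupp.single v 1 ≤ e - Finsupp.single v 1 := by
              intro w
              have := hbe w
              simp only [Finsupp.tsub_apply, Finsupp.single_apply]
              omega
            rw [if_pos hcond]
            have hexp : e - Finsupp.single v 1 - (bF ε i - Finsupp.single v 1)
                = e - bF ε i := by
              ext w
              simp only [Finsupp.tsub_apply, Finsupp.single_apply]
              by_cases hw : v = w
              · subst hw
                simp
                omega
              · rw [if_neg hw]
                omega
            rw [hexp, hγdval, if_pos hbe]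
          · have hncond : ¬ (bF ε i - Finsupp.single v 1 ≤ e - Finsupp.single v 1) := by
              intro hcon
              apply hbe
              intro w
              have h3 := hcon w
              simp only [Finsupp.tsub_apply, Finsupp.single_apply] at h3
              by_cases hw : v = w
              · subst hw
                simp at h3
                omega
              · rw [if_neg hw] at h3
                omega
            rw [if_neg hncond, hγdval, if_neg hbe, zero_mul]
        · have hb0 : bF ε i v = 0 := by omega
          rw [hb0]
          split_ifs <;> simp
      rw [Finset.sum_congr rfl h2] at h1
      exact h1
    · apply Finset.sum_eq_zero
      intro i _
      by_cases h : γd e i = 0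
      · rw [h, zero_mul]
      · have hle := hsupp e i h
        have hb0 : bF ε i v = 0 := by
          have := hle v
          omega
        rw [hb0]
        simp
  have hdecomp : a = ∑ e ∈ 𝒟, mdElt ε k e (γd e) := by
    funext i
    rw [Finset.sum_apply]
    have hterm : ∀ e, mdElt ε k e (γd e) i = monomial (e - bF ε i) (γd e i) :=
      fun e => rfl
    rw [Finset.sum_congr rfl (fun e _ => hterm e)]
    have himage : (a i).support.image (· + bF ε i) ⊆ 𝒟 := by
      rw [h𝒟]
      intro e he
      exact Finset.mem_biUnion.mpr ⟨i, Finset.mem_univ i, he⟩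
    rw [← Finset.sum_subset himage]
    · rw [Finset.sum_image (fun x _ y _ h => add_right_cancel h)]
      have hterm2 : ∀ μ ∈ (a i).support,
          monomial ((μ + bF ε i) - bF ε i) (γd (μ + bF ε i) i)
            = monomial μ (coeff μ (a i)) := by
        intro μ hμ
        have hle : bF ε i ≤ μ + bF ε i := le_add_self
        have hsub : (μ + bF ε i) - bF ε i = μ := by
          ext w
          simp only [Finsupp.add_apply, Finsupp.tsub_apply]
          omega
        rw [hγdval, if_pos hle, hsub]
      rw [Finset.sum_congr rfl hterm2]
      exact as_sum (a i)
    · intro e he hne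
      by_cases hbe : bF ε i ≤ e
      · by_cases hc : coeff (e - bF ε i) (a i) = 0
        · rw [hγdval, if_pos hbe, hc]
          simp
        · exfalso
          apply hne
          apply Finset.mem_image.mpr
          refine ⟨e - bF ε i, ?_, ?_⟩
          · exact mem_support_iff.mpr hc
          · show (e - bF ε i) + bF ε i = e
            exact tsub_add_cancel_of_le hbe
      · rw [hγdval, if_neg hbe]
        simp
  rw [hdecomp]
  apply Submodule.sum_mem
  intro e _
  apply mdElt_mem
  exact core ε hinj hconn k e (Finset.univ.filter (fun i => γd e i ≠ 0)).card (γd e)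
    le_rfl (hker e) (hsupp e)

end PP
end
open PolarAlg in
/-- Proposition 5.13: if the ideal `I = (f)` generated by a cohesive set `f` of distinct
degree-2 monomials is linearly presented, then `f` is polarizable. -/
theorem linearly_presented_implies_polarizable (k : Type*) [Field k] [CharZero k]
    {n m : ℕ} (ε : Fin m → Sym2 (Fin n)) (hinj : Function.Injective ε)
    (hcoh : ∀ u v : Fin n,
      Relation.ReflTransGen (fun a b => ∃ i, ε i = s(a, b)) u v)
    (hlin : LinearlyPresented k n ε) :
    Polarizable k n ε :=
  PP.main ε k hinj hlin
end
end
end
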